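/- arXiv:1108.4725 — 14 statements merged into one kernel-verified Lean document; each statement's English description precedes it below -/
import Mathlib

section
/- Let a, b be positive integers. Then Δ(a, b + r_a) − Δ(a, b) = Σ_{j=0}^{p^m − a} f_{a,j} · S_1(a + b + j + i_j·p^m) holds in F_q(t), where the coefficients f_{a,j} = (−1)^j·C(p^m − a, j) are understood via the canonical map ℤ → F_q(t). -/
open Finset

/-- `S1 F k = ∑_{θ ∈ F} 1/(t−θ)^k`, the sum of `1/n^k` over monic degree-one `n ∈ F[t]`. -/
noncomputable def S1 (F : Type*) [Field F] [Fintype F] (k : ℕ) : RatFunc F :=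
  ∑ θ : F, 1 / (RatFunc.X - RatFunc.C θ) ^ k

/-- `Δ(a,b) = S1(a)·S1(b) − S1(a+b)`. -/
noncomputable def Delta (F : Type*) [Field F] [Fintype F] (a b : ℕ) : RatFunc F :=
  S1 F a * S1 F b - S1 F (a + b)


lemma parity_neg_one_pow {K : Type*} [Monoid K] [HasDistribNeg K] {a b : ℕ}
    (h : a % 2 = b % 2) : (-1 : K) ^ a = (-1 : K) ^ b := by
  rcases Nat.even_or_odd a with h' | h'
  · have hb : Even b := by rw [Nat.even_iff] at *; omega
    rw [h'.neg_one_pow, hb.neg_one_pow]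
  · have hb : Odd b := by rw [Nat.odd_iff] at *; omega
    rw [h'.neg_one_pow, hb.neg_one_pow]

lemma telescope {F : Type*} [Field F] [Fintype F] {K : Type*} [Field K] (ι : F →+* K)
    (y : K) (γ : Fˣ) :
    (y + ι γ) * ∑ k ∈ range (Fintype.card F - 1),
        (-(ι γ)) ^ (Fintype.card F - 2 - k) * y ^ k
      = y ^ (Fintype.card F - 1) - 1 := by
  set q := Fintype.card F with hq
  have hq2 : 2 ≤ q := Fintype.one_lt_card
  have hne : (-(γ : F)) ≠ 0 := neg_ne_zero.mpr (Units.ne_zero γ)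
  have hpow : (-(ι γ) : K) ^ (q - 1) = 1 := by
    rw [← map_neg, ← map_pow, FiniteField.pow_card_sub_one_eq_one _ hne, map_one]
  rw [Finset.mul_sum]
  calc
    ∑ k ∈ range (q - 1), (y + ι γ) * ((-(ι γ)) ^ (q - 2 - k) * y ^ k)
        = ∑ k ∈ range (q - 1),
            ((fun k => (-(ι γ)) ^ (q - 1 - k) * y ^ k) (k + 1)
              - (fun k => (-(ι γ)) ^ (q - 1 - k) * y ^ k) k) := by
          refine Finset.sum_congr rfl fun k hk => ?_
          have hk' : k < q - 1 := mem_range.mp hk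
          simp only
          rw [show q - 1 - (k + 1) = q - 2 - k from by omega,
            show q - 1 - k = (q - 2 - k) + 1 from by omega, pow_succ, pow_succ]
          ring
    _ = (-(ι γ)) ^ (q - 1 - (q - 1)) * y ^ (q - 1)
          - (-(ι γ)) ^ (q - 1 - 0) * y ^ 0 :=
        Finset.sum_range_sub (fun k => (-(ι γ)) ^ (q - 1 - k) * y ^ k) (q - 1)
    _ = y ^ (q - 1) - 1 := by
        rw [Nat.sub_self, Nat.sub_zero, pow_zero, pow_zero, hpow]; ring

lemma key (p s q : ℕ) (hp : p.Prime) (hs : 1 ≤ s) (hq : q = p ^ s)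
    {F : Type*} [Field F] [Fintype F] [DecidableEq F] (hF : Fintype.card F = q)
    {K : Type*} [Field K] [CharP K p] (ι : F →+* K)
    (y : K) (hy : ∀ c : F, y + ι c ≠ 0)
    (a m : ℕ) (hm : a ≤ p ^ m)
    (i : ℕ → ℕ) (hi : ∀ j ≤ p ^ m - a, i j < q - 1 ∧ (q - 1) ∣ (j + i j * p ^ m)) :
    ∑ γ : Fˣ, (1 - y ^ ((q - 1) * p ^ m)) / (y + ι γ) ^ a
      = ∑ j ∈ range (p ^ m - a + 1),
          (((-1) ^ j * ((p ^ m - a).choose j : ℤ) : ℤ) : K)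
            * (y ^ ((q - 1) * p ^ m) / y ^ (a + (j + i j * p ^ m))) := by
  classical
  haveI : Fact p.Prime := ⟨hp⟩
  have hq2 : 2 ≤ q := hF ▸ Fintype.one_lt_card
  have hy0 : y ≠ 0 := by simpa using hy 0
  have hp2 : 2 ≤ p := hp.two_le
  set P := p ^ m with hP
  set e := p ^ m - a with he
  have hae : a + e = P := by
    have : 0 < P := by positivity
    omega
  -- coprimality
  have hpq : p ∣ q := hq ▸ dvd_pow_self p (by omega : s ≠ 0)
  have hnd : ¬ p ∣ (q - 1) := by
    intro h
    have := Nat.dvd_sub hpq h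
    rw [show q - (q - 1) = 1 from by omega] at this
    exact Nat.Prime.one_lt hp |>.ne' (Nat.dvd_one.mp this)
  have cop : Nat.Coprime (q - 1) P :=
    (Nat.Coprime.pow_right m ((hp.coprime_iff_not_dvd.mpr hnd).symm))
  have uniq : ∀ {j i1 i2 : ℕ}, i1 < q - 1 → i2 < q - 1 →
      (q - 1) ∣ (j + i1 * P) → (q - 1) ∣ (j + i2 * P) → i1 = i2 := by
    have main : ∀ {j i1 i2 : ℕ}, i1 ≤ i2 → i2 < q - 1 →
        (q - 1) ∣ (j + i1 * P) → (q - 1) ∣ (j + i2 * P) → i2 - i1 = 0 := by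
      intro j i1 i2 hle h2 d1 d2
      have hd : (q - 1) ∣ (i2 - i1) * P := by
        have h := Nat.dvd_sub d2 d1
        have heq : (j + i2 * P) - (j + i1 * P) = (i2 - i1) * P := by
          have := Nat.sub_mul i2 i1 P
          have hle' : i1 * P ≤ i2 * P := Nat.mul_le_mul_right P hle
          omega
        rwa [heq] at h
      have := cop.dvd_of_dvd_mul_right hd
      exact Nat.eq_zero_of_dvd_of_lt this (by omega) |>.symm ▸ rfl
    intro j i1 i2 h1 h2 d1 d2
    rcases le_total i1 i2 with h | h
    · have := main h h2 d1 d2; omega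
    · have := main h h1 d2 d1; omega
  -- power sum over units
  have hsum : ∀ N : ℕ, ∑ γ : Fˣ, (ι γ) ^ N = if (q - 1) ∣ N then (-1 : K) else 0 := by
    intro N
    have h1 : ∑ γ : Fˣ, (ι γ) ^ N = ι (∑ γ : Fˣ, ((γ : F)) ^ N) := by
      rw [map_sum]
      exact Finset.sum_congr rfl fun γ _ => (map_pow ι _ _).symm
    rw [h1, FiniteField.sum_pow_units, hF]
    split_ifs <;> simp
  -- step 1 + step 2 : per-γ expansion
  have step12 : ∀ γ : Fˣ, (1 - y ^ ((q - 1) * P)) / (y + ι γ) ^ a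
      = - ∑ j ∈ range (e + 1), ∑ k ∈ range (q - 1),
          (ι γ) ^ (j + (q - 2 - k) * P)
            * ((e.choose j : K) * ((-1 : K) ^ ((q - 2 - k) * P) * y ^ ((e - j) + k * P))) := by
    intro γ
    have hxy : y + ι γ ≠ 0 := hy γ
    have hT := telescope ι y γ
    rw [hF] at hT
    have hfr : (y ^ (q - 1) - 1) ^ P = y ^ ((q - 1) * P) - 1 := by
      rw [hP, sub_pow_char_pow, one_pow, ← pow_mul]
    have h1 : 1 - y ^ ((q - 1) * P)
        = -((y + ι γ) ^ P
            * (∑ k ∈ range (q - 1), (-(ι γ)) ^ (q - 2 - k) * y ^ k) ^ P) := by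
      rw [← mul_pow, hT, hfr]; ring
    have h2 : (y + ι γ) ^ e
          * (∑ k ∈ range (q - 1), (-(ι γ)) ^ (q - 2 - k) * y ^ k) ^ P
        = ∑ j ∈ range (e + 1), ∑ k ∈ range (q - 1),
          (ι γ) ^ (j + (q - 2 - k) * P)
            * ((e.choose j : K) * ((-1 : K) ^ ((q - 2 - k) * P) * y ^ ((e - j) + k * P))) := by
      rw [hP, sum_pow_char_pow, add_comm y (ι γ), add_pow, Finset.sum_mul_sum]
      refine Finset.sum_congr rfl fun j hj => Finset.sum_congr rfl fun k hk => ?_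
      have hje : j ≤ e := by simpa using Nat.lt_succ_iff.mp (mem_range.mp hj)
      rw [mul_pow, ← pow_mul, ← pow_mul, neg_pow, pow_add]
      ring
    rw [h1, ← h2, div_eq_iff (pow_ne_zero a hxy), ← hae, pow_add]
    ring
  -- main computation
  calc
    ∑ γ : Fˣ, (1 - y ^ ((q - 1) * P)) / (y + ι γ) ^ a
        = - ∑ j ∈ range (e + 1), ∑ k ∈ range (q - 1),
            (if (q - 1) ∣ (j + (q - 2 - k) * P) then (-1 : K) else 0)
              * ((e.choose j : K) * ((-1 : K) ^ ((q - 2 - k) * P) * y ^ ((e - j) + k * P))) := by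
      rw [Finset.sum_congr rfl fun γ _ => step12 γ, Finset.sum_neg_distrib]
      congr 1
      rw [Finset.sum_comm]
      refine Finset.sum_congr rfl fun j _ => ?_
      rw [Finset.sum_comm]
      refine Finset.sum_congr rfl fun k _ => ?_
      rw [← Finset.sum_mul, hsum]
    _ = ∑ j ∈ range (e + 1),
          (((-1) ^ j * ((p ^ m - a).choose j : ℤ) : ℤ) : K)
            * (y ^ ((q - 1) * P) / y ^ (a + (j + i j * P))) := by
      rw [← Finset.sum_neg_distrib]
      refine Finset.sum_congr rfl fun j hj => ?_
      have hje : j ≤ e := Nat.lt_succ_iff.mp (mem_range.mp hj)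
      obtain ⟨hij_lt, hij_dvd⟩ := hi j hje
      have hij2 : i j ≤ q - 2 := by omega
      set k0 := q - 2 - i j with hk0
      have hk0mem : k0 ∈ range (q - 1) := mem_range.mpr (by omega)
      have hcond : q - 2 - k0 = i j := by omega
      have hinner : ∑ k ∈ range (q - 1),
          (if (q - 1) ∣ (j + (q - 2 - k) * P) then (-1 : K) else 0)
            * ((e.choose j : K) * ((-1 : K) ^ ((q - 2 - k) * P) * y ^ ((e - j) + k * P)))
          = (-1 : K) * ((e.choose j : K)
              * ((-1 : K) ^ ((q - 2 - k0) * P) * y ^ ((e - j) + k0 * P))) := by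
        rw [Finset.sum_eq_single_of_mem k0 hk0mem (fun k hk hne => ?_)]
        · rw [hcond, if_pos (hcond ▸ hij_dvd)]
        · have hk' : k < q - 1 := mem_range.mp hk
          rw [if_neg, zero_mul]
          intro hdvd
          have : q - 2 - k = i j := uniq (by omega) hij_lt hdvd hij_dvd
          omega
      have hE : y ^ ((e - j) + k0 * P) = y ^ ((q - 1) * P) / y ^ (a + (j + i j * P)) := by
        rw [eq_div_iff (pow_ne_zero _ hy0), ← pow_add]
        congr 1
        have hA : k0 * P + (i j) * P = (q - 2) * P := by
          rw [← Nat.add_mul]; congr 1; omega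
        have hB : (q - 2) * P + P = (q - 1) * P := by
          rw [← Nat.succ_mul]; congr 1; omega
        omega
      have hsign : ((-1 : K)) ^ (i j * P) = (-1 : K) ^ j := by
        by_cases hp2' : p = 2
        · have hneg : (-1 : K) = 1 := by
            have h2 : ((p : ℕ) : K) = 0 := CharP.cast_eq_zero K p
            rw [hp2'] at h2
            push_cast at h2
            linear_combination -h2
          rw [hneg, one_pow, one_pow]
        · apply parity_neg_one_pow
          have hpodd : Odd p := hp.odd_of_ne_two hp2'
          have hPodd : Odd P := hpodd.pow
          have hqodd : Odd q := hq ▸ hpodd.pow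
          have h2q : 2 ∣ q - 1 := by
            rcases hqodd with ⟨c, hc⟩; omega
          have h2d : 2 ∣ j + i j * P := h2q.trans hij_dvd
          have hmod : (i j * P) % 2 = (i j) % 2 := by
            rcases hPodd with ⟨c, hc⟩
            rw [hc, Nat.mul_mod, Nat.add_mod (2*c) 1]
            simp [Nat.mul_mod_right]
          omega
      rw [hinner, hcond, hsign, hE]
      push_cast
      ring

-- reindexing: sum over F = value at θ' + sum over units γ of g (θ' - γ)
lemma reindex {F : Type*} [Field F] [Fintype F] [DecidableEq F] {M : Type*} [AddCommMonoid M]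
    (θ' : F) (g : F → M) : ∑ θ : F, g θ = g θ' + ∑ γ : Fˣ, g (θ' - γ) := by
  rw [← Finset.add_sum_erase _ _ (mem_univ θ')]
  congr 1
  refine (Finset.sum_bij' (fun (γ : Fˣ) (_ : γ ∈ univ) => θ' - (γ : F))
    (fun θ (hθ : θ ∈ univ.erase θ') => Units.mk0 (θ' - θ)
      (sub_ne_zero.mpr (Ne.symm (Finset.ne_of_mem_erase hθ))))
    (fun γ _ => ?_) (fun θ hθ => mem_univ _) (fun γ _ => ?_) (fun θ hθ => ?_)
    (fun γ _ => rfl)).symm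
  · exact Finset.mem_erase.mpr ⟨by simp [sub_eq_self, Units.ne_zero γ], mem_univ _⟩
  · ext; simp
  · simp

lemma keyA (p s q : ℕ) (hp : p.Prime) (hs : 1 ≤ s) (hq : q = p ^ s)
    {F : Type*} [Field F] [Fintype F] [DecidableEq F] (hF : Fintype.card F = q)
    {K : Type*} [Field K] [CharP K p] (ι : F →+* K)
    (y : K) (hy : ∀ c : F, y + ι c ≠ 0)
    (a b m : ℕ) (hm : a ≤ p ^ m)
    (i : ℕ → ℕ) (hi : ∀ j ≤ p ^ m - a, i j < q - 1 ∧ (q - 1) ∣ (j + i j * p ^ m)) :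
    ∑ γ : Fˣ, (1 / (y + ι γ) ^ a) * (1 / y ^ (b + (q - 1) * p ^ m) - 1 / y ^ b)
      = ∑ j ∈ range (p ^ m - a + 1),
          (((-1) ^ j * ((p ^ m - a).choose j : ℤ) : ℤ) : K)
            * (1 / y ^ (a + b + (j + i j * p ^ m))) := by
  have hy0 : y ≠ 0 := by simpa using hy 0
  have h := key p s q hp hs hq hF ι y hy a m hm i hi
  have h2 := congrArg (· * (y ^ (b + (q - 1) * p ^ m))⁻¹) h
  simp only [Finset.sum_mul] at h2
  calc
    ∑ γ : Fˣ, (1 / (y + ι γ) ^ a) * (1 / y ^ (b + (q - 1) * p ^ m) - 1 / y ^ b)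
        = ∑ γ : Fˣ, ((1 - y ^ ((q - 1) * p ^ m)) / (y + ι γ) ^ a)
            * (y ^ (b + (q - 1) * p ^ m))⁻¹ := by
          refine Finset.sum_congr rfl fun γ _ => ?_
          have hxy := hy γ
          field_simp
          ring
    _ = ∑ j ∈ range (p ^ m - a + 1),
          ((((-1) ^ j * ((p ^ m - a).choose j : ℤ) : ℤ) : K)
            * (y ^ ((q - 1) * p ^ m) / y ^ (a + (j + i j * p ^ m))))
            * (y ^ (b + (q - 1) * p ^ m))⁻¹ := h2
    _ = ∑ j ∈ range (p ^ m - a + 1),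
          (((-1) ^ j * ((p ^ m - a).choose j : ℤ) : ℤ) : K)
            * (1 / y ^ (a + b + (j + i j * p ^ m))) := by
          refine Finset.sum_congr rfl fun j _ => ?_
          field_simp
          ring


theorem stmt0 (p s q : ℕ) (hp : p.Prime) (hs : 1 ≤ s) (hq : q = p ^ s)
    (F : Type*) [Field F] [Fintype F] (hF : Fintype.card F = q)
    (a b : ℕ) (ha : 0 < a) (hb : 0 < b)
    (m : ℕ) (hm : a ≤ p ^ m) (hmmin : ∀ k, a ≤ p ^ k → m ≤ k)
    (i : ℕ → ℕ) (hi : ∀ j ≤ p ^ m - a, i j < q - 1 ∧ (q - 1) ∣ (j + i j * p ^ m)) :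
    Delta F a (b + (q - 1) * p ^ m) - Delta F a b =
      ∑ j ∈ Finset.range (p ^ m - a + 1),
        (((-1) ^ j * ((p ^ m - a).choose j : ℤ) : ℤ) : RatFunc F) *
          S1 F (a + b + (j + i j * p ^ m)) := by
  classical
  haveI : Fact p.Prime := ⟨hp⟩
  -- characteristic
  obtain ⟨n, hcprime, hn2⟩ := FiniteField.card F (ringChar F)
  have hcp : ringChar F = p := by
    have h1 : ringChar F ∣ p ^ s := by
      rw [← hq, ← hF, hn2]
      exact dvd_pow_self _ (by exact_mod_cast n.pos.ne')
    exact (Nat.prime_dvd_prime_iff_eq hcprime hp).mp (hcprime.dvd_of_dvd_pow h1)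
  haveI hFp : CharP F p := by rw [← hcp]; infer_instance
  haveI : CharP (RatFunc F) p :=
    charP_of_injective_ringHom (RatFunc.C (K := F)).injective p
  -- nonvanishing
  have hyne : ∀ (θ' : F) (c : F),
      (RatFunc.X - RatFunc.C θ') + RatFunc.C c ≠ 0 := by
    intro θ' c
    have hpoly : Polynomial.X - Polynomial.C θ' + Polynomial.C c ≠ 0 := by
      have h3 : Polynomial.X - Polynomial.C θ' + Polynomial.C c
          = Polynomial.X - Polynomial.C (θ' - c) := by rw [Polynomial.C_sub]; ring
      rw [h3]; exact Polynomial.X_sub_C_ne_zero _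
    rw [← RatFunc.algebraMap_X, ← RatFunc.algebraMap_C θ', ← RatFunc.algebraMap_C c,
      ← map_sub, ← map_add]
    exact RatFunc.algebraMap_ne_zero hpoly
  set r := (q - 1) * p ^ m with hr
  -- per-θ' identity
  have key' : ∀ θ' : F,
      S1 F a * (1 / (RatFunc.X - RatFunc.C θ') ^ (b + r)
          - 1 / (RatFunc.X - RatFunc.C θ') ^ b)
        - 1 / (RatFunc.X - RatFunc.C θ') ^ (a + (b + r))
        + 1 / (RatFunc.X - RatFunc.C θ') ^ (a + b)
      = ∑ j ∈ range (p ^ m - a + 1),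
          (((-1) ^ j * ((p ^ m - a).choose j : ℤ) : ℤ) : RatFunc F)
            * (1 / (RatFunc.X - RatFunc.C θ') ^ (a + b + (j + i j * p ^ m))) := by
    intro θ'
    have hy := hyne θ'
    have hy0 : (RatFunc.X - RatFunc.C θ') ≠ 0 := by simpa using hy 0
    have hA := keyA p s q hp hs hq hF RatFunc.C (RatFunc.X - RatFunc.C θ') hy a b m hm i hi
    rw [← hA, S1, reindex θ' (fun θ => (1 : RatFunc F) / (RatFunc.X - RatFunc.C θ) ^ a)]
    have hagree : ∀ γ : Fˣ, (1 : RatFunc F) / (RatFunc.X - RatFunc.C (θ' - (γ : F))) ^ a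
        = 1 / ((RatFunc.X - RatFunc.C θ') + RatFunc.C (γ : F)) ^ a := by
      intro γ; congr 2; rw [map_sub]; ring
    rw [Finset.sum_congr rfl (fun (γ : Fˣ) _ => hagree γ), add_mul, Finset.sum_mul]
    have hz : (1 / (RatFunc.X - RatFunc.C θ') ^ a)
          * (1 / (RatFunc.X - RatFunc.C θ') ^ (b + r) - 1 / (RatFunc.X - RatFunc.C θ') ^ b)
        - 1 / (RatFunc.X - RatFunc.C θ') ^ (a + (b + r))
        + 1 / (RatFunc.X - RatFunc.C θ') ^ (a + b) = 0 := by
      rw [pow_add (RatFunc.X - RatFunc.C θ') a (b + r),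
        pow_add (RatFunc.X - RatFunc.C θ') a b,
        ← one_div_mul_one_div, ← one_div_mul_one_div]
      ring
    linear_combination hz
  -- assemble
  have expand : Delta F a (b + r) - Delta F a b
      = ∑ θ' : F, (S1 F a * (1 / (RatFunc.X - RatFunc.C θ') ^ (b + r)
          - 1 / (RatFunc.X - RatFunc.C θ') ^ b)
        - 1 / (RatFunc.X - RatFunc.C θ') ^ (a + (b + r))
        + 1 / (RatFunc.X - RatFunc.C θ') ^ (a + b)) := by
    simp only [Delta, mul_sub, Finset.sum_sub_distrib, Finset.sum_add_distrib,
      ← Finset.mul_sum]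
    simp only [S1]
    ring
  rw [expand, Finset.sum_congr rfl (fun θ' _ => key' θ'), Finset.sum_comm]
  refine Finset.sum_congr rfl fun j _ => ?_
  rw [S1, Finset.mul_sum]
end

section
/- Let a be a positive integer with a ≤ p^m, where m is the smallest nonnegative integer with a ≤ p^m. Then the number of integers j with 0 ≤ j ≤ p^m − a such that the binomial coefficient C(p^m − a, j) is not divisible by p equals t_a = ∏_{k=0}^{p−2} (p−k)^{μ_k}, where μ_k is the number of indices l ∈ {0, …, m−1} such that the l-th digit of the base-p expansion of a−1 (padded with zeros to m digits) equals k. -/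
open Finset

private lemma myA {p d e : ℕ} (hp : p.Prime) (hd : d < p) : p ∣ d.choose e ↔ d < e := by
  constructor
  · intro h
    by_contra hlt
    push_neg at hlt
    have h1 : d.choose e * (e.factorial * (d - e).factorial) = d.factorial := by
      rw [← Nat.choose_mul_factorial_mul_factorial hlt, mul_assoc]
    have h2 : p ∣ d.factorial := h1 ▸ h.mul_right _
    rw [hp.dvd_factorial] at h2
    omega
  · intro h
    simp [Nat.choose_eq_zero_of_lt h]

private lemma myB {p n j : ℕ} (hp : p.Prime) :
    p ∣ n.choose j ↔ p ∣ (n % p).choose (j % p) ∨ p ∣ (n / p).choose (j / p) := by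
  haveI : Fact p.Prime := ⟨hp⟩
  have h := Choose.choose_modEq_choose_mod_mul_choose_div_nat (p := p) (n := n) (k := j)
  rw [Nat.ModEq] at h
  rw [Nat.dvd_iff_mod_eq_zero, h, ← Nat.dvd_iff_mod_eq_zero, hp.dvd_mul]

private lemma myCount {p : ℕ} (hp : p.Prime) : ∀ m n, n < p ^ m →
    ((Finset.range (n + 1)).filter fun j => ¬ p ∣ n.choose j).card =
      ∏ i ∈ Finset.range m, (n / p ^ i % p + 1) := by
  intro m
  induction m with
  | zero =>
    intro n hn
    rw [pow_zero] at hn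
    interval_cases n
    simp only [Finset.prod_range_zero]
    rw [Finset.filter_true_of_mem, Finset.card_range]
    · rfl
    · intro j hj
      simp only [Finset.mem_range] at hj
      interval_cases j
      simp [Nat.dvd_one, hp.ne_one]
  | succ m ih =>
    intro n hn
    have hp1 : 1 < p := hp.one_lt
    have hp0 : 0 < p := hp.pos
    have key : ((Finset.range (n + 1)).filter fun j => ¬ p ∣ n.choose j) =
        ((Finset.range (n % p + 1) ×ˢ
          ((Finset.range (n / p + 1)).filter fun q => ¬ p ∣ (n / p).choose q)).image
          fun rq => rq.1 + p * rq.2) := by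
      ext j
      simp only [mem_filter, mem_range, mem_image, mem_product]
      constructor
      · rintro ⟨hj, hdvd⟩
        rw [myB hp, not_or] at hdvd
        obtain ⟨h1, h2⟩ := hdvd
        have hle1 : j % p ≤ n % p := by
          by_contra hc
          push_neg at hc
          exact h1 ((myA hp (Nat.mod_lt _ hp0)).mpr hc)
        have hle2 : j / p ≤ n / p := by
          by_contra hc
          push_neg at hc
          exact h2 (by simp [Nat.choose_eq_zero_of_lt hc])
        exact ⟨(j % p, j / p), ⟨by omega, by omega, h2⟩, Nat.mod_add_div j p⟩
      · rintro ⟨⟨r, q⟩, ⟨hr, hq, hdq⟩, rfl⟩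
        dsimp only
        have hrp : r < p := lt_of_lt_of_le hr (Nat.mod_lt _ hp0)
        have hmod : (r + p * q) % p = r := by
          rw [Nat.add_mul_mod_self_left, Nat.mod_eq_of_lt hrp]
        have hdiv : (r + p * q) / p = q := by
          rw [Nat.add_mul_div_left _ _ hp0, Nat.div_eq_of_lt hrp, zero_add]
        constructor
        · have := Nat.mod_add_div n p
          have hq' : q ≤ n / p := by omega
          have : p * q ≤ p * (n / p) := Nat.mul_le_mul_left _ hq'
          omega
        · rw [myB hp, not_or, hmod, hdiv]
          refine ⟨fun h => ?_, hdq⟩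
          rw [myA hp (Nat.mod_lt _ hp0)] at h
          omega
    rw [key, Finset.card_image_of_injOn, Finset.card_product, Finset.card_range]
    · have hdiv : n / p < p ^ m := by
        rw [Nat.div_lt_iff_lt_mul hp0, ← pow_succ]
        exact hn
      rw [ih (n / p) hdiv, Finset.prod_range_succ', mul_comm]
      congr 1
      · refine Finset.prod_congr rfl fun i _ => ?_
        rw [pow_succ', Nat.div_div_eq_div_mul]
      · simp
    · rintro ⟨r, q⟩ h ⟨r', q'⟩ h' heq
      simp only [mem_product, mem_range, mem_coe, mem_filter] at h h'
      have hrp : r < p := lt_of_lt_of_le (by omega) (Nat.mod_lt n hp0)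
      have hrp' : r' < p := lt_of_lt_of_le (by omega) (Nat.mod_lt n hp0)
      simp only at heq
      have h1 : r = r' := by
        have := congrArg (· % p) heq
        simpa [Nat.add_mul_mod_self_left, Nat.mod_eq_of_lt hrp, Nat.mod_eq_of_lt hrp'] using this
      have h2 : q = q' := by
        subst h1
        have : p * q = p * q' := by omega
        exact Nat.eq_of_mul_eq_mul_left hp0 this
      simp [h1, h2]

private lemma myDigit {q M b : ℕ} (hq : 0 < q) (hb : b < q * M) :
    (q * M - 1 - b) / q = M - 1 - b / q ∧ (q * M - 1 - b) % q = q - 1 - b % q := by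
  have hd : b / q < M := (Nat.div_lt_iff_lt_mul hq).mpr (by rw [mul_comm]; exact hb)
  have hr : b % q < q := Nat.mod_lt _ hq
  have hb' : q * (b / q) + b % q = b := Nat.div_add_mod b q
  have hmul : q * (b / q) + q ≤ q * M := by
    have : q * (b / q + 1) ≤ q * M := Nat.mul_le_mul_left _ hd
    rwa [Nat.mul_add, Nat.mul_one] at this
  have hkey : q * M - 1 - b = (q - 1 - b % q) + q * (M - 1 - b / q) := by
    have h2 : q * (M - 1 - b / q) = q * M - (q * (b / q) + q) := by
      rw [show M - 1 - b / q = M - (b / q + 1) by omega, Nat.mul_sub, Nat.mul_add, Nat.mul_one]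
    omega
  constructor
  · rw [hkey, Nat.add_mul_div_left _ _ hq, Nat.div_eq_of_lt (by omega), zero_add]
  · rw [hkey, Nat.add_mul_mod_self_left, Nat.mod_eq_of_lt (by omega)]

theorem stmt1 (p : ℕ) (hp : p.Prime) (a : ℕ) (ha : 0 < a)
    (m : ℕ) (hm : a ≤ p ^ m) (hmmin : ∀ k, a ≤ p ^ k → m ≤ k) :
    ((Finset.range (p ^ m - a + 1)).filter fun j => ¬ p ∣ (p ^ m - a).choose j).card =
      ∏ k ∈ Finset.range (p - 1),
        (p - k) ^ ((Finset.range m).filter fun l => (a - 1) / p ^ l % p = k).card := by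
  have hp0 : 0 < p := hp.pos
  have hp1 : 1 < p := hp.one_lt
  set n := p ^ m - a with hn
  have hnlt : n < p ^ m := by
    have : 0 < p ^ m := pow_pos hp0 m
    omega
  rw [myCount hp m n hnlt]
  -- digit identity: for l < m, n / p^l % p + 1 = p - (a-1)/p^l % p
  have hdig : ∀ l, l < m → n / p ^ l % p + 1 = p - (a - 1) / p ^ l % p := by
    intro l hl
    set b := a - 1 with hb
    have hbn : n = p ^ m - 1 - b := by omega
    have hql : (0:ℕ) < p ^ l := pow_pos hp0 l
    have hpowsplit : p ^ m = p ^ l * p ^ (m - l) := by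
      rw [← pow_add]; congr 1; omega
    have hblt : b < p ^ l * p ^ (m - l) := by rw [← hpowsplit]; omega
    have h1 := (myDigit hql hblt).1
    have hdivn : n / p ^ l = p ^ (m - l) - 1 - b / p ^ l := by
      rw [hbn, hpowsplit, h1]
    -- now mod p on p^(m-l) - 1 - b/p^l, with m - l ≥ 1
    have hml : m - l = (m - l - 1) + 1 := by omega
    have hsplit2 : p ^ (m - l) = p * p ^ (m - l - 1) := by
      have h : m - l - 1 + 1 = m - l := by omega
      have h2 := pow_succ' p (m - l - 1)
      rw [h] at h2
      exact h2
    have hblt2 : b / p ^ l < p * p ^ (m - l - 1) := by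
      rw [← hsplit2, Nat.div_lt_iff_lt_mul hql, mul_comm, ← hpowsplit]; omega
    have h2 := (myDigit hp0 hblt2).2
    rw [hdivn, hsplit2, h2]
    have : b / p ^ l % p < p := Nat.mod_lt _ hp0
    omega
  -- rewrite the product
  have hprod : ∏ i ∈ Finset.range m, (n / p ^ i % p + 1) =
      ∏ i ∈ Finset.range m, (p - (a - 1) / p ^ i % p) := by
    refine Finset.prod_congr rfl fun i hi => ?_
    exact hdig i (Finset.mem_range.mp hi)
  rw [hprod]
  -- regroup by digit values
  have hmaps : ∀ i ∈ Finset.range m, (a - 1) / p ^ i % p ∈ Finset.range p := by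
    intro i _
    exact Finset.mem_range.mpr (Nat.mod_lt _ hp0)
  rw [← Finset.prod_fiberwise_of_maps_to hmaps (fun i => p - (a - 1) / p ^ i % p)]
  have hfib : ∀ k ∈ Finset.range p,
      (∏ i ∈ (Finset.range m).filter (fun i => (a - 1) / p ^ i % p = k),
        (p - (a - 1) / p ^ i % p)) =
      (p - k) ^ ((Finset.range m).filter fun l => (a - 1) / p ^ l % p = k).card := by
    intro k _
    rw [Finset.prod_congr rfl (fun i hi => ?_), Finset.prod_const]
    rw [(Finset.mem_filter.mp hi).2]
  rw [Finset.prod_congr rfl hfib]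
  -- range p vs range (p-1): extra factor is 1
  have hps : p = (p - 1) + 1 := by omega
  rw [hps, Finset.prod_range_succ]
  simp
end

section
/- Let q = 2 and let a > b ≥ 1 be integers, and let m be the smallest nonnegative integer with a ≤ 2^m. Then Δ(a,b) = Σ_{k=0}^{a−1} f_k · S_1(a−k) holds in F_2(t), where f_k = Σ C(2^m − a, i)·C(a − b, j), the sum being over all pairs of nonnegative integers (i, j) with i + j = k, i ≤ 2^m − a and j ≤ a − b − 1, and where the integers f_k are understood via the canonical map ℤ → F_2(t). -/
open Finset

/-- The coefficient `f_k`. -/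
def fc (s d k : ℕ) : ℕ :=
  ∑ ij ∈ Finset.HasAntidiagonal.antidiagonal k,
    if ij.1 ≤ s ∧ ij.2 ≤ d - 1 then s.choose ij.1 * d.choose ij.2 else 0

lemma fc_eq_zero {s d k : ℕ} (hd : 1 ≤ d) (h : s + d ≤ k) : fc s d k = 0 := by
  apply Finset.sum_eq_zero
  rintro ⟨i, j⟩ hij
  rw [Finset.HasAntidiagonal.mem_antidiagonal] at hij
  rw [if_neg]
  rintro ⟨h1, h2⟩
  omega

open Polynomial in
lemma gen_sum {R : Type*} [CommRing R] [CharP R 2] (s d : ℕ) (hd : 1 ≤ d) (L : ℕ)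
    (hL : s + d ≤ L) (x : R) :
    ∑ k ∈ range L, (fc s d k : R) * x ^ k = (x + 1) ^ s * ((x + 1) ^ d + x ^ d) := by
  have h2 : (2 : R) = 0 := by exact_mod_cast CharP.cast_eq_zero R 2
  set P : R[X] := (X + 1) ^ s * ((X + 1) ^ d + X ^ d) with hP
  have hcoeff : ∀ k, P.coeff k = (fc s d k : R) := by
    intro k
    rw [hP, coeff_mul, fc, Nat.cast_sum]
    apply Finset.sum_congr rfl
    rintro ⟨i, j⟩ hij
    simp only [coeff_X_add_one_pow, coeff_add, coeff_X_pow]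
    rw [apply_ite (Nat.cast : ℕ → R), Nat.cast_zero]
    rcases lt_trichotomy j d with hj | rfl | hj
    · rw [if_neg (by omega : ¬ j = d), add_zero]
      by_cases hi : i ≤ s
      · rw [if_pos ⟨hi, by omega⟩]; push_cast; ring
      · rw [if_neg (by tauto), Nat.choose_eq_zero_of_lt (by omega), Nat.cast_zero, zero_mul]
    · rw [if_pos rfl, if_neg (by omega), Nat.choose_self]
      have h2' : ((2 : R)) = 0 := h2
      push_cast
      linear_combination (s.choose i : R) * h2'
    · rw [if_neg (by omega : ¬ j = d), if_neg (by omega), Nat.choose_eq_zero_of_lt hj]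
      push_cast; ring
  have hdeg : P.natDegree < L := by
    have : P.natDegree ≤ s + d - 1 := by
      rw [natDegree_le_iff_coeff_eq_zero]
      intro N hN
      rw [hcoeff, fc_eq_zero hd (by omega), Nat.cast_zero]
    omega
  have hev := Polynomial.eval_eq_sum_range' hdeg x
  have hevP : P.eval x = (x + 1) ^ s * ((x + 1) ^ d + x ^ d) := by
    rw [hP]; simp [eval_mul, eval_add, eval_pow]
  rw [← hevP, hev]
  apply Finset.sum_congr rfl
  intro k _
  rw [hcoeff]

open Polynomial in
lemma poly_main {F : Type*} [Field F] [CharP F 2] (a b m : ℕ) (hb : 1 ≤ b)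
    (hab : b < a) (hm : a ≤ 2 ^ m) :
    ∑ k ∈ range a, (fc (2 ^ m - a) (a - b) k : F[X]) *
        (X ^ k * (X + 1) ^ a + X ^ a * (X + 1) ^ k) =
      X ^ (a - b) + (X + 1) ^ (a - b) := by
  haveI : Fact (Nat.Prime 2) := ⟨Nat.prime_two⟩
  have h2 : (2 : F[X]) = 0 := by exact_mod_cast CharP.cast_eq_zero F[X] 2
  set s := 2 ^ m - a with hs'
  set d := a - b with hd'
  have hd : 1 ≤ d := by omega
  set L := max a (s + d) with hL'
  have hL : s + d ≤ L := le_max_right _ _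
  have haL : a ≤ L := le_max_left _ _
  have hA := gen_sum s d hd L hL (X : F[X])
  have hB := gen_sum s d hd L hL ((X : F[X]) + 1)
  have hXX : ((X : F[X]) + 1) + 1 = X := by linear_combination h2
  rw [hXX] at hB
  -- the full sum over `range L`
  have hfull : ∑ k ∈ range L, (fc s d k : F[X]) *
      (X ^ k * (X + 1) ^ a + X ^ a * (X + 1) ^ k) = X ^ d + (X + 1) ^ d := by
    have hexp : ∑ k ∈ range L, (fc s d k : F[X]) *
        (X ^ k * (X + 1) ^ a + X ^ a * (X + 1) ^ k)
        = (X + 1) ^ a * (∑ k ∈ range L, (fc s d k : F[X]) * X ^ k)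
          + X ^ a * (∑ k ∈ range L, (fc s d k : F[X]) * (X + 1) ^ k) := by
      rw [Finset.mul_sum, Finset.mul_sum, ← Finset.sum_add_distrib]
      exact Finset.sum_congr rfl fun k _ => by ring
    rw [hexp, hA, hB]
    have hpow : ((X : F[X]) + 1) ^ a * ((X + 1) ^ s * ((X + 1) ^ d + X ^ d))
        + X ^ a * (X ^ s * (X ^ d + (X + 1) ^ d))
        = (X + 1) ^ (a + s) * ((X + 1) ^ d + X ^ d) + X ^ (a + s) * (X ^ d + (X + 1) ^ d) := by
      rw [pow_add, pow_add]; ring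
    rw [hpow]
    have has : a + s = 2 ^ m := by omega
    have hfrob : ((X : F[X]) + 1) ^ (2 ^ m) = X ^ (2 ^ m) + 1 := by
      rw [add_pow_char_pow, one_pow]
    rw [has, hfrob]
    linear_combination ((X : F[X]) ^ (2 ^ m) * (X ^ d + (X + 1) ^ d)) * h2
  rw [← Finset.sum_range_add_sum_Ico _ haL] at hfull
  set S := ∑ k ∈ range a, (fc s d k : F[X]) *
      (X ^ k * (X + 1) ^ a + X ^ a * (X + 1) ^ k) with hS
  set p := ∑ k ∈ Finset.Ico a L, (fc s d k : F[X]) * (X ^ (k - a) + (X + 1) ^ (k - a)) with hp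
  have htail : ∑ k ∈ Finset.Ico a L, (fc s d k : F[X]) *
      (X ^ k * (X + 1) ^ a + X ^ a * (X + 1) ^ k) = X ^ a * (X + 1) ^ a * p := by
    rw [hp, Finset.mul_sum]
    apply Finset.sum_congr rfl
    intro k hk
    rw [Finset.mem_Ico] at hk
    have e1 : (X : F[X]) ^ k = X ^ a * X ^ (k - a) := by
      rw [← pow_add]; congr 1; omega
    have e2 : ((X : F[X]) + 1) ^ k = (X + 1) ^ a * (X + 1) ^ (k - a) := by
      rw [← pow_add]; congr 1; omega
    rw [e1, e2]; ring
  rw [htail] at hfull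
  -- degree argument: `p = 0`
  have hY1 : ((X : F[X]) + 1) = X + C 1 := by rw [map_one]
  have hmonX : ((X : F[X]) ^ a).Monic := monic_X_pow a
  have hmonY : (((X : F[X]) + 1) ^ a).Monic := by rw [hY1]; exact (monic_X_add_C 1).pow a
  have hp0 : p = 0 := by
    by_contra hne
    have hdeq : (X ^ a * (X + 1) ^ a * p).natDegree = a + a + p.natDegree := by
      rw [Polynomial.Monic.natDegree_mul' (hmonX.mul hmonY) hne,
        Polynomial.Monic.natDegree_mul hmonX hmonY, natDegree_X_pow, hY1,
        Polynomial.Monic.natDegree_pow ((monic_X_add_C 1)), natDegree_X_add_C, mul_one]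
    have hrhs : (X : F[X]) ^ a * (X + 1) ^ a * p = (X ^ d + (X + 1) ^ d) - S := by
      linear_combination hfull
    have hterm : ∀ k ∈ range a, ((fc s d k : F[X]) *
        (X ^ k * (X + 1) ^ a + X ^ a * (X + 1) ^ k)).natDegree ≤ 2 * a - 1 := by
      intro k hk
      rw [Finset.mem_range] at hk
      have hykdeg : ∀ n : ℕ, (((X : F[X]) + 1) ^ n).natDegree ≤ n := by
        intro n
        rw [hY1, Polynomial.Monic.natDegree_pow ((monic_X_add_C 1)), natDegree_X_add_C, mul_one]
      refine le_trans natDegree_mul_le ?_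
      rw [natDegree_natCast, zero_add]
      refine le_trans (natDegree_add_le _ _) (max_le ?_ ?_)
      · refine le_trans natDegree_mul_le ?_
        rw [natDegree_X_pow]
        have := hykdeg a
        omega
      · refine le_trans natDegree_mul_le ?_
        rw [natDegree_X_pow]
        have := hykdeg k
        omega
    have hSdeg : S.natDegree ≤ 2 * a - 1 := by
      rw [hS]
      exact Polynomial.natDegree_sum_le_of_forall_le _ _ hterm
    have hRdeg : ((X ^ d + ((X : F[X]) + 1) ^ d) - S).natDegree ≤ 2 * a - 1 := by
      refine le_trans (natDegree_sub_le _ _) (max_le (le_trans (natDegree_add_le _ _)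
        (max_le ?_ ?_)) hSdeg)
      · rw [natDegree_X_pow]; omega
      · rw [hY1, Polynomial.Monic.natDegree_pow ((monic_X_add_C 1)), natDegree_X_add_C, mul_one]
        omega
    rw [hrhs] at hdeq
    omega
  rw [hp0, mul_zero, add_zero] at hfull
  exact hfull

theorem stmt2 (F : Type*) [Field F] [Fintype F] (hF : Fintype.card F = 2)
    (a b : ℕ) (hb : 1 ≤ b) (hab : b < a)
    (m : ℕ) (hm : a ≤ 2 ^ m) (hmmin : ∀ k, a ≤ 2 ^ k → m ≤ k) :
    Delta F a b =
      ∑ k ∈ Finset.range a,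
        ((∑ ij ∈ Finset.HasAntidiagonal.antidiagonal k,
            if ij.1 ≤ 2 ^ m - a ∧ ij.2 ≤ a - b - 1 then
              (2 ^ m - a).choose ij.1 * (a - b).choose ij.2
            else 0 : ℕ) : RatFunc F) * S1 F (a - k) := by
  classical
  haveI : Fact (Nat.Prime 2) := ⟨Nat.prime_two⟩
  haveI hchF : CharP F 2 := charP_of_card_eq_prime hF
  haveI hchK : CharP (RatFunc F) 2 :=
    charP_of_injective_algebraMap (RatFunc.algebraMap_injective F) 2
  have h2K : (2 : RatFunc F) = 0 := by exact_mod_cast CharP.cast_eq_zero (RatFunc F) 2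
  set x : RatFunc F := RatFunc.X with hxdef
  set y : RatFunc F := RatFunc.X + 1 with hydef
  have hx : x ≠ 0 := RatFunc.X_ne_zero
  have hy : y ≠ 0 := by
    rw [hydef]
    have : (RatFunc.X : RatFunc F) + 1 =
        algebraMap (Polynomial F) (RatFunc F) (Polynomial.X + 1) := by
      rw [map_add, map_one, RatFunc.algebraMap_X]
    rw [this]
    apply RatFunc.algebraMap_ne_zero
    intro h
    have := congrArg (Polynomial.coeff · 0) h
    simpa using this
  -- expand S1
  have h01 : (Finset.univ : Finset F) = {0, 1} := by
    symm
    apply Finset.eq_univ_of_card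
    rw [hF, Finset.card_insert_of_notMem (by simp), Finset.card_singleton]
  have hS1 : ∀ k, S1 F k = 1 / x ^ k + 1 / y ^ k := by
    intro k
    rw [S1, h01, Finset.sum_pair (zero_ne_one : (0 : F) ≠ 1)]
    rw [map_zero, map_one, sub_zero]
    have : (RatFunc.X : RatFunc F) - 1 = y := by
      rw [hydef]; linear_combination -h2K
    rw [this, hxdef]
  -- the coefficients
  set s := 2 ^ m - a with hs'
  set d := a - b with hd'
  have hd : 1 ≤ d := by omega
  -- polynomial identity transported to RatFunc F
  have hpoly := poly_main (F := F) a b m hb hab hm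
  have hkey : ∑ k ∈ range a, (fc s d k : RatFunc F) * (x ^ k * y ^ a + x ^ a * y ^ k)
      = x ^ d + y ^ d := by
    have := congrArg (algebraMap (Polynomial F) (RatFunc F)) hpoly
    simpa only [map_sum, map_add, map_mul, map_pow, map_natCast, map_one,
      RatFunc.algebraMap_X, ← hxdef, ← hydef, ← hs', ← hd'] using this
  simp only [Delta, hS1]
  have hfc : ∀ k, ((∑ ij ∈ Finset.HasAntidiagonal.antidiagonal k,
      if ij.1 ≤ 2 ^ m - a ∧ ij.2 ≤ a - b - 1 then
        (2 ^ m - a).choose ij.1 * (a - b).choose ij.2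
      else 0 : ℕ) : RatFunc F) = (fc s d k : RatFunc F) := by
    intro k; rfl
  change _ = ∑ k ∈ range a, (fc s d k : RatFunc F) * (1 / x ^ (a - k) + 1 / y ^ (a - k))
  -- LHS of the goal simplifies
  have hLHS : (1 / x ^ a + 1 / y ^ a) * (1 / x ^ b + 1 / y ^ b)
      - (1 / x ^ (a + b) + 1 / y ^ (a + b))
      = 1 / (x ^ a * y ^ b) + 1 / (x ^ b * y ^ a) := by
    rw [pow_add, pow_add]
    simp only [one_div, mul_inv]
    ring
  rw [hLHS]
  apply mul_left_cancel₀ (mul_ne_zero (pow_ne_zero a hx) (pow_ne_zero a hy))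
  have hRHS : x ^ a * y ^ a * ∑ k ∈ range a, (fc s d k : RatFunc F) * (1 / x ^ (a - k) + 1 / y ^ (a - k))
      = ∑ k ∈ range a, (fc s d k : RatFunc F) * (x ^ k * y ^ a + x ^ a * y ^ k) := by
    rw [Finset.mul_sum]
    apply Finset.sum_congr rfl
    intro k hk
    rw [Finset.mem_range] at hk
    have e1 : x ^ a = x ^ (a - k) * x ^ k := by rw [← pow_add]; congr 1; omega
    have e2 : y ^ a = y ^ (a - k) * y ^ k := by rw [← pow_add]; congr 1; omega
    rw [e1, e2]
    have hxk : x ^ (a - k) ≠ 0 := pow_ne_zero _ hx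
    have hyk : y ^ (a - k) ≠ 0 := pow_ne_zero _ hy
    field_simp
  rw [hRHS, hkey]
  -- compute the left side
  have e3 : y ^ a = y ^ b * y ^ d := by rw [← pow_add]; congr 1; omega
  have e4 : x ^ a = x ^ b * x ^ d := by rw [← pow_add]; congr 1; omega
  rw [e3, e4]
  have hxb : x ^ b ≠ 0 := pow_ne_zero _ hx
  have hyb : y ^ b ≠ 0 := pow_ne_zero _ hy
  have hxd : x ^ d ≠ 0 := pow_ne_zero _ hx
  have hyd : y ^ d ≠ 0 := pow_ne_zero _ hy
  field_simp
  ring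
end

section
/- Let a ≥ b ≥ 1 be integers and let m be the smallest nonnegative integer with a ≤ p^m. Let f = f_0 + f_1·t + ⋯ + f_{a−1}·t^{a−1} ∈ F_q[t] be the unique polynomial of degree less than a that is congruent modulo t^a to the polynomial −(t^{q−1} − 1)^{p^m − a} · Σ_{θ ∈ F_q} Σ_{μ ∈ F_q, μ ≠ 0} ( Σ_{j=1}^{q−1} μ^{q−1−j}·(t+θ)^{j−1} )^a · (t + θ − μ)^{a−b}. Then Δ(a,b) = Σ_{i=0}^{a−1} f_i · S_1(a−i) holds in F_q(t). -/
open Finset Polynomial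

namespace Stmt3Aux

variable {F : Type*} [Field F] [Fintype F] [DecidableEq F]

/-- The geometric factor `∑_{j=1}^{q-1} μ^{q-1-j} (X+θ)^{j-1}`. -/
noncomputable def gp (q : ℕ) (θ μ : F) : Polynomial F :=
  ∑ j ∈ Icc 1 (q - 1), C (μ ^ (q - 1 - j)) * (X + C θ) ^ (j - 1)

/-- The numerator polynomial for `Δ(a,b)`. -/
noncomputable def NN (q a b : ℕ) : Polynomial F :=
  ∑ θ : F, ∑ μ ∈ Finset.univ.filter (fun μ : F => μ ≠ 0),
    gp q θ μ ^ a * (X + C θ - C μ) ^ (a - b)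

/-- The numerator polynomial for `∑ f_i S1(a-i)`. -/
noncomputable def MM (q a : ℕ) (f : Polynomial F) : Polynomial F :=
  ∑ θ : F, f.comp (X - C θ) * ((X - C θ) ^ (q - 1) - 1) ^ a

lemma gp_mul {q : ℕ} (hF : Fintype.card F = q) (θ : F) {μ : F} (hμ : μ ≠ 0) :
    gp q θ μ * (X + C θ - C μ) = (X + C θ) ^ (q - 1) - 1 := by
  have hq1 : 1 ≤ q := by subst hF; exact Fintype.card_pos
  have h1 : gp q θ μ
      = ∑ i ∈ range (q - 1), (X + C θ) ^ i * (C μ) ^ (q - 1 - 1 - i) := by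
    rw [gp, show Icc 1 (q - 1) = Ico 1 q by rw [← Finset.Ico_add_one_right_eq_Icc]; congr 1; omega,
      Finset.sum_Ico_eq_sum_range]
    apply Finset.sum_congr rfl
    intro i _
    rw [← map_pow, mul_comm, show 1 + i - 1 = i by omega,
      show q - 1 - (1 + i) = q - 1 - 1 - i by omega]
  have hμq : μ ^ (q - 1) = 1 := by
    subst hF; exact FiniteField.pow_card_sub_one_eq_one μ hμ
  rw [h1, geom_sum₂_mul, ← map_pow, hμq, map_one]

lemma lin_mul {p s q : ℕ} [hp : Fact p.Prime] [CharP F p] (hq : q = p ^ s)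
    (hF : Fintype.card F = q) (c : F) :
    (X + C c) * ((X + C c) ^ (q - 1) - 1) = X ^ q - X := by
  have hq1 : 1 ≤ q := by rw [hq]; exact Nat.one_le_pow _ _ hp.out.pos
  have h1 : (X + C c) * ((X + C c) ^ (q - 1) - 1) = (X + C c) ^ q - (X + C c) := by
    rw [mul_sub, mul_one, ← pow_succ']
    congr 2
    omega
  have h2 : ((X : Polynomial F) + C c) ^ q = X ^ q + C c := by
    rw [hq, add_pow_char_pow, ← map_pow, ← hq]
    congr 1
    rw [← hF]
    exact congrArg C (FiniteField.pow_card c)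
  rw [h1, h2]; ring

lemma prod_lin {q : ℕ} (hF : Fintype.card F = q) :
    ∏ c : F, (X - C c) = (X : Polynomial F) ^ q - X := by
  subst hF
  have h2 : 1 < Fintype.card F := Fintype.one_lt_card
  have hroots := FiniteField.roots_X_pow_card_sub_X F
  have hmonic : (X ^ Fintype.card F - X : Polynomial F).Monic := by
    apply Polynomial.monic_X_pow_sub
    rw [degree_X]
    exact_mod_cast h2
  have hcard : Multiset.card (X ^ Fintype.card F - X : Polynomial F).roots
      = (X ^ Fintype.card F - X : Polynomial F).natDegree := by
    rw [hroots, FiniteField.X_pow_card_sub_X_natDegree_eq F h2]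
    simp [Finset.card_univ]
  have hh := Polynomial.C_leadingCoeff_mul_prod_multiset_X_sub_C
    (p := (X ^ Fintype.card F - X : Polynomial F)) hcard
  rw [hmonic.leadingCoeff, map_one, one_mul, hroots] at hh
  rw [← hh]
  rfl

/-- `MM` is invariant under translation of the variable. -/
lemma MM_comp {q a : ℕ} (f : Polynomial F) (c : F) :
    (MM q a f).comp (X + C c) = MM q a f := by
  rw [MM, Polynomial.sum_comp]
  have h1 : ∀ θ : F,
      (f.comp (X - C θ) * ((X - C θ) ^ (q - 1) - 1) ^ a).comp (X + C c)
        = f.comp (X - C (θ - c)) * ((X - C (θ - c)) ^ (q - 1) - 1) ^ a := by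
    intro θ
    have hl : ((X : Polynomial F) - C θ).comp (X + C c) = X - C (θ - c) := by
      rw [sub_comp, X_comp, C_comp, map_sub]; ring
    rw [mul_comp, pow_comp, sub_comp, pow_comp, one_comp, comp_assoc, hl]
  simp_rw [h1]
  exact Fintype.sum_equiv (Equiv.subRight c)
    (fun θ => f.comp (X - C (θ - c)) * ((X - C (θ - c)) ^ (q - 1) - 1) ^ a)
    (fun θ => f.comp (X - C θ) * ((X - C θ) ^ (q - 1) - 1) ^ a)
    (fun θ => rfl)

/-- `NN` is invariant under translation of the variable. -/
lemma NN_comp {q a b : ℕ} (c : F) :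
    (NN q a b (F := F)).comp (X + C c) = NN q a b := by
  rw [NN, Polynomial.sum_comp]
  have hgp : ∀ θ μ : F, (gp q θ μ).comp (X + C c) = gp q (θ + c) μ := by
    intro θ μ
    rw [gp, Polynomial.sum_comp, gp]
    apply Finset.sum_congr rfl
    intro j _
    rw [mul_comp, C_comp, pow_comp, add_comp, X_comp, C_comp]
    congr 2
    rw [map_add]; ring
  have h1 : ∀ θ : F,
      (∑ μ ∈ Finset.univ.filter (fun μ : F => μ ≠ 0),
        gp q θ μ ^ a * (X + C θ - C μ) ^ (a - b)).comp (X + C c)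
      = ∑ μ ∈ Finset.univ.filter (fun μ : F => μ ≠ 0),
          gp q (θ + c) μ ^ a * (X + C (θ + c) - C μ) ^ (a - b) := by
    intro θ
    rw [Polynomial.sum_comp]
    apply Finset.sum_congr rfl
    intro μ _
    rw [mul_comp, pow_comp, pow_comp, sub_comp, add_comp, X_comp, C_comp, C_comp, hgp]
    congr 3
    rw [map_add]; ring
  simp_rw [h1]
  exact Fintype.sum_equiv (Equiv.addRight c) _ _ (fun θ => rfl)

lemma natDegree_MM_le {q a : ℕ} (hq2 : 2 ≤ q) (ha : 1 ≤ a) (f : Polynomial F)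
    (hfdeg : f.degree < a) : (MM q a f).natDegree ≤ a * q - 1 := by
  have hfnat : f.natDegree ≤ a - 1 := by
    rcases eq_or_ne f 0 with h | h
    · simp [h]
    · have := (natDegree_lt_iff_degree_lt h).mpr hfdeg; omega
  apply Polynomial.natDegree_sum_le_of_forall_le
  intro θ _
  have hb1 : (f.comp (X - C θ)).natDegree ≤ a - 1 := by
    refine le_trans natDegree_comp_le ?_
    rw [natDegree_X_sub_C, mul_one]
    exact hfnat
  have hb2 : ((((X : Polynomial F) - C θ) ^ (q - 1) - 1) ^ a).natDegree ≤ a * (q - 1) := by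
    refine le_trans natDegree_pow_le ?_
    apply Nat.mul_le_mul_left
    refine le_trans (natDegree_sub_le _ _) ?_
    rw [natDegree_one]
    refine max_le (le_trans natDegree_pow_le ?_) (by omega)
    rw [natDegree_X_sub_C, mul_one]
  refine le_trans natDegree_mul_le ?_
  refine le_trans (add_le_add hb1 hb2) ?_
  have e1 : a * (q - 1) + a = a * q := by rw [← Nat.mul_succ]; congr 1; omega
  generalize a * (q - 1) = u at *
  generalize a * q = v at *
  omega

lemma natDegree_NN_le {q a b : ℕ} (hq2 : 2 ≤ q) (hb : 1 ≤ b) (hab : b ≤ a) :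
    (NN q a b (F := F)).natDegree ≤ a * q - 1 := by
  apply Polynomial.natDegree_sum_le_of_forall_le
  intro θ _
  apply Polynomial.natDegree_sum_le_of_forall_le
  intro μ _
  have hgp : (gp q θ μ (F := F)).natDegree ≤ q - 2 := by
    apply Polynomial.natDegree_sum_le_of_forall_le
    intro j hj
    simp only [Finset.mem_Icc] at hj
    refine le_trans natDegree_mul_le ?_
    rw [natDegree_C, zero_add]
    refine le_trans natDegree_pow_le ?_
    rw [natDegree_X_add_C, mul_one]
    omega
  have hb1 : ((gp q θ μ (F := F)) ^ a).natDegree ≤ a * (q - 2) := by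
    refine le_trans natDegree_pow_le ?_
    exact Nat.mul_le_mul_left _ hgp
  have hb2 : (((X : Polynomial F) + C θ - C μ) ^ (a - b)).natDegree ≤ a - b := by
    refine le_trans natDegree_pow_le ?_
    rw [show (X : Polynomial F) + C θ - C μ = X + C (θ - μ) by rw [map_sub]; ring]
    rw [natDegree_X_add_C, mul_one]
  refine le_trans natDegree_mul_le ?_
  refine le_trans (add_le_add hb1 hb2) ?_
  have e1 : a * (q - 2) + a = a * (q - 1) := by rw [← Nat.mul_succ]; congr 1; omega
  have e2 : a * (q - 1) + a = a * q := by rw [← Nat.mul_succ]; congr 1; omega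
  generalize a * (q - 2) = u at *
  generalize a * (q - 1) = v at *
  generalize a * q = w at *
  omega

/-- The key congruence: `X^a ∣ MM - NN`. -/
lemma X_pow_dvd {p s q : ℕ} [hp : Fact p.Prime] [CharP F p] (hs : 1 ≤ s) (hq : q = p ^ s)
    (hF : Fintype.card F = q) {a b m : ℕ} (hb : 1 ≤ b) (hab : b ≤ a) (hm : a ≤ p ^ m)
    (f : Polynomial F)
    (hfcong : (X : Polynomial F) ^ a ∣
      f - (-((X ^ (q - 1) - 1) ^ (p ^ m - a) * NN q a b))) :
    (X : Polynomial F) ^ a ∣ MM q a f - NN q a b := by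
  have hq2 : 2 ≤ q := by rw [hq]; exact Nat.one_lt_pow (by omega) hp.out.one_lt
  set E : Polynomial F := X ^ (q - 1) - 1 with hE
  have hEpm : E ^ (p ^ m) = X ^ ((q - 1) * p ^ m) - 1 := by
    rw [hE, sub_pow_char_pow, one_pow, ← pow_mul]
  have h1 : (X : Polynomial F) ^ a ∣ (f - (-(E ^ (p ^ m - a) * NN q a b))) * E ^ a :=
    Dvd.dvd.mul_right hfcong _
  have h2 : (f - (-(E ^ (p ^ m - a) * NN q a b))) * E ^ a
      = f * E ^ a + E ^ (p ^ m) * NN q a b := by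
    have hEE : E ^ (p ^ m - a) * E ^ a = E ^ (p ^ m) := by
      rw [← pow_add, Nat.sub_add_cancel hm]
    rw [sub_neg_eq_add, add_mul]
    congr 1
    rw [mul_right_comm, hEE]
  have h3 : (X : Polynomial F) ^ a ∣ X ^ ((q - 1) * p ^ m) * NN q a b := by
    apply Dvd.dvd.mul_right
    apply pow_dvd_pow
    calc a ≤ p ^ m := hm
      _ = 1 * p ^ m := (one_mul _).symm
      _ ≤ (q - 1) * p ^ m := Nat.mul_le_mul_right _ (by omega)
  have h4 : (X : Polynomial F) ^ a ∣ f * E ^ a - NN q a b := by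
    have e : f * E ^ a - NN q a b
        = (f - (-(E ^ (p ^ m - a) * NN q a b))) * E ^ a - X ^ ((q - 1) * p ^ m) * NN q a b := by
      rw [h2, hEpm]; ring
    rw [e]
    exact dvd_sub h1 h3
  have h5 : MM q a f = f * E ^ a
      + ∑ θ ∈ Finset.univ.erase 0, f.comp (X - C θ) * ((X - C θ) ^ (q - 1) - 1) ^ a := by
    rw [MM, ← Finset.add_sum_erase _ _ (Finset.mem_univ (0 : F))]
    rw [map_zero, sub_zero, comp_X, hE]
  have h6 : (X : Polynomial F) ^ a ∣
      ∑ θ ∈ Finset.univ.erase 0, f.comp (X - C θ) * ((X - C θ) ^ (q - 1) - 1) ^ a := by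
    apply Finset.dvd_sum
    intro θ hθ
    apply Dvd.dvd.mul_left
    apply pow_dvd_pow_of_dvd
    rw [X_dvd_iff, coeff_zero_eq_eval_zero]
    simp only [eval_sub, eval_pow, eval_one, eval_X, eval_C, zero_sub]
    have hθ0 : (-θ : F) ≠ 0 := neg_ne_zero.mpr (Finset.ne_of_mem_erase hθ)
    have : (-θ : F) ^ (q - 1) = 1 := by
      rw [← hF]; exact FiniteField.pow_card_sub_one_eq_one _ hθ0
    rw [this, sub_self]
  have e : MM q a f - NN q a b
      = (∑ θ ∈ Finset.univ.erase 0, f.comp (X - C θ) * ((X - C θ) ^ (q - 1) - 1) ^ a)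
        + (f * E ^ a - NN q a b) := by
    rw [h5]; ring
  rw [e]
  exact dvd_add h6 h4

/-- The main polynomial identity. -/
lemma MM_eq_NN {p s q : ℕ} [hp : Fact p.Prime] [CharP F p] (hs : 1 ≤ s) (hq : q = p ^ s)
    (hF : Fintype.card F = q) {a b m : ℕ} (hb : 1 ≤ b) (hab : b ≤ a) (hm : a ≤ p ^ m)
    (f : Polynomial F) (hfdeg : f.degree < a)
    (hfcong : (X : Polynomial F) ^ a ∣
      f - (-((X ^ (q - 1) - 1) ^ (p ^ m - a) * NN q a b))) :
    MM q a f = NN q a b := by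
  have hq2 : 2 ≤ q := by rw [hq]; exact Nat.one_lt_pow (by omega) hp.out.one_lt
  have ha : 1 ≤ a := le_trans hb hab
  set P : Polynomial F := MM q a f - NN q a b with hP
  have hX : (X : Polynomial F) ^ a ∣ P := X_pow_dvd hs hq hF hb hab hm f hfcong
  have hc : ∀ c : F, (X - C c) ^ a ∣ P := by
    intro c
    have hcomp : P.comp (X + C c) = P := by
      rw [hP, sub_comp, MM_comp, NN_comp]
    have hX' : (X : Polynomial F) ^ a ∣ P.comp (X + C c) := by rw [hcomp]; exact hX
    obtain ⟨k, hk⟩ := hX'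
    refine ⟨k.comp (X - C c), ?_⟩
    have e : (P.comp (X + C c)).comp (X - C c) = P := by
      rw [comp_assoc, add_comp, X_comp, C_comp, sub_add_cancel, comp_X]
    rw [← e, hk, mul_comp, pow_comp, X_comp]
  have hprod : ((X : Polynomial F) ^ q - X) ^ a ∣ P := by
    rw [← prod_lin hF, ← Finset.prod_pow]
    apply Fintype.prod_dvd_of_coprime
    · intro i j hij
      exact (Polynomial.pairwise_coprime_X_sub_C (Function.injective_id) hij).pow
    · exact fun c => hc c
  have hdeg : P.natDegree < (((X : Polynomial F) ^ q - X) ^ a).natDegree := by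
    rw [natDegree_pow, FiniteField.X_pow_card_sub_X_natDegree_eq F hq2]
    have h1 := natDegree_MM_le hq2 ha f hfdeg
    have h2 := natDegree_NN_le (a := a) (b := b) (F := F) hq2 hb hab
    have h3 : P.natDegree ≤ a * q - 1 :=
      le_trans (natDegree_sub_le _ _) (max_le h1 h2)
    have e1 : 1 ≤ a * q := Nat.one_le_iff_ne_zero.mpr (by positivity)
    generalize a * q = v at *
    omega
  have h0 : P = 0 := Polynomial.eq_zero_of_dvd_of_natDegree_lt hprod hdeg
  rw [hP] at h0
  exact sub_eq_zero.mp h0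

end Stmt3Aux

open Stmt3Aux in
theorem stmt3 (p s q : ℕ) (hp : p.Prime) (hs : 1 ≤ s) (hq : q = p ^ s)
    (F : Type*) [Field F] [Fintype F] [DecidableEq F] (hF : Fintype.card F = q)
    (a b : ℕ) (hb : 1 ≤ b) (hab : b ≤ a)
    (m : ℕ) (hm : a ≤ p ^ m) (hmmin : ∀ k, a ≤ p ^ k → m ≤ k)
    (f : Polynomial F) (hfdeg : f.degree < a)
    (hfcong : (X : Polynomial F) ^ a ∣
      f - (-((X ^ (q - 1) - 1) ^ (p ^ m - a) *
        ∑ θ : F, ∑ μ ∈ Finset.univ.filter (fun μ : F => μ ≠ 0),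
          (∑ j ∈ Finset.Icc 1 (q - 1), C (μ ^ (q - 1 - j)) * (X + C θ) ^ (j - 1)) ^ a *
            (X + C θ - C μ) ^ (a - b)))) :
    Delta F a b = ∑ i ∈ Finset.range a, RatFunc.C (f.coeff i) * S1 F (a - i) := by
  have hpf : Fact p.Prime := ⟨hp⟩
  have hchar : CharP F p := by
    have h0 : ((p : F)) ^ s = 0 := by
      have := FiniteField.cast_card_eq_zero F
      rw [hF, hq] at this
      exact_mod_cast this
    have hp0 : (p : F) = 0 := pow_eq_zero_iff (by omega) |>.mp h0
    exact (CharP.charP_iff_prime_eq_zero hp).2 hp0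
  have hNN : (∑ θ : F, ∑ μ ∈ Finset.univ.filter (fun μ : F => μ ≠ 0),
      (∑ j ∈ Finset.Icc 1 (q - 1), C (μ ^ (q - 1 - j)) * (X + C θ) ^ (j - 1)) ^ a *
        (X + C θ - C μ) ^ (a - b)) = NN q a b := rfl
  rw [hNN] at hfcong
  have key := MM_eq_NN (F := F) hs hq hF hb hab hm f hfdeg hfcong
  -- now the RatFunc computation
  set φ := algebraMap (Polynomial F) (RatFunc F) with hφdef
  have hq2 : 2 ≤ q := by rw [hq]; exact Nat.one_lt_pow (by omega) hp.one_lt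
  have ha : 1 ≤ a := le_trans hb hab
  have hWne : ((X : Polynomial F) ^ q - X) ≠ 0 := FiniteField.X_pow_card_sub_X_ne_zero F hq2
  have hW : φ ((X : Polynomial F) ^ q - X) ≠ 0 := RatFunc.algebraMap_ne_zero hWne
  have hWa : (φ ((X : Polynomial F) ^ q - X)) ^ a ≠ 0 := pow_ne_zero _ hW
  have hlin : ∀ c : F, (X + C c : Polynomial F) ≠ 0 := by
    intro c
    rw [show (X + C c : Polynomial F) = X - C (-c) by rw [map_neg]; ring]
    exact X_sub_C_ne_zero _
  -- per-term identity for Delta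
  have hterm : ∀ θ μ : F, μ ≠ 0 →
      1 / (φ (X + C θ)) ^ a * (1 / (φ (X + C θ - C μ)) ^ b)
        * (φ ((X : Polynomial F) ^ q - X)) ^ a
      = φ (gp q θ μ ^ a * (X + C θ - C μ) ^ (a - b)) := by
    intro θ μ hμ
    have h1 : φ (X + C θ) ≠ 0 := RatFunc.algebraMap_ne_zero (hlin θ)
    have h2 : φ (X + C θ - C μ) ≠ 0 := by
      rw [show (X + C θ - C μ : Polynomial F) = X + C (θ - μ) by rw [map_sub]; ring]
      exact RatFunc.algebraMap_ne_zero (hlin (θ - μ))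
    have hpoly : gp q θ μ ^ a * (X + C θ - C μ) ^ (a - b)
          * ((X + C θ) ^ a * (X + C θ - C μ) ^ b)
        = ((X : Polynomial F) ^ q - X) ^ a := by
      have e1 : ((X : Polynomial F) + C θ - C μ) ^ (a - b) * (X + C θ - C μ) ^ b
          = (X + C θ - C μ) ^ a := by
        rw [← pow_add, Nat.sub_add_cancel hab]
      calc gp q θ μ ^ a * (X + C θ - C μ) ^ (a - b) * ((X + C θ) ^ a * (X + C θ - C μ) ^ b)
          = gp q θ μ ^ a * ((X + C θ - C μ) ^ (a - b) * (X + C θ - C μ) ^ b)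
              * (X + C θ) ^ a := by ring
        _ = (gp q θ μ * (X + C θ - C μ)) ^ a * (X + C θ) ^ a := by rw [e1, mul_pow]
        _ = ((X + C θ) * ((X + C θ) ^ (q - 1) - 1)) ^ a := by
              rw [gp_mul hF θ hμ, ← mul_pow, mul_comm]
        _ = ((X : Polynomial F) ^ q - X) ^ a := by
              rw [lin_mul (p := p) (s := s) hq hF θ]
    rw [div_mul_div_comm, one_mul, div_mul_eq_mul_div, one_mul,
      div_eq_iff (mul_ne_zero (pow_ne_zero _ h1) (pow_ne_zero _ h2))]
    simp only [← map_pow, ← map_mul]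
    exact (congrArg φ hpoly).symm
  -- computation A : Delta * W^a = φ NN
  have hA : Delta F a b * (φ ((X : Polynomial F) ^ q - X)) ^ a = φ (NN q a b) := by
    have hdelta : Delta F a b = ∑ θ : F, ∑ θ' ∈ Finset.univ.erase θ,
        1 / (RatFunc.X - RatFunc.C θ) ^ a * (1 / (RatFunc.X - RatFunc.C θ') ^ b) := by
      rw [Delta, S1, S1, S1, Finset.sum_mul_sum, ← Finset.sum_sub_distrib]
      apply Finset.sum_congr rfl
      intro θ _
      rw [← Finset.add_sum_erase _ _ (Finset.mem_univ θ)]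
      have hdiag : 1 / (RatFunc.X - RatFunc.C θ) ^ a * (1 / (RatFunc.X - RatFunc.C θ) ^ b)
          = 1 / (RatFunc.X - RatFunc.C θ) ^ (a + b) := by
        rw [div_mul_div_comm, one_mul, ← pow_add]
      rw [hdiag]; ring
    have hre : ∀ θ : F, (∑ θ' ∈ Finset.univ.erase θ,
          1 / (RatFunc.X - RatFunc.C θ) ^ a * (1 / (RatFunc.X - RatFunc.C θ') ^ b))
        = ∑ μ ∈ Finset.univ.filter (fun μ : F => μ ≠ 0),
          1 / (RatFunc.X - RatFunc.C θ) ^ a * (1 / (RatFunc.X - RatFunc.C (θ + μ)) ^ b) := by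
      intro θ
      apply Finset.sum_nbij' (i := fun θ' => θ' - θ) (j := fun μ => θ + μ)
      · intro θ' hθ'
        simp only [Finset.mem_filter, Finset.mem_univ, true_and, ne_eq, sub_eq_zero]
        exact Finset.ne_of_mem_erase hθ'
      · intro μ hμ
        simp only [Finset.mem_filter, Finset.mem_univ, true_and, ne_eq] at hμ
        simp only [Finset.mem_erase, Finset.mem_univ, and_true, ne_eq]
        intro h
        exact hμ (by linear_combination h)
      · intro θ' _; ring
      · intro μ _; ring
      · intro θ' _
        rw [add_sub_cancel]
    have hneg : ∑ θ : F, (∑ μ ∈ Finset.univ.filter (fun μ : F => μ ≠ 0),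
          1 / (RatFunc.X - RatFunc.C θ) ^ a * (1 / (RatFunc.X - RatFunc.C (θ + μ)) ^ b))
        = ∑ θ : F, ∑ μ ∈ Finset.univ.filter (fun μ : F => μ ≠ 0),
          1 / (RatFunc.X - RatFunc.C (-θ)) ^ a * (1 / (RatFunc.X - RatFunc.C (-θ + μ)) ^ b) :=
      (Fintype.sum_equiv (Equiv.neg F) _ _ (fun θ => by simp only [Equiv.neg_apply, neg_neg]))
    have ht1 : ∀ θ : F, RatFunc.X - RatFunc.C (-θ) = φ (X + C θ) := by
      intro θ
      rw [map_add, RatFunc.algebraMap_X, RatFunc.algebraMap_C, map_neg, sub_neg_eq_add]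
    have ht2 : ∀ θ μ : F, RatFunc.X - RatFunc.C (-θ + μ) = φ (X + C θ - C μ) := by
      intro θ μ
      rw [map_sub, ← ht1 θ, map_add, RatFunc.algebraMap_C]
      ring
    rw [hdelta]
    simp_rw [hre]
    rw [hneg, NN, map_sum, Finset.sum_mul]
    apply Finset.sum_congr rfl
    intro θ _
    rw [map_sum, Finset.sum_mul]
    apply Finset.sum_congr rfl
    intro μ hμ
    rw [ht1 θ, ht2 θ μ, hterm θ μ (Finset.mem_filter.mp hμ).2]
  -- computation B : RHS * W^a = φ MM
  have hB : (∑ i ∈ Finset.range a, RatFunc.C (f.coeff i) * S1 F (a - i))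
      * (φ ((X : Polynomial F) ^ q - X)) ^ a = φ (MM q a f) := by
    have hfnat : f.natDegree < a := by
      rcases eq_or_ne f 0 with h | h
      · simp [h]; omega
      · exact (natDegree_lt_iff_degree_lt h).mpr hfdeg
    have htermB : ∀ (θ : F) (i : ℕ), i < a →
        RatFunc.C (f.coeff i) * (1 / (RatFunc.X - RatFunc.C θ) ^ (a - i))
          * (φ ((X : Polynomial F) ^ q - X)) ^ a
        = φ (C (f.coeff i) * (X - C θ) ^ i * ((X - C θ) ^ (q - 1) - 1) ^ a) := by
      intro θ i hi
      have hXθ : (X - C θ : Polynomial F) ≠ 0 := X_sub_C_ne_zero θ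
      have h1 : φ (X - C θ) ≠ 0 := RatFunc.algebraMap_ne_zero hXθ
      have hpoly : ((X : Polynomial F) ^ q - X) ^ a
          = (X - C θ) ^ i * ((X - C θ) ^ (q - 1) - 1) ^ a * (X - C θ) ^ (a - i) := by
        rw [mul_right_comm, ← pow_add, show i + (a - i) = a by omega, ← mul_pow]
        congr 1
        have hl := lin_mul (p := p) (s := s) hq hF (-θ)
        rw [map_neg, ← sub_eq_add_neg] at hl
        rw [hl]
      have ht : RatFunc.X - RatFunc.C θ = φ (X - C θ) := by
        rw [map_sub, RatFunc.algebraMap_X, RatFunc.algebraMap_C]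
      have e2 : 1 / (φ (X - C θ)) ^ (a - i) * (φ ((X : Polynomial F) ^ q - X)) ^ a
          = φ ((X - C θ) ^ i * ((X - C θ) ^ (q - 1) - 1) ^ a) := by
        rw [div_mul_eq_mul_div, one_mul, div_eq_iff (pow_ne_zero _ h1)]
        simp only [← map_pow, ← map_mul]
        exact congrArg φ hpoly
      rw [ht, mul_assoc, e2, ← RatFunc.algebraMap_C (f.coeff i), ← map_mul]
      congr 1
      ring
    have hstep : ∀ i ∈ Finset.range a,
        RatFunc.C (f.coeff i) * S1 F (a - i) * (φ ((X : Polynomial F) ^ q - X)) ^ a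
        = ∑ θ : F, φ (C (f.coeff i) * (X - C θ) ^ i * ((X - C θ) ^ (q - 1) - 1) ^ a) := by
      intro i hi
      rw [S1, Finset.mul_sum, Finset.sum_mul]
      apply Finset.sum_congr rfl
      intro θ _
      exact htermB θ i (Finset.mem_range.mp hi)
    rw [Finset.sum_mul]
    rw [Finset.sum_congr rfl hstep, Finset.sum_comm, MM, map_sum]
    apply Finset.sum_congr rfl
    intro θ _
    rw [← map_sum]
    congr 1
    have hcompf : f.comp (X - C θ) = ∑ i ∈ Finset.range a, C (f.coeff i) * (X - C θ) ^ i := by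
      show Polynomial.eval₂ C (X - C θ) f = _
      rw [Polynomial.eval₂_eq_sum_range' C hfnat (X - C θ)]
    rw [hcompf, Finset.sum_mul]
  apply mul_right_cancel₀ hWa
  rw [hA, hB, key]
end

section
/- Let a ≥ b ≥ 1 be integers. Then there exist integers f_0, …, f_{a−1} such that Δ(a,b) = Σ_{i=0}^{a−1} f_i · S_1(a−i) holds in F_q(t) (with the f_i understood via the canonical map ℤ → F_q(t)), and such that f_i ≡ 0 (mod p) whenever q−1 does not divide b + i. (Parity conjecture of Thakur.) -/
open Finset

private lemma pfrac (K : Type*) [Field K] :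
    ∀ n A B : ℕ, A + B ≤ n → 1 ≤ A + B →
    ∃ g h : ℕ → ℤ, ∀ u v : K, u ≠ 0 → v ≠ 0 → u - v ≠ 0 →
      (u ^ A)⁻¹ * (v ^ B)⁻¹ =
        (∑ i ∈ Finset.range A, (g i : K) * ((u - v) ^ (B + i))⁻¹ * (u ^ (A - i))⁻¹) +
        (∑ j ∈ Finset.range B, (h j : K) * ((u - v) ^ (A + j))⁻¹ * (v ^ (B - j))⁻¹) := by
  intro n
  induction n with
  | zero => intro A B h1 h2; omega
  | succ n IH =>
    intro A B hn hAB
    match A, B with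
    | 0, B =>
      have hB : 0 < B := by omega
      refine ⟨0, fun j => if j = 0 then 1 else 0, fun u v hu hv hc => ?_⟩
      rw [Finset.sum_eq_single_of_mem 0 (Finset.mem_range.mpr hB)
        (fun j _ hj => by simp [hj])]
      simp
    | A + 1, 0 =>
      refine ⟨fun i => if i = 0 then 1 else 0, 0, fun u v hu hv hc => ?_⟩
      rw [Finset.sum_eq_single_of_mem 0 (Finset.mem_range.mpr (Nat.succ_pos A))
        (fun j _ hj => by simp [hj])]
      simp
    | A + 1, B + 1 =>
      obtain ⟨g1, h1, H1⟩ := IH A (B + 1) (by omega) (by omega)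
      obtain ⟨g2, h2, H2⟩ := IH (A + 1) B (by omega) (by omega)
      refine ⟨fun i => (if i = 0 then 0 else g1 (i - 1)) - g2 i,
              fun j => h1 j - (if j = 0 then 0 else h2 (j - 1)),
              fun u v hu hv hc => ?_⟩
      have key : (u - v) * ((u ^ (A + 1))⁻¹ * (v ^ (B + 1))⁻¹) =
          (u ^ A)⁻¹ * (v ^ (B + 1))⁻¹ - (u ^ (A + 1))⁻¹ * (v ^ B)⁻¹ := by
        rw [sub_mul]
        congr 1
        · rw [pow_succ u, mul_inv]
          field_simp
        · rw [pow_succ v, mul_inv]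
          field_simp
      have hrec : (u ^ (A + 1))⁻¹ * (v ^ (B + 1))⁻¹ =
          (u - v)⁻¹ * ((u ^ A)⁻¹ * (v ^ (B + 1))⁻¹)
          - (u - v)⁻¹ * ((u ^ (A + 1))⁻¹ * (v ^ B)⁻¹) := by
        rw [← mul_sub, ← key, ← mul_assoc, inv_mul_cancel₀ hc, one_mul]
      rw [hrec, H1 u v hu hv hc, H2 u v hu hv hc]
      have hSg : ∑ i ∈ Finset.range (A + 1),
            (((if i = 0 then 0 else g1 (i - 1)) - g2 i : ℤ) : K) *
              ((u - v) ^ (B + 1 + i))⁻¹ * (u ^ (A + 1 - i))⁻¹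
          = (u - v)⁻¹ * (∑ i ∈ Finset.range A,
              (g1 i : K) * ((u - v) ^ (B + 1 + i))⁻¹ * (u ^ (A - i))⁻¹)
          - (u - v)⁻¹ * (∑ i ∈ Finset.range (A + 1),
              (g2 i : K) * ((u - v) ^ (B + i))⁻¹ * (u ^ (A + 1 - i))⁻¹) := by
        simp only [Int.cast_sub, sub_mul, Finset.sum_sub_distrib]
        congr 1
        · rw [Finset.sum_range_succ', Finset.mul_sum]
          simp only [Nat.succ_sub_succ, Nat.add_sub_cancel, Nat.succ_ne_zero, if_false,
            eq_self_iff_true, if_true, Nat.sub_zero, Int.cast_zero, zero_mul, add_zero]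
          refine Finset.sum_congr rfl fun i hi => ?_
          rw [show B + 1 + (i + 1) = (B + 1 + i) + 1 from rfl, pow_succ, mul_inv]
          ring
        · rw [Finset.mul_sum]
          refine Finset.sum_congr rfl fun i hi => ?_
          rw [show B + 1 + i = (B + i) + 1 by omega, pow_succ, mul_inv]
          ring
      have hSh : ∑ j ∈ Finset.range (B + 1),
            ((h1 j - (if j = 0 then 0 else h2 (j - 1)) : ℤ) : K) *
              ((u - v) ^ (A + 1 + j))⁻¹ * (v ^ (B + 1 - j))⁻¹
          = (u - v)⁻¹ * (∑ j ∈ Finset.range (B + 1),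
              (h1 j : K) * ((u - v) ^ (A + j))⁻¹ * (v ^ (B + 1 - j))⁻¹)
          - (u - v)⁻¹ * (∑ j ∈ Finset.range B,
              (h2 j : K) * ((u - v) ^ (A + 1 + j))⁻¹ * (v ^ (B - j))⁻¹) := by
        simp only [Int.cast_sub, sub_mul, Finset.sum_sub_distrib]
        congr 1
        · rw [Finset.mul_sum]
          refine Finset.sum_congr rfl fun j hj => ?_
          rw [show A + 1 + j = (A + j) + 1 by omega, pow_succ, mul_inv]
          ring
        · rw [Finset.sum_range_succ', Finset.mul_sum]
          simp only [Nat.succ_sub_succ, Nat.add_sub_cancel, Nat.succ_ne_zero, if_false,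
            eq_self_iff_true, if_true, Nat.sub_zero, Int.cast_zero, zero_mul, add_zero]
          refine Finset.sum_congr rfl fun j hj => ?_
          rw [show A + 1 + (j + 1) = (A + 1 + j) + 1 from rfl, pow_succ, mul_inv]
          ring
      rw [hSg, hSh]
      ring


private lemma csum0 (F : Type*) [Field F] [Fintype F] [DecidableEq F] (k : ℕ) :
    ∑ x ∈ (univ : Finset F).erase 0, (x ^ k)⁻¹ =
      if (Fintype.card F - 1) ∣ k then -1 else 0 := by
  have h1 : ∑ x ∈ (univ : Finset F).erase 0, (x ^ k)⁻¹
      = ∑ x ∈ (univ : Finset F).erase 0, x ^ k := by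
    refine Finset.sum_nbij' (fun x => x⁻¹) (fun x => x⁻¹) ?_ ?_ ?_ ?_ ?_
    · intro x hx
      simp only [Finset.mem_erase, Finset.mem_univ, and_true] at hx ⊢
      exact inv_ne_zero hx
    · intro x hx
      simp only [Finset.mem_erase, Finset.mem_univ, and_true] at hx ⊢
      exact inv_ne_zero hx
    · intro x _; exact inv_inv x
    · intro x _; exact inv_inv x
    · intro x _; simp [inv_pow]
  have h2 : (univ : Finset F).erase 0 =
      univ.map ⟨(Units.val : Fˣ → F), fun _ _ h => Units.ext h⟩ := by
    ext x
    simp only [Finset.mem_erase, Finset.mem_univ, and_true, Finset.mem_map,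
      Function.Embedding.coeFn_mk, true_and]
    constructor
    · intro hx; exact ⟨Units.mk0 x hx, rfl⟩
    · rintro ⟨u, rfl⟩; exact u.ne_zero
  rw [h1, h2, Finset.sum_map]
  exact FiniteField.sum_pow_units F k

private lemma csumC1 (F : Type*) [Field F] [Fintype F] [DecidableEq F] (θ : F) (k : ℕ) :
    ∑ η ∈ (univ : Finset F).erase θ, ((RatFunc.C (η - θ)) ^ k)⁻¹ =
      if (Fintype.card F - 1) ∣ k then -1 else 0 := by
  have h1 : ∀ η : F, ((RatFunc.C (η - θ)) ^ k)⁻¹ = RatFunc.C (((η - θ) ^ k)⁻¹) := by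
    intro η; rw [← map_pow, ← map_inv₀]
  simp only [h1]
  rw [← map_sum]
  have h2 : ∑ η ∈ (univ : Finset F).erase θ, ((η - θ) ^ k)⁻¹
      = ∑ x ∈ (univ : Finset F).erase 0, (x ^ k)⁻¹ := by
    refine Finset.sum_nbij' (fun η => η - θ) (fun x => x + θ) ?_ ?_ ?_ ?_ ?_
    · intro x hx
      simp only [Finset.mem_erase, Finset.mem_univ, and_true] at hx ⊢
      exact sub_ne_zero.mpr hx
    · intro x hx
      simp only [Finset.mem_erase, Finset.mem_univ, and_true] at hx ⊢
      exact fun h => hx (by rwa [add_eq_right] at h)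
    · intro x _; ring
    · intro x _; ring
    · intro x _; rfl
  rw [h2, csum0]
  split_ifs <;> simp

private lemma csumC2 (F : Type*) [Field F] [Fintype F] [DecidableEq F] (η : F) (k : ℕ) :
    ∑ θ ∈ (univ : Finset F).erase η, ((RatFunc.C (η - θ)) ^ k)⁻¹ =
      if (Fintype.card F - 1) ∣ k then -1 else 0 := by
  have h1 : ∀ θ : F, ((RatFunc.C (η - θ)) ^ k)⁻¹ = RatFunc.C (((η - θ) ^ k)⁻¹) := by
    intro θ; rw [← map_pow, ← map_inv₀]
  simp only [h1]
  rw [← map_sum]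
  have h2 : ∑ θ ∈ (univ : Finset F).erase η, ((η - θ) ^ k)⁻¹
      = ∑ x ∈ (univ : Finset F).erase 0, (x ^ k)⁻¹ := by
    refine Finset.sum_nbij' (fun θ => η - θ) (fun x => η - x) ?_ ?_ ?_ ?_ ?_
    · intro x hx
      simp only [Finset.mem_erase, Finset.mem_univ, and_true] at hx ⊢
      intro h; apply hx; rw [sub_eq_zero] at h; exact h.symm
    · intro x hx
      simp only [Finset.mem_erase, Finset.mem_univ, and_true] at hx ⊢
      exact fun h => hx (sub_eq_self.mp h)
    · intro x _; ring
    · intro x _; ring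
    · intro x _; rfl
  rw [h2, csum0]
  split_ifs <;> simp

/-- Parity conjecture of Thakur. -/
theorem stmt4 (p s q : ℕ) (hp : p.Prime) (hs : 1 ≤ s) (hq : q = p ^ s)
    (F : Type*) [Field F] [Fintype F] (hF : Fintype.card F = q)
    (a b : ℕ) (hb : 1 ≤ b) (hab : b ≤ a) :
    ∃ f : ℕ → ℤ,
      Delta F a b = ∑ i ∈ Finset.range a, ((f i : ℤ) : RatFunc F) * S1 F (a - i) ∧
      ∀ i < a, ¬ (q - 1) ∣ (b + i) → (p : ℤ) ∣ f i := by
  classical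
  obtain ⟨g, h, key⟩ := pfrac (RatFunc F) (a + b) a b le_rfl (by omega)
  refine ⟨fun i => if (q - 1) ∣ (b + i) then
      -g i - (if a - b ≤ i then h (i - (a - b)) else 0) else 0, ?_, ?_⟩
  swap
  · intro i _ hnd
    simp only [hnd, if_false]
    exact dvd_zero _
  have csumC1' := fun (θ : F) (k : ℕ) => csumC1 F θ k
  have csumC2' := fun (η : F) (k : ℕ) => csumC2 F η k
  classical
  have hQ : Fintype.card F - 1 = q - 1 := by rw [hF]
  have hu0 : ∀ θ : F, (RatFunc.X - RatFunc.C θ : RatFunc F) ≠ 0 := fun θ => by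
    rw [← RatFunc.algebraMap_X, ← RatFunc.algebraMap_C, ← map_sub]
    exact RatFunc.algebraMap_ne_zero (Polynomial.X_sub_C_ne_zero θ)
  have hS1 : ∀ k : ℕ, S1 F k = ∑ θ : F, ((RatFunc.X - RatFunc.C θ) ^ k)⁻¹ := by
    intro k; unfold S1; simp [one_div]
  have expand : Delta F a b = ∑ θ : F, ∑ η ∈ (univ : Finset F).erase θ,
      ((RatFunc.X - RatFunc.C θ) ^ a)⁻¹ * ((RatFunc.X - RatFunc.C η) ^ b)⁻¹ := by
    rw [Delta, hS1 a, hS1 b, hS1 (a + b), Finset.sum_mul_sum, ← Finset.sum_sub_distrib]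
    refine Finset.sum_congr rfl fun θ _ => ?_
    rw [← Finset.add_sum_erase _ _ (Finset.mem_univ θ), pow_add, mul_inv]
    exact add_sub_cancel_left _ _
  have expand2 : Delta F a b = ∑ θ : F, ∑ η ∈ (univ : Finset F).erase θ,
      ((∑ i ∈ Finset.range a, (g i : RatFunc F) * ((RatFunc.C (η - θ)) ^ (b + i))⁻¹ *
          ((RatFunc.X - RatFunc.C θ) ^ (a - i))⁻¹) +
       (∑ j ∈ Finset.range b, (h j : RatFunc F) * ((RatFunc.C (η - θ)) ^ (a + j))⁻¹ *
          ((RatFunc.X - RatFunc.C η) ^ (b - j))⁻¹)) := by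
    rw [expand]
    refine Finset.sum_congr rfl fun θ _ => Finset.sum_congr rfl fun η hη => ?_
    have hne : η ≠ θ := (Finset.mem_erase.mp hη).1
    have hsub : (RatFunc.X - RatFunc.C θ) - (RatFunc.X - RatFunc.C η) = RatFunc.C (η - θ) := by
      rw [map_sub]; ring
    have hc : (RatFunc.X - RatFunc.C θ) - (RatFunc.X - RatFunc.C η) ≠ 0 := by
      rw [hsub]
      simp only [ne_eq, map_eq_zero, sub_eq_zero]
      exact hne
    rw [key _ _ (hu0 θ) (hu0 η) hc, hsub]
  have partI : ∑ θ : F, ∑ η ∈ (univ : Finset F).erase θ,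
        ∑ i ∈ Finset.range a, (g i : RatFunc F) * ((RatFunc.C (η - θ)) ^ (b + i))⁻¹ *
          ((RatFunc.X - RatFunc.C θ) ^ (a - i))⁻¹
      = ∑ i ∈ Finset.range a, (g i : RatFunc F) *
          (if (q - 1) ∣ (b + i) then -1 else 0) * S1 F (a - i) := by
    calc ∑ θ : F, ∑ η ∈ (univ : Finset F).erase θ, ∑ i ∈ Finset.range a,
            (g i : RatFunc F) * ((RatFunc.C (η - θ)) ^ (b + i))⁻¹ *
              ((RatFunc.X - RatFunc.C θ) ^ (a - i))⁻¹
        = ∑ θ : F, ∑ i ∈ Finset.range a, ∑ η ∈ (univ : Finset F).erase θ,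
            (g i : RatFunc F) * ((RatFunc.C (η - θ)) ^ (b + i))⁻¹ *
              ((RatFunc.X - RatFunc.C θ) ^ (a - i))⁻¹ :=
          Finset.sum_congr rfl fun θ _ => Finset.sum_comm
      _ = ∑ θ : F, ∑ i ∈ Finset.range a, (g i : RatFunc F) *
            ((RatFunc.X - RatFunc.C θ) ^ (a - i))⁻¹ *
            (if (q - 1) ∣ (b + i) then -1 else 0) := by
          refine Finset.sum_congr rfl fun θ _ => Finset.sum_congr rfl fun i _ => ?_
          rw [show ∑ η ∈ (univ : Finset F).erase θ,
                (g i : RatFunc F) * ((RatFunc.C (η - θ)) ^ (b + i))⁻¹ *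
                  ((RatFunc.X - RatFunc.C θ) ^ (a - i))⁻¹
              = (g i : RatFunc F) * ((RatFunc.X - RatFunc.C θ) ^ (a - i))⁻¹ *
                  ∑ η ∈ (univ : Finset F).erase θ, ((RatFunc.C (η - θ)) ^ (b + i))⁻¹ by
            rw [Finset.mul_sum]; exact Finset.sum_congr rfl fun η _ => by ring]
          rw [csumC1' θ (b + i), hQ]
      _ = ∑ i ∈ Finset.range a, ∑ θ : F, (g i : RatFunc F) *
            ((RatFunc.X - RatFunc.C θ) ^ (a - i))⁻¹ *
            (if (q - 1) ∣ (b + i) then -1 else 0) := Finset.sum_comm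
      _ = ∑ i ∈ Finset.range a, (g i : RatFunc F) *
            (if (q - 1) ∣ (b + i) then -1 else 0) * S1 F (a - i) := by
          refine Finset.sum_congr rfl fun i _ => ?_
          rw [hS1 (a - i), Finset.mul_sum]
          exact Finset.sum_congr rfl fun θ _ => by ring
  have partII : ∑ θ : F, ∑ η ∈ (univ : Finset F).erase θ,
        ∑ j ∈ Finset.range b, (h j : RatFunc F) * ((RatFunc.C (η - θ)) ^ (a + j))⁻¹ *
          ((RatFunc.X - RatFunc.C η) ^ (b - j))⁻¹
      = ∑ j ∈ Finset.range b, (h j : RatFunc F) *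
          (if (q - 1) ∣ (a + j) then -1 else 0) * S1 F (b - j) := by
    rw [Finset.sum_comm' (s := (univ : Finset F)) (t := fun θ => (univ : Finset F).erase θ)
      (t' := (univ : Finset F)) (s' := fun η => (univ : Finset F).erase η) (fun x y => by
      simp only [Finset.mem_univ, true_and, and_true, Finset.mem_erase]
      exact ne_comm)]
    calc ∑ η : F, ∑ θ ∈ (univ : Finset F).erase η, ∑ j ∈ Finset.range b,
            (h j : RatFunc F) * ((RatFunc.C (η - θ)) ^ (a + j))⁻¹ *
              ((RatFunc.X - RatFunc.C η) ^ (b - j))⁻¹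
        = ∑ η : F, ∑ j ∈ Finset.range b, ∑ θ ∈ (univ : Finset F).erase η,
            (h j : RatFunc F) * ((RatFunc.C (η - θ)) ^ (a + j))⁻¹ *
              ((RatFunc.X - RatFunc.C η) ^ (b - j))⁻¹ :=
          Finset.sum_congr rfl fun η _ => Finset.sum_comm
      _ = ∑ η : F, ∑ j ∈ Finset.range b, (h j : RatFunc F) *
            ((RatFunc.X - RatFunc.C η) ^ (b - j))⁻¹ *
            (if (q - 1) ∣ (a + j) then -1 else 0) := by
          refine Finset.sum_congr rfl fun η _ => Finset.sum_congr rfl fun j _ => ?_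
          rw [show ∑ θ ∈ (univ : Finset F).erase η,
                (h j : RatFunc F) * ((RatFunc.C (η - θ)) ^ (a + j))⁻¹ *
                  ((RatFunc.X - RatFunc.C η) ^ (b - j))⁻¹
              = (h j : RatFunc F) * ((RatFunc.X - RatFunc.C η) ^ (b - j))⁻¹ *
                  ∑ θ ∈ (univ : Finset F).erase η, ((RatFunc.C (η - θ)) ^ (a + j))⁻¹ by
            rw [Finset.mul_sum]; exact Finset.sum_congr rfl fun θ _ => by ring]
          rw [csumC2' η (a + j), hQ]
      _ = ∑ j ∈ Finset.range b, ∑ η : F, (h j : RatFunc F) *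
            ((RatFunc.X - RatFunc.C η) ^ (b - j))⁻¹ *
            (if (q - 1) ∣ (a + j) then -1 else 0) := Finset.sum_comm
      _ = ∑ j ∈ Finset.range b, (h j : RatFunc F) *
            (if (q - 1) ∣ (a + j) then -1 else 0) * S1 F (b - j) := by
          refine Finset.sum_congr rfl fun j _ => ?_
          rw [hS1 (b - j), Finset.mul_sum]
          exact Finset.sum_congr rfl fun η _ => by ring
  have partII2 : (∑ i ∈ Finset.range a, if a - b ≤ i then
        (h (i - (a - b)) : RatFunc F) * (if (q - 1) ∣ (b + i) then -1 else 0) * S1 F (a - i)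
        else 0)
      = ∑ j ∈ Finset.range b, (h j : RatFunc F) *
          (if (q - 1) ∣ (a + j) then -1 else 0) * S1 F (b - j) := by
    rw [← Finset.sum_filter]
    have hfil : (Finset.range a).filter (fun i => a - b ≤ i) = Finset.Ico (a - b) a := by
      ext i
      simp only [Finset.mem_filter, Finset.mem_range, Finset.mem_Ico]
      omega
    rw [hfil, Finset.sum_Ico_eq_sum_range, show a - (a - b) = b by omega]
    refine Finset.sum_congr rfl fun j hj => ?_
    have hj' : j < b := Finset.mem_range.mp hj
    rw [show a - b + j - (a - b) = j by omega, show b + (a - b + j) = a + j by omega,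
      show a - (a - b + j) = b - j by omega]
  rw [expand2]
  simp only [Finset.sum_add_distrib]
  rw [partI, partII, ← partII2, ← Finset.sum_add_distrib]
  refine Finset.sum_congr rfl fun i hi => ?_
  by_cases hd : (q - 1) ∣ (b + i)
  · by_cases hle : a - b ≤ i
    · simp only [hd, hle, if_true]
      push_cast
      ring
    · simp only [hd, hle, if_true, if_false]
      push_cast
      ring
  · simp [hd]
end

section
/- Let a, b be positive integers and let m be the smallest nonnegative integer with a + b ≤ p^m. For a positive integer c ≤ p^m define P_c(t) = −(t^{q−1} − 1)^{p^m − c} · Σ_{θ ∈ F_q, θ ≠ 0} ((t+θ)^{q−1} − 1)^c ∈ F_q[t], and let H_{c,d}(t) be the polynomial obtained by taking the remainder of P_c(t) on division by t^{c+d} and then dividing by t^c (this remainder is divisible by t^c). Then Δ(a,b) = Σ_{i=0}^{b−1} f_i · S_1(b−i) + Σ_{j=0}^{a−1} g_j · S_1(a−j) holds in F_q(t), where f_i is the coefficient of t^i in H_{a,b}(t) and g_j is the coefficient of t^j in H_{b,a}(t). -/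
open Finset Polynomial

/-- `P_c(t) = −(t^{q−1} − 1)^{p^m − c} · Σ_{θ ∈ F_q, θ ≠ 0} ((t+θ)^{q−1} − 1)^c`. -/
noncomputable def Ppoly (F : Type*) [Field F] [Fintype F] [DecidableEq F]
    (p m q c : ℕ) : Polynomial F :=
  -((X ^ (q - 1) - 1) ^ (p ^ m - c) *
    ∑ θ ∈ Finset.univ.filter (fun θ : F => θ ≠ 0), ((X + C θ) ^ (q - 1) - 1) ^ c)

/-- `H_{c,d}(t)` : the remainder of `P_c(t)` on division by `t^{c+d}`, divided by `t^c`. -/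
noncomputable def Hpoly (F : Type*) [Field F] [Fintype F] [DecidableEq F]
    (p m q c d : ℕ) : Polynomial F :=
  (Ppoly F p m q c %ₘ X ^ (c + d)) /ₘ X ^ c

/-- Truncation (below degree `d`) of the power series inverse of `(X + C u)^c`. -/
noncomputable def Etr (F : Type*) [Field F] (c d : ℕ) (u : F) : Polynomial F :=
  PowerSeries.trunc d ((((X + C u : Polynomial F) : PowerSeries F))⁻¹ ^ c)

set_option linter.unusedSectionVars false

section Aux

variable {F : Type*} [Field F]

lemma Etr_degree (c d : ℕ) (u : F) : (Etr F c d u).degree < (d : WithBot ℕ) :=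
  PowerSeries.degree_trunc_lt _ _

lemma Etr_mul_dvd {u : F} (hu : u ≠ 0) (c d : ℕ) :
    (X : Polynomial F) ^ d ∣ Etr F c d u * (X + C u) ^ c - 1 := by
  set g : PowerSeries F := ((X + C u : Polynomial F) : PowerSeries F) with hgdef
  have hg0 : PowerSeries.constantCoeff g ≠ 0 := by
    simpa [hgdef, Polynomial.constantCoeff_coe] using hu
  have hg : g⁻¹ ^ c * g ^ c = 1 := by
    rw [← mul_pow, PowerSeries.inv_mul_cancel g hg0, one_pow]
  rw [Polynomial.X_pow_dvd_iff]
  intro i hi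
  have h1 : (Etr F c d u * (X + C u) ^ c).coeff i
      = PowerSeries.coeff i (g⁻¹ ^ c * g ^ c) := by
    rw [Polynomial.coeff_mul, PowerSeries.coeff_mul]
    refine Finset.sum_congr rfl fun jk hjk => ?_
    rw [Finset.HasAntidiagonal.mem_antidiagonal] at hjk
    have hj : jk.1 < d := lt_of_le_of_lt (le_trans (Nat.le_add_right _ _) hjk.le) hi
    congr 1
    · rw [Etr, PowerSeries.coeff_trunc, if_pos hj]
    · rw [← Polynomial.coeff_coe, Polynomial.coe_pow]
  rw [Polynomial.coeff_sub, h1, hg]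
  simp [Polynomial.coeff_one, PowerSeries.coeff_one]

lemma isCoprime_X_pow_add {u : F} (hu : u ≠ 0) (n k : ℕ) :
    IsCoprime ((X : Polynomial F) ^ n) ((X + C u) ^ k) := by
  apply IsCoprime.pow
  have h : (C u⁻¹ : Polynomial F) * C u = 1 := by
    rw [← C_mul, inv_mul_cancel₀ hu, C_1]
  exact ⟨-(C u⁻¹), C u⁻¹, by linear_combination h⟩

/-- Core partial-fraction polynomial identity. -/
lemma key_identity {u : F} (hu : u ≠ 0) {a b : ℕ} (ha : 0 < a) (hb : 0 < b) :
    Etr F a b u * (X + C u) ^ a + (Etr F b a (-u)).comp (X + C u) * X ^ b = 1 := by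
  set P : Polynomial F :=
    Etr F a b u * (X + C u) ^ a + (Etr F b a (-u)).comp (X + C u) * X ^ b - 1 with hPdef
  have h1 : (X : Polynomial F) ^ b ∣ P := by
    have hd := Etr_mul_dvd hu a b
    have h2 : P = (Etr F a b u * (X + C u) ^ a - 1)
        + (Etr F b a (-u)).comp (X + C u) * X ^ b := by ring
    rw [h2]; exact dvd_add hd (dvd_mul_left _ _)
  have h2 : ((X + C u) ^ a : Polynomial F) ∣ P := by
    have hcomp : P.comp (X - C u) = (Etr F a b u).comp (X - C u) * X ^ a
        + Etr F b a (-u) * (X + C (-u)) ^ b - 1 := by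
      simp [hPdef, sub_comp, add_comp, mul_comp, pow_comp, X_comp, C_comp, one_comp,
        comp_assoc, sub_add_cancel, C_neg]
      left; ring
    have h3 : (X : Polynomial F) ^ a ∣ P.comp (X - C u) := by
      have hd := Etr_mul_dvd (neg_ne_zero.mpr hu) b a
      have h4 : P.comp (X - C u) = (Etr F b a (-u) * (X + C (-u)) ^ b - 1)
          + (Etr F a b u).comp (X - C u) * X ^ a := by rw [hcomp]; ring
      rw [h4]; exact dvd_add hd (dvd_mul_left _ _)
    obtain ⟨k, hk⟩ := h3
    refine ⟨k.comp (X + C u), ?_⟩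
    have := congrArg (fun f : Polynomial F => f.comp (X + C u)) hk
    simpa [comp_assoc, mul_comp, pow_comp, X_comp, C_comp, sub_add_cancel, comp_X] using this
  have hdvd : (X : Polynomial F) ^ b * (X + C u) ^ a ∣ P :=
    (isCoprime_X_pow_add hu b a).mul_dvd h1 h2
  have hdegP : P.degree < ((b : WithBot ℕ) + (a : WithBot ℕ)) := by
    have hb0 : (0 : WithBot ℕ) < (b : WithBot ℕ) := by exact_mod_cast hb
    have ha0 : (0 : WithBot ℕ) < (a : WithBot ℕ) := by exact_mod_cast ha
    have hT1 : (Etr F a b u * (X + C u) ^ a).degree < (b : WithBot ℕ) + (a : WithBot ℕ) := by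
      rw [degree_mul, degree_pow, degree_X_add_C]
      calc (Etr F a b u).degree + a • (1 : WithBot ℕ)
          = (Etr F a b u).degree + (a : WithBot ℕ) := by norm_num
        _ < (b : WithBot ℕ) + (a : WithBot ℕ) :=
            WithBot.add_lt_add_right (by exact_mod_cast WithBot.coe_ne_bot) (Etr_degree a b u)
    have hT2 : ((Etr F b a (-u)).comp (X + C u) * X ^ b).degree
        < (b : WithBot ℕ) + (a : WithBot ℕ) := by
      rw [degree_mul, degree_pow, degree_X]
      have hE : ((Etr F b a (-u)).comp (X + C u)).degree < (a : WithBot ℕ) := by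
        rcases eq_or_ne (Etr F b a (-u)) 0 with h0 | h0
        · simp only [h0, zero_comp, degree_zero]
          exact WithBot.bot_lt_coe a
        · have := Polynomial.natDegree_comp (p := Etr F b a (-u)) (q := X + C u)
          have hlt : (Etr F b a (-u)).natDegree < a := by
            have := Etr_degree b a (-u)
            exact (Polynomial.natDegree_lt_iff_degree_lt h0).mpr (by exact_mod_cast this)
          calc ((Etr F b a (-u)).comp (X + C u)).degree
              ≤ (((Etr F b a (-u)).comp (X + C u)).natDegree : WithBot ℕ) :=
                Polynomial.degree_le_natDegree
            _ < (a : WithBot ℕ) := by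
                rw [this, Polynomial.natDegree_X_add_C, mul_one]
                exact_mod_cast hlt
      calc ((Etr F b a (-u)).comp (X + C u)).degree + b • (1 : WithBot ℕ)
          = ((Etr F b a (-u)).comp (X + C u)).degree + (b : WithBot ℕ) := by norm_num
        _ < (a : WithBot ℕ) + (b : WithBot ℕ) :=
            WithBot.add_lt_add_right (by exact_mod_cast WithBot.coe_ne_bot) hE
        _ = (b : WithBot ℕ) + (a : WithBot ℕ) := add_comm _ _
    have h1deg : (1 : Polynomial F).degree < (b : WithBot ℕ) + (a : WithBot ℕ) := by
      rw [degree_one]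
      calc (0 : WithBot ℕ) < (b : WithBot ℕ) := hb0
        _ ≤ (b : WithBot ℕ) + (a : WithBot ℕ) := le_add_of_nonneg_right ha0.le
    calc P.degree ≤ max ((Etr F a b u * (X + C u) ^ a
          + (Etr F b a (-u)).comp (X + C u) * X ^ b).degree) ((1 : Polynomial F).degree) :=
        Polynomial.degree_sub_le _ _
      _ ≤ max (max (Etr F a b u * (X + C u) ^ a).degree
            (((Etr F b a (-u)).comp (X + C u) * X ^ b).degree)) ((1 : Polynomial F).degree) :=
        max_le_max (Polynomial.degree_add_le _ _) le_rfl
      _ < (b : WithBot ℕ) + (a : WithBot ℕ) := by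
        rw [max_lt_iff, max_lt_iff]
        exact ⟨⟨hT1, hT2⟩, h1deg⟩
  have hP0 : P = 0 := by
    apply Polynomial.eq_zero_of_dvd_of_degree_lt hdvd
    rw [degree_mul, degree_pow, degree_pow, degree_X, degree_X_add_C]
    simpa using hdegP
  exact sub_eq_zero.mp hP0

end Aux

section HSide

variable {F : Type*} [Field F] [Fintype F] [DecidableEq F]

lemma charF (p s q : ℕ) (hp : p.Prime) (hs : 1 ≤ s) (hq : q = p ^ s)
    (hF : Fintype.card F = q) : CharP F p := by
  have hring : CharP F (ringChar F) := ringChar.charP F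
  obtain ⟨n, hrp, hcard⟩ := FiniteField.card F (ringChar F)
  have hpr : p = ringChar F := by
    have h1 : p ∣ ringChar F ^ (n : ℕ) := by
      rw [← hcard, hF, hq]
      exact dvd_pow_self p (by omega)
    exact (Nat.prime_dvd_prime_iff_eq hp hrp).mp (hp.dvd_of_dvd_pow h1)
  exact hpr ▸ hring

/-- The remainder of `P_c` mod `X^{c+d}` is `X^c` times the sum of truncated inverses. -/
lemma Ppoly_modByMonic (p s q : ℕ) (hp : p.Prime) (hs : 1 ≤ s) (hq : q = p ^ s)
    (hF : Fintype.card F = q) (m c d : ℕ) (hc : 0 < c) (hd : 0 < d)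
    (hcd : c + d ≤ p ^ m) :
    Ppoly F p m q c %ₘ X ^ (c + d) =
      X ^ c * ∑ u ∈ Finset.univ.filter (fun u : F => u ≠ 0), Etr F c d u := by
  haveI : CharP F p := charF p s q hp hs hq hF
  haveI : Fact p.Prime := ⟨hp⟩
  have hq2 : 2 ≤ q := by
    rw [hq]
    calc 2 ≤ p := hp.two_le
      _ ≤ p ^ s := Nat.le_self_pow (by omega) p
  set A : Polynomial F := X ^ (q - 1) - 1 with hAdef
  set T : Polynomial F := ∑ u ∈ Finset.univ.filter (fun u : F => u ≠ 0), Etr F c d u with hTdef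
  have hxq : ∀ θ : F, ((X + C θ : Polynomial F) ^ (q - 1) - 1) * (X + C θ) = X * A := by
    intro θ
    have h1 : (X + C θ : Polynomial F) ^ q = X ^ q + C θ := by
      rw [hq, add_pow_char_pow, ← C_pow, ← hq, ← hF, FiniteField.pow_card]
    have hq1 : q - 1 + 1 = q := by omega
    have h2 : (X : Polynomial F) * X ^ (q - 1) = X ^ q := by
      rw [← pow_succ', hq1]
    calc ((X + C θ : Polynomial F) ^ (q - 1) - 1) * (X + C θ)
        = (X + C θ) ^ (q - 1) * (X + C θ) - (X + C θ) := by ring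
      _ = (X + C θ) ^ q - (X + C θ) := by rw [← pow_succ, hq1]
      _ = X ^ q - X := by rw [h1]; ring
      _ = X * A := by rw [hAdef, mul_sub, mul_one, h2]
  have hApm : (A : Polynomial F) ^ p ^ m = X ^ ((q - 1) * p ^ m) - 1 := by
    rw [hAdef, sub_pow_char_pow, one_pow, ← pow_mul]
  have hdle : d ≤ (q - 1) * p ^ m := by
    calc d ≤ c + d := le_add_self
      _ ≤ p ^ m := hcd
      _ ≤ (q - 1) * p ^ m := Nat.le_mul_of_pos_left _ (by omega)
  have hkey : ∀ θ ∈ Finset.univ.filter (fun θ : F => θ ≠ 0),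
      (X : Polynomial F) ^ (c + d) ∣
        A ^ (p ^ m - c) * ((X + C θ) ^ (q - 1) - 1) ^ c + X ^ c * Etr F c d θ := by
    intro θ hθ
    have hθ0 : θ ≠ 0 := by simpa using hθ
    apply (isCoprime_X_pow_add hθ0 (c + d) c).dvd_of_dvd_mul_right
    have expand : (A ^ (p ^ m - c) * ((X + C θ) ^ (q - 1) - 1) ^ c + X ^ c * Etr F c d θ)
          * (X + C θ) ^ c
        = X ^ c * ((Etr F c d θ * (X + C θ) ^ c - 1) + X ^ ((q - 1) * p ^ m)) := by
      have h7 : (((X + C θ : Polynomial F) ^ (q - 1) - 1)) ^ c * (X + C θ) ^ c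
          = X ^ c * A ^ c := by
        rw [← mul_pow, hxq θ, mul_pow]
      have h6 : (A : Polynomial F) ^ (p ^ m - c) * A ^ c = A ^ p ^ m := by
        rw [← pow_add]
        congr 1
        omega
      calc (A ^ (p ^ m - c) * ((X + C θ) ^ (q - 1) - 1) ^ c + X ^ c * Etr F c d θ)
            * (X + C θ) ^ c
          = A ^ (p ^ m - c) * (((X + C θ) ^ (q - 1) - 1) ^ c * (X + C θ) ^ c)
            + X ^ c * (Etr F c d θ * (X + C θ) ^ c) := by ring
        _ = A ^ (p ^ m - c) * (X ^ c * A ^ c)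
            + X ^ c * (Etr F c d θ * (X + C θ) ^ c) := by rw [h7]
        _ = X ^ c * (A ^ (p ^ m - c) * A ^ c + Etr F c d θ * (X + C θ) ^ c) := by ring
        _ = X ^ c * ((Etr F c d θ * (X + C θ) ^ c - 1) + X ^ ((q - 1) * p ^ m)) := by
            rw [h6, hApm]; ring
    rw [expand, pow_add]
    exact mul_dvd_mul dvd_rfl
      (dvd_add (Etr_mul_dvd hθ0 c d) (pow_dvd_pow X hdle))
  obtain ⟨K, hK⟩ : (X : Polynomial F) ^ (c + d) ∣ Ppoly F p m q c - X ^ c * T := by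
    have hsum : Ppoly F p m q c - X ^ c * T =
        -∑ θ ∈ Finset.univ.filter (fun θ : F => θ ≠ 0),
          (A ^ (p ^ m - c) * ((X + C θ) ^ (q - 1) - 1) ^ c + X ^ c * Etr F c d θ) := by
      rw [Ppoly, hTdef, Finset.sum_add_distrib, neg_add, Finset.mul_sum, Finset.mul_sum]
      ring
    rw [hsum]
    exact dvd_neg.mpr (Finset.dvd_sum hkey)
  have hTdeg : T.degree < (d : WithBot ℕ) := by
    refine lt_of_le_of_lt (Polynomial.degree_sum_le _ _) ?_
    refine (Finset.sup_lt_iff (WithBot.bot_lt_coe d)).mpr fun u _ => Etr_degree c d u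
  have hdeg : (X ^ c * T : Polynomial F).degree < (X ^ (c + d) : Polynomial F).degree := by
    rw [degree_mul, degree_X_pow, degree_X_pow]
    calc (c : WithBot ℕ) + T.degree < (c : WithBot ℕ) + (d : WithBot ℕ) :=
        WithBot.add_lt_add_left (by exact_mod_cast WithBot.coe_ne_bot) hTdeg
      _ = ((c + d : ℕ) : WithBot ℕ) := by push_cast; rfl
  exact (Polynomial.div_modByMonic_unique K (X ^ c * T) (monic_X_pow (c + d))
    ⟨by linear_combination -hK, hdeg⟩).2

lemma Hpoly_eq (p s q : ℕ) (hp : p.Prime) (hs : 1 ≤ s) (hq : q = p ^ s)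
    (hF : Fintype.card F = q) (m c d : ℕ) (hc : 0 < c) (hd : 0 < d)
    (hcd : c + d ≤ p ^ m) :
    Hpoly F p m q c d = ∑ u ∈ Finset.univ.filter (fun u : F => u ≠ 0), Etr F c d u := by
  rw [Hpoly, Ppoly_modByMonic p s q hp hs hq hF m c d hc hd hcd,
    Polynomial.mul_divByMonic_cancel_left _ (monic_X_pow c)]

end HSide

section DeltaSide

variable {F : Type*} [Field F] [Fintype F] [DecidableEq F]

lemma X_sub_C_ne (θ : F) : (RatFunc.X - RatFunc.C θ) ≠ 0 := by
  have : RatFunc.X - RatFunc.C θ = algebraMap (Polynomial F) (RatFunc F) (X - C θ) := by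
    rw [map_sub, RatFunc.algebraMap_X, RatFunc.algebraMap_C]
  rw [this]
  exact RatFunc.algebraMap_ne_zero (X_sub_C_ne_zero θ)

lemma aeval_low {d : ℕ} (hd : 0 < d) (f : Polynomial F) (hf : f.degree < (d : WithBot ℕ))
    (x : RatFunc F) (hx : x ≠ 0) :
    (aeval x f) / x ^ d = ∑ i ∈ Finset.range d, RatFunc.C (f.coeff i) * (1 / x ^ (d - i)) := by
  have hnd : f.natDegree < d := by
    rcases eq_or_ne f 0 with h0 | h0
    · simpa [h0] using hd
    · exact (Polynomial.natDegree_lt_iff_degree_lt h0).mpr (by exact_mod_cast hf)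
  rw [Polynomial.aeval_eq_sum_range' hnd, Finset.sum_div]
  refine Finset.sum_congr rfl fun i hi => ?_
  rw [Finset.mem_range] at hi
  have hxi : x ^ d = x ^ i * x ^ (d - i) := by rw [← pow_add]; congr 1; omega
  rw [Algebra.smul_def, hxi]
  rw [RatFunc.algebraMap_eq_C]
  field_simp

/-- Partial fraction decomposition of `1/((X−θ)^a (X−η)^b)`. -/
lemma partial_fraction {θ η : F} (hne : θ ≠ η) {a b : ℕ} (ha : 0 < a) (hb : 0 < b) :
    1 / ((RatFunc.X - RatFunc.C θ) ^ a * (RatFunc.X - RatFunc.C η) ^ b) =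
      (∑ i ∈ Finset.range b,
        RatFunc.C ((Etr F a b (η - θ)).coeff i) * (1 / (RatFunc.X - RatFunc.C η) ^ (b - i))) +
      (∑ j ∈ Finset.range a,
        RatFunc.C ((Etr F b a (θ - η)).coeff j) * (1 / (RatFunc.X - RatFunc.C θ) ^ (a - j))) := by
  set u : F := η - θ with hu
  have hu0 : u ≠ 0 := sub_ne_zero.mpr (Ne.symm hne)
  set x : RatFunc F := RatFunc.X - RatFunc.C η with hx
  set y : RatFunc F := RatFunc.X - RatFunc.C θ with hy
  have hx0 : x ≠ 0 := X_sub_C_ne η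
  have hy0 : y ≠ 0 := X_sub_C_ne θ
  have hxy : x + RatFunc.C u = y := by
    rw [hx, hy, hu]
    rw [map_sub]
    ring
  have hkey := congrArg (aeval x) (key_identity hu0 ha hb)
  rw [map_add, map_mul, map_mul, map_pow, map_pow, Polynomial.aeval_comp] at hkey
  have haX : aeval x (X + C u : Polynomial F) = y := by
    rw [map_add, Polynomial.aeval_X, Polynomial.aeval_C, RatFunc.algebraMap_eq_C, hxy]
  rw [haX, Polynomial.aeval_X, map_one] at hkey
  have hmain : 1 / (y ^ a * x ^ b)
      = (aeval x (Etr F a b u)) / x ^ b + (aeval y (Etr F b a (-u))) / y ^ a := by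
    rw [div_add_div _ _ (pow_ne_zero _ hx0) (pow_ne_zero _ hy0),
      div_eq_div_iff (mul_ne_zero (pow_ne_zero _ hy0) (pow_ne_zero _ hx0))
        (mul_ne_zero (pow_ne_zero _ hx0) (pow_ne_zero _ hy0))]
    linear_combination -(x ^ b * y ^ a) * hkey
  have hnegu : -u = θ - η := by rw [hu]; ring
  rw [hmain, aeval_low hb (Etr F a b u) (Etr_degree a b u) x hx0,
    aeval_low ha (Etr F b a (-u)) (Etr_degree b a (-u)) y hy0, hnegu]

lemma Delta_eq_sum (a b : ℕ) :
    Delta F a b = ∑ θ : F, ∑ η ∈ Finset.univ.erase θ,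
      1 / ((RatFunc.X - RatFunc.C θ) ^ a * (RatFunc.X - RatFunc.C η) ^ b) := by
  have hterm : ∀ θ η : F, (1 / (RatFunc.X - RatFunc.C θ) ^ a) * (1 / (RatFunc.X - RatFunc.C η) ^ b)
      = 1 / ((RatFunc.X - RatFunc.C θ) ^ a * (RatFunc.X - RatFunc.C η) ^ b) := fun _ _ => by
    rw [div_mul_div_comm, one_mul]
  rw [Delta, S1, S1, S1, Finset.sum_mul_sum, ← Finset.sum_sub_distrib]
  refine Finset.sum_congr rfl fun θ _ => ?_
  rw [← Finset.add_sum_erase _ _ (Finset.mem_univ θ), hterm θ θ, ← pow_add,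
    add_sub_cancel_left]
  exact Finset.sum_congr rfl fun η _ => hterm θ η

lemma sum_sub_reindex {M : Type*} [AddCommMonoid M] (w : F) (g : F → M) :
    ∑ η ∈ Finset.univ.erase w, g (w - η)
      = ∑ v ∈ Finset.univ.filter (fun v : F => v ≠ 0), g v := by
  refine Finset.sum_nbij' (fun η => w - η) (fun v => w - v) ?_ ?_ ?_ ?_ ?_
  · intro η hη
    rw [Finset.mem_erase] at hη
    simp only [Finset.mem_filter, Finset.mem_univ, true_and]
    exact sub_ne_zero.mpr (Ne.symm hη.1)
  · intro v hv
    simp only [Finset.mem_filter, Finset.mem_univ, true_and] at hv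
    rw [Finset.mem_erase]
    exact ⟨by rw [Ne, sub_eq_self]; exact hv, Finset.mem_univ _⟩
  · intro η _
    exact sub_sub_cancel w η
  · intro v _
    exact sub_sub_cancel w v
  · intro η _
    rfl

lemma sum_erase_comm {M : Type*} [AddCommGroup M] (G : F → F → M) :
    ∑ θ : F, ∑ η ∈ Finset.univ.erase θ, G θ η
      = ∑ η : F, ∑ θ ∈ Finset.univ.erase η, G θ η := by
  have h1 : ∀ θ : F, ∑ η ∈ Finset.univ.erase θ, G θ η
      = (∑ η : F, G θ η) - G θ θ := fun θ => Finset.sum_erase_eq_sub (Finset.mem_univ θ)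
  have h2 : ∀ η : F, ∑ θ ∈ Finset.univ.erase η, G θ η
      = (∑ θ : F, G θ η) - G η η := fun η => Finset.sum_erase_eq_sub (Finset.mem_univ η)
  calc ∑ θ : F, ∑ η ∈ Finset.univ.erase θ, G θ η
      = ∑ θ : F, ((∑ η : F, G θ η) - G θ θ) := Finset.sum_congr rfl fun θ _ => h1 θ
    _ = (∑ θ : F, ∑ η : F, G θ η) - ∑ θ : F, G θ θ := by rw [Finset.sum_sub_distrib]
    _ = (∑ η : F, ∑ θ : F, G θ η) - ∑ η : F, G η η := by rw [Finset.sum_comm]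
    _ = ∑ η : F, ((∑ θ : F, G θ η) - G η η) := by rw [Finset.sum_sub_distrib]
    _ = ∑ η : F, ∑ θ ∈ Finset.univ.erase η, G θ η :=
        Finset.sum_congr rfl fun η _ => (h2 η).symm

lemma Dsum (c e : ℕ) :
    ∑ w : F, ∑ η ∈ Finset.univ.erase w, ∑ j ∈ Finset.range e,
        RatFunc.C ((Etr F c e (w - η)).coeff j) * (1 / (RatFunc.X - RatFunc.C w) ^ (e - j))
      = ∑ j ∈ Finset.range e,
        RatFunc.C ((∑ v ∈ Finset.univ.filter (fun v : F => v ≠ 0), Etr F c e v).coeff j)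
          * S1 F (e - j) := by
  have h1 : ∀ w : F, ∑ η ∈ Finset.univ.erase w, ∑ j ∈ Finset.range e,
      RatFunc.C ((Etr F c e (w - η)).coeff j) * (1 / (RatFunc.X - RatFunc.C w) ^ (e - j))
      = ∑ j ∈ Finset.range e,
        RatFunc.C ((∑ v ∈ Finset.univ.filter (fun v : F => v ≠ 0), Etr F c e v).coeff j)
          * (1 / (RatFunc.X - RatFunc.C w) ^ (e - j)) := by
    intro w
    rw [Finset.sum_comm]
    refine Finset.sum_congr rfl fun j _ => ?_
    rw [← Finset.sum_mul]
    congr 1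
    rw [Polynomial.finset_sum_coeff, map_sum RatFunc.C]
    exact sum_sub_reindex w (fun v => RatFunc.C ((Etr F c e v).coeff j))
  refine Eq.trans (Finset.sum_congr rfl fun w _ => h1 w) ?_
  rw [Finset.sum_comm]
  refine Finset.sum_congr rfl fun j _ => ?_
  rw [← Finset.mul_sum, S1]

end DeltaSide

theorem stmt5 (p s q : ℕ) (hp : p.Prime) (hs : 1 ≤ s) (hq : q = p ^ s)
    (F : Type*) [Field F] [Fintype F] [DecidableEq F] (hF : Fintype.card F = q)
    (a b : ℕ) (ha : 0 < a) (hb : 0 < b)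
    (m : ℕ) (hm : a + b ≤ p ^ m) (hmmin : ∀ k, a + b ≤ p ^ k → m ≤ k) :
    (X : Polynomial F) ^ a ∣ Ppoly F p m q a %ₘ X ^ (a + b) ∧
    (X : Polynomial F) ^ b ∣ Ppoly F p m q b %ₘ X ^ (a + b) ∧
    Delta F a b =
      (∑ i ∈ Finset.range b, RatFunc.C ((Hpoly F p m q a b).coeff i) * S1 F (b - i)) +
      (∑ j ∈ Finset.range a, RatFunc.C ((Hpoly F p m q b a).coeff j) * S1 F (a - j)) := by
  have hba : b + a ≤ p ^ m := by omega
  have hma : Ppoly F p m q a %ₘ X ^ (a + b)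
      = X ^ a * ∑ u ∈ Finset.univ.filter (fun u : F => u ≠ 0), Etr F a b u :=
    Ppoly_modByMonic p s q hp hs hq hF m a b ha hb hm
  have hmb : Ppoly F p m q b %ₘ X ^ (b + a)
      = X ^ b * ∑ u ∈ Finset.univ.filter (fun u : F => u ≠ 0), Etr F b a u :=
    Ppoly_modByMonic p s q hp hs hq hF m b a hb ha hba
  have hHab : Hpoly F p m q a b = ∑ u ∈ Finset.univ.filter (fun u : F => u ≠ 0), Etr F a b u :=
    Hpoly_eq p s q hp hs hq hF m a b ha hb hm
  have hHba : Hpoly F p m q b a = ∑ u ∈ Finset.univ.filter (fun u : F => u ≠ 0), Etr F b a u :=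
    Hpoly_eq p s q hp hs hq hF m b a hb ha hba
  refine ⟨?_, ?_, ?_⟩
  · rw [hma]; exact Dvd.intro _ rfl
  · rw [add_comm a b, hmb]; exact Dvd.intro _ rfl
  · rw [hHab, hHba, Delta_eq_sum]
    have hsplit : ∀ θ : F, ∀ η ∈ Finset.univ.erase θ,
        1 / ((RatFunc.X - RatFunc.C θ) ^ a * (RatFunc.X - RatFunc.C η) ^ b) =
        (∑ i ∈ Finset.range b, RatFunc.C ((Etr F a b (η - θ)).coeff i) *
            (1 / (RatFunc.X - RatFunc.C η) ^ (b - i))) +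
        (∑ j ∈ Finset.range a, RatFunc.C ((Etr F b a (θ - η)).coeff j) *
            (1 / (RatFunc.X - RatFunc.C θ) ^ (a - j))) := by
      intro θ η hη
      exact partial_fraction (Ne.symm (Finset.mem_erase.mp hη).1) ha hb
    refine Eq.trans (Finset.sum_congr rfl fun θ _ =>
      Finset.sum_congr rfl fun η hη => hsplit θ η hη) ?_
    have hsum2 : ∀ θ : F, ∑ η ∈ Finset.univ.erase θ,
        ((∑ i ∈ Finset.range b, RatFunc.C ((Etr F a b (η - θ)).coeff i) *
            (1 / (RatFunc.X - RatFunc.C η) ^ (b - i))) +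
         (∑ j ∈ Finset.range a, RatFunc.C ((Etr F b a (θ - η)).coeff j) *
            (1 / (RatFunc.X - RatFunc.C θ) ^ (a - j))))
        = (∑ η ∈ Finset.univ.erase θ, ∑ i ∈ Finset.range b,
            RatFunc.C ((Etr F a b (η - θ)).coeff i) *
              (1 / (RatFunc.X - RatFunc.C η) ^ (b - i)))
          + (∑ η ∈ Finset.univ.erase θ, ∑ j ∈ Finset.range a,
            RatFunc.C ((Etr F b a (θ - η)).coeff j) *
              (1 / (RatFunc.X - RatFunc.C θ) ^ (a - j))) := fun θ =>
      Finset.sum_add_distrib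
    refine Eq.trans (Finset.sum_congr rfl fun θ _ => hsum2 θ) ?_
    rw [Finset.sum_add_distrib]
    congr 1
    · rw [sum_erase_comm (fun θ η => ∑ i ∈ Finset.range b,
        RatFunc.C ((Etr F a b (η - θ)).coeff i) * (1 / (RatFunc.X - RatFunc.C η) ^ (b - i)))]
      exact Dsum a b
    · exact Dsum b a
end

section
/- Let q = 2, let a, b be positive integers, and let m be the smallest nonnegative integer with a + b ≤ 2^m. Then Δ(a,b) = Σ_{j=0}^{b−1} C(2^m − a, j) · S_1(b−j) + Σ_{i=0}^{a−1} C(2^m − b, i) · S_1(a−i) holds in F_2(t), where the binomial coefficients are understood via the canonical map ℤ → F_2(t). -/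
open Finset

/- Auxiliary lemmas -/

lemma choose_two_pow_sub_one (m : ℕ) : ∀ j, j < 2 ^ m → (2 ^ m - 1).choose j % 2 = 1 := by
  intro j
  induction j with
  | zero => intro _; simp
  | succ j ih =>
    intro hj
    have hd : 2 ∣ (2 ^ m).choose (j + 1) :=
      Nat.Prime.dvd_choose_pow Nat.prime_two (by omega) (by omega)
    have hpos : 0 < 2 ^ m := Nat.pow_pos (by norm_num)
    have hp : (2 ^ m).choose (j + 1) = (2 ^ m - 1).choose j + (2 ^ m - 1).choose (j + 1) := by
      have h : 2 ^ m = (2 ^ m - 1) + 1 := by omega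
      rw [h]
      exact Nat.choose_succ_succ _ _
    have := ih (by omega)
    omega

lemma choose_modeq (m : ℕ) :
    ∀ a, ∀ j, 1 ≤ a → a + j ≤ 2 ^ m →
      (2 ^ m - a).choose j % 2 = ((a - 1 + j).choose j) % 2 := by
  intro a
  induction a with
  | zero => intro j h1 _; omega
  | succ a ih =>
    intro j
    induction j with
    | zero => intro _ _; simp
    | succ j ihj =>
      intro h1 hle
      by_cases ha : a = 0
      · subst ha
        have hbase := choose_two_pow_sub_one m (j + 1) (by omega)
        have e0 : (0 : ℕ) + 1 - 1 + (j + 1) = j + 1 := by omega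
        have e0' : (0 : ℕ) + 1 = 1 := by omega
        rw [e0, e0', Nat.choose_self]
        omega
      · have ha1 : 1 ≤ a := by omega
        have h1' := ih (j + 1) ha1 (by omega)
        have h2' := ihj (by omega) (by omega)
        have e1 : a - 1 + (j + 1) = a + j := by omega
        rw [e1] at h1'
        have e2 : a + 1 - 1 = a := by omega
        rw [e2] at h2' ⊢
        have hp1 : (2 ^ m - a).choose (j + 1)
            = (2 ^ m - (a + 1)).choose j + (2 ^ m - (a + 1)).choose (j + 1) := by
          have h : 2 ^ m - a = (2 ^ m - (a + 1)) + 1 := by omega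
          rw [h]
          exact Nat.choose_succ_succ _ _
        have hp2 : (a + (j + 1)).choose (j + 1) = (a + j).choose j + (a + j).choose (j + 1) :=
          Nat.choose_succ_succ (a + j) j
        omega

lemma cast_eq_of_mod2 {K : Type*} [CommRing K] (h2 : (2 : K) = 0) {n n' : ℕ}
    (h : n % 2 = n' % 2) : (n : K) = (n' : K) := by
  have key : ∀ k : ℕ, ((k : ℕ) : K) = ((k % 2 : ℕ) : K) := by
    intro k
    conv_lhs => rw [← Nat.mod_add_div k 2]
    push_cast
    rw [h2]
    ring
  rw [key n, key n', h]

lemma sumI {R : Type*} [CommRing R] (u : R) (b : ℕ) :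
    ∀ a : ℕ, (∑ i ∈ range (a + 1), ((b + 1 + i).choose i : R) * u ^ i)
      = u * (∑ i ∈ range a, ((b + 1 + i).choose i : R) * u ^ i)
        + ∑ i ∈ range (a + 1), ((b + i).choose i : R) * u ^ i := by
  intro a
  induction a with
  | zero => simp
  | succ a ih =>
    simp only [sum_range_succ] at ih ⊢
    have hp : ((b + 1 + (a + 1)).choose (a + 1) : R)
        = ((b + 1 + a).choose a : R) + ((b + (a + 1)).choose (a + 1) : R) := by
      have h1 : b + 1 + (a + 1) = (b + 1 + a) + 1 := by omega
      have h2 : b + (a + 1) = b + 1 + a := by omega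
      rw [h1, h2, Nat.choose_succ_succ]
      push_cast
      ring
    linear_combination ih + u ^ (a + 1) * hp

lemma keyE {R : Type*} [CommRing R] (u v : R) (huv : u + v = 1) :
    ∀ b a : ℕ, (∑ i ∈ range (a + 1), ((b + i).choose i : R) * u ^ i) * v ^ (b + 1)
      + (∑ j ∈ range (b + 1), ((a + j).choose j : R) * v ^ j) * u ^ (a + 1) = 1 := by
  intro b
  induction b with
  | zero =>
    intro a
    induction a with
    | zero =>
      simp only [Nat.zero_add, Nat.choose_self, Nat.cast_one, sum_range_one, one_mul,
        pow_zero, pow_one, zero_add]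
      linear_combination huv
    | succ a ih =>
      rw [sum_range_succ]
      simp only [Nat.zero_add, Nat.choose_self, Nat.choose_zero_right, Nat.cast_one,
        sum_range_one, one_mul, pow_zero] at ih ⊢
      linear_combination ih + u ^ (a + 1) * huv
  | succ b ihb =>
    intro a
    induction a with
    | zero =>
      have h0 := ihb 0
      rw [sum_range_succ (fun j => (((0 : ℕ) + j).choose j : R) * v ^ j) (b + 1)]
      simp only [Nat.zero_add, Nat.choose_self, Nat.choose_zero_right, Nat.cast_one,
        sum_range_one, one_mul, pow_zero] at h0 ⊢
      linear_combination h0 + v ^ (b + 1) * huv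
    | succ a iha =>
      have h1 := ihb (a + 1)
      have h2 := iha
      have sI := sumI u b (a + 1)
      have sJ := sumI v a (b + 1)
      linear_combination v ^ (b + 2) * sI + u ^ (a + 2) * sJ + u * h2 + v * h1 + huv

lemma deltaAux {K : Type*} [Field K] (u v : K) (a b : ℕ) :
    ((u ^ a)⁻¹ + (v ^ a)⁻¹) * ((u ^ b)⁻¹ + (v ^ b)⁻¹) - ((u ^ (a + b))⁻¹ + (v ^ (a + b))⁻¹)
      = (u ^ a * v ^ b)⁻¹ + (u ^ b * v ^ a)⁻¹ := by
  simp only [mul_inv, ← inv_pow]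
  ring

lemma PF {K : Type*} [Field K] (u v : K) (hu : u ≠ 0) (hv : v ≠ 0) (huv : u + v = 1)
    (a b : ℕ) :
    (u ^ (a + 1) * v ^ (b + 1))⁻¹
      = (∑ i ∈ range (a + 1), ((b + i).choose i : K) * (u ^ (a + 1 - i))⁻¹)
        + ∑ j ∈ range (b + 1), ((a + j).choose j : K) * (v ^ (b + 1 - j))⁻¹ := by
  have hE := keyE u v huv b a
  have hA : (∑ i ∈ range (a + 1), ((b + i).choose i : K) * u ^ i)
        * (v ^ (b + 1) * (u ^ (a + 1) * v ^ (b + 1))⁻¹)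
      = ∑ i ∈ range (a + 1), ((b + i).choose i : K) * (u ^ (a + 1 - i))⁻¹ := by
    rw [sum_mul]
    apply Finset.sum_congr rfl
    intro i hi
    have hia : i ≤ a := by have := mem_range.mp hi; omega
    have hsplit : u ^ (a + 1) = u ^ i * u ^ (a + 1 - i) := by
      rw [← pow_add]
      congr 1
      omega
    have hne1 : u ^ i ≠ 0 := pow_ne_zero _ hu
    have hne2 : u ^ (a + 1 - i) ≠ 0 := pow_ne_zero _ hu
    have hne3 : v ^ (b + 1) ≠ 0 := pow_ne_zero _ hv
    field_simp
    rw [hsplit]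
    ring
  have hB : (∑ j ∈ range (b + 1), ((a + j).choose j : K) * v ^ j)
        * (u ^ (a + 1) * (u ^ (a + 1) * v ^ (b + 1))⁻¹)
      = ∑ j ∈ range (b + 1), ((a + j).choose j : K) * (v ^ (b + 1 - j))⁻¹ := by
    rw [sum_mul]
    apply Finset.sum_congr rfl
    intro j hj
    have hjb : j ≤ b := by have := mem_range.mp hj; omega
    have hsplit : v ^ (b + 1) = v ^ j * v ^ (b + 1 - j) := by
      rw [← pow_add]
      congr 1
      omega
    have hne1 : v ^ j ≠ 0 := pow_ne_zero _ hv
    have hne2 : v ^ (b + 1 - j) ≠ 0 := pow_ne_zero _ hv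
    have hne3 : u ^ (a + 1) ≠ 0 := pow_ne_zero _ hu
    field_simp
    rw [hsplit]
    ring
  calc (u ^ (a + 1) * v ^ (b + 1))⁻¹
      = ((∑ i ∈ range (a + 1), ((b + i).choose i : K) * u ^ i) * v ^ (b + 1)
        + (∑ j ∈ range (b + 1), ((a + j).choose j : K) * v ^ j) * u ^ (a + 1))
          * (u ^ (a + 1) * v ^ (b + 1))⁻¹ := by rw [hE, one_mul]
    _ = (∑ i ∈ range (a + 1), ((b + i).choose i : K) * u ^ i)
          * (v ^ (b + 1) * (u ^ (a + 1) * v ^ (b + 1))⁻¹)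
        + (∑ j ∈ range (b + 1), ((a + j).choose j : K) * v ^ j)
          * (u ^ (a + 1) * (u ^ (a + 1) * v ^ (b + 1))⁻¹) := by ring
    _ = _ := by rw [hA, hB]

theorem stmt6 (F : Type*) [Field F] [Fintype F] (hF : Fintype.card F = 2)
    (a b : ℕ) (ha : 0 < a) (hb : 0 < b)
    (m : ℕ) (hm : a + b ≤ 2 ^ m) (hmmin : ∀ k, a + b ≤ 2 ^ k → m ≤ k) :
    Delta F a b =
      (∑ j ∈ Finset.range b, ((2 ^ m - a).choose j : RatFunc F) * S1 F (b - j)) +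
      (∑ i ∈ Finset.range a, ((2 ^ m - b).choose i : RatFunc F) * S1 F (a - i)) := by
  classical
  have hcard : ({0, 1} : Finset F).card = 2 := by
    rw [Finset.card_insert_of_notMem (by simp), Finset.card_singleton]
  have huniv : (Finset.univ : Finset F) = {0, 1} :=
    (Finset.eq_univ_of_card _ (hcard.trans hF.symm)).symm
  have h01 : ∀ θ : F, θ = 0 ∨ θ = 1 := by
    intro θ
    have hθ := Finset.mem_univ θ
    rw [huniv] at hθ
    simpa using hθ
  have h2F : (2 : F) = 0 := by
    rcases h01 2 with h | h
    · exact h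
    · exfalso
      have h11 : (1 : F) + 1 = 1 + 0 := by
        have h2 : ((2 : F)) = 1 + 1 := by norm_num
        rw [← h2, h, add_zero]
      exact one_ne_zero (add_left_cancel h11)
  have h2K : (2 : RatFunc F) = 0 := by
    rw [← map_ofNat (RatFunc.C (K := F)) 2, h2F, map_zero]
  have hXC : ∀ θ : F, RatFunc.X - RatFunc.C θ ≠ 0 := by
    intro θ h
    have h0 : algebraMap (Polynomial F) (RatFunc F) (Polynomial.X - Polynomial.C θ) = 0 := by
      rw [map_sub, RatFunc.algebraMap_X, RatFunc.algebraMap_C, h]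
    have h1 : (Polynomial.X - Polynomial.C θ : Polynomial F) = 0 :=
      (RatFunc.algebraMap_injective F) (by rw [h0, map_zero])
    exact Polynomial.X_sub_C_ne_zero θ h1
  have hu : RatFunc.X - RatFunc.C (0 : F) ≠ 0 := hXC 0
  have hv : RatFunc.X - RatFunc.C (1 : F) ≠ 0 := hXC 1
  have huv : (RatFunc.X - RatFunc.C (0 : F)) + (RatFunc.X - RatFunc.C (1 : F)) = 1 := by
    rw [map_zero, map_one, sub_zero]
    linear_combination (RatFunc.X (K := F) - 1) * h2K
  have S1_eq : ∀ k : ℕ, S1 F k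
      = ((RatFunc.X - RatFunc.C (0 : F)) ^ k)⁻¹ + ((RatFunc.X - RatFunc.C (1 : F)) ^ k)⁻¹ := by
    intro k
    unfold S1
    rw [huniv, Finset.sum_insert (by simp), Finset.sum_singleton, one_div, one_div]
  obtain ⟨a', rfl⟩ : ∃ a', a = a' + 1 := ⟨a - 1, by omega⟩
  obtain ⟨b', rfl⟩ : ∃ b', b = b' + 1 := ⟨b - 1, by omega⟩
  have hMain : Delta F (a' + 1) (b' + 1)
      = ((RatFunc.X - RatFunc.C (0 : F)) ^ (a' + 1) * (RatFunc.X - RatFunc.C (1 : F)) ^ (b' + 1))⁻¹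
        + ((RatFunc.X - RatFunc.C (0 : F)) ^ (b' + 1)
            * (RatFunc.X - RatFunc.C (1 : F)) ^ (a' + 1))⁻¹ := by
    unfold Delta
    rw [S1_eq, S1_eq, S1_eq]
    exact deltaAux _ _ _ _
  have e1 : ∑ j ∈ Finset.range (b' + 1), ((2 ^ m - (a' + 1)).choose j : RatFunc F)
        * S1 F (b' + 1 - j)
      = ∑ j ∈ Finset.range (b' + 1), ((a' + j).choose j : RatFunc F)
        * (((RatFunc.X - RatFunc.C (0 : F)) ^ (b' + 1 - j))⁻¹
          + ((RatFunc.X - RatFunc.C (1 : F)) ^ (b' + 1 - j))⁻¹) := by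
    apply Finset.sum_congr rfl
    intro j hj
    have hj' : j ≤ b' := by have := mem_range.mp hj; omega
    rw [S1_eq]
    congr 1
    apply cast_eq_of_mod2 h2K
    have hc := choose_modeq m (a' + 1) j (by omega) (by omega)
    simpa using hc
  have e2 : ∑ i ∈ Finset.range (a' + 1), ((2 ^ m - (b' + 1)).choose i : RatFunc F)
        * S1 F (a' + 1 - i)
      = ∑ i ∈ Finset.range (a' + 1), ((b' + i).choose i : RatFunc F)
        * (((RatFunc.X - RatFunc.C (0 : F)) ^ (a' + 1 - i))⁻¹
          + ((RatFunc.X - RatFunc.C (1 : F)) ^ (a' + 1 - i))⁻¹) := by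
    apply Finset.sum_congr rfl
    intro i hi
    have hi' : i ≤ a' := by have := mem_range.mp hi; omega
    rw [S1_eq]
    congr 1
    apply cast_eq_of_mod2 h2K
    have hc := choose_modeq m (b' + 1) i (by omega) (by omega)
    simpa using hc
  have e3 : ∑ j ∈ Finset.range (b' + 1), ((a' + j).choose j : RatFunc F)
        * (((RatFunc.X - RatFunc.C (0 : F)) ^ (b' + 1 - j))⁻¹
          + ((RatFunc.X - RatFunc.C (1 : F)) ^ (b' + 1 - j))⁻¹)
      = (∑ j ∈ Finset.range (b' + 1), ((a' + j).choose j : RatFunc F)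
          * ((RatFunc.X - RatFunc.C (0 : F)) ^ (b' + 1 - j))⁻¹)
        + ∑ j ∈ Finset.range (b' + 1), ((a' + j).choose j : RatFunc F)
          * ((RatFunc.X - RatFunc.C (1 : F)) ^ (b' + 1 - j))⁻¹ := by
    rw [← Finset.sum_add_distrib]
    exact Finset.sum_congr rfl fun j _ => mul_add _ _ _
  have e4 : ∑ i ∈ Finset.range (a' + 1), ((b' + i).choose i : RatFunc F)
        * (((RatFunc.X - RatFunc.C (0 : F)) ^ (a' + 1 - i))⁻¹
          + ((RatFunc.X - RatFunc.C (1 : F)) ^ (a' + 1 - i))⁻¹)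
      = (∑ i ∈ Finset.range (a' + 1), ((b' + i).choose i : RatFunc F)
          * ((RatFunc.X - RatFunc.C (0 : F)) ^ (a' + 1 - i))⁻¹)
        + ∑ i ∈ Finset.range (a' + 1), ((b' + i).choose i : RatFunc F)
          * ((RatFunc.X - RatFunc.C (1 : F)) ^ (a' + 1 - i))⁻¹ := by
    rw [← Finset.sum_add_distrib]
    exact Finset.sum_congr rfl fun i _ => mul_add _ _ _
  have hPF1 := PF (RatFunc.X - RatFunc.C (0 : F)) (RatFunc.X - RatFunc.C (1 : F)) hu hv huv a' b'
  have hPF2 := PF (RatFunc.X - RatFunc.C (0 : F)) (RatFunc.X - RatFunc.C (1 : F)) hu hv huv b' a'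
  rw [hMain, e1, e2, e3, e4, hPF1, hPF2]
  ring
end

section
/- Let a be a positive integer, let m be the smallest nonnegative integer with a ≤ p^m, and set [1] = t^q − t and r_a = (q−1)·p^m. Then for every monic polynomial n of degree 1 in F_q[t] (i.e. n = t − θ with θ ∈ F_q), the following identity holds in F_q(t): −([1]^{p^m − a} / n^{p^m − a}) · [1]^a · S_1(a) = 1 + Σ_{j=1}^{p^m − a} f_{a,j} · n^{r_a − (j + i_j·p^m)}, where the f_{a,j} are understood via the canonical map ℤ → F_q(t). -/
open Finset

section Aux

variable {F : Type*} [Field F] [Fintype F]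

/-- Power sums over a finite field. -/
lemma aux_sum_pow (e : ℕ) :
    ∑ x : F, x ^ e = if e ≠ 0 ∧ (Fintype.card F - 1) ∣ e then -1 else 0 := by
  classical
  by_cases he : e = 0
  · subst he
    simp only [pow_zero, Finset.sum_const, Finset.card_univ, nsmul_one, ne_eq,
      not_true_eq_false, false_and, if_false]
    exact FiniteField.cast_card_eq_zero F
  · have h1 : ∑ x : F, x ^ e = ∑ x : Fˣ, (x : F) ^ e := by
      let φ : Fˣ ↪ F := ⟨fun x ↦ x, fun _ _ h => Units.ext h⟩
      have huniv : (Finset.univ : Finset Fˣ).map φ = Finset.univ \ {0} := by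
        ext x
        simp only [Finset.mem_map, Finset.mem_univ, Function.Embedding.coeFn_mk, true_and,
          Finset.mem_sdiff, Finset.mem_singleton, φ]
        exact isUnit_iff_ne_zero
      calc ∑ x : F, x ^ e = ∑ x ∈ Finset.univ \ {(0:F)}, x ^ e := by
            rw [← Finset.sum_sdiff (Finset.subset_univ {(0:F)}), Finset.sum_singleton,
              zero_pow he, add_zero]
        _ = ∑ x : Fˣ, (x : F) ^ e := by rw [← huniv, Finset.sum_map]; rfl
    rw [h1, FiniteField.sum_pow_units]
    simp [he]

/-- `(Y - C ν) * ((∑_{l<q} C ν^{q-1-l} Y^l) - 1) = Y^q - Y`. -/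
lemma aux_geom (ν : F) (Y : RatFunc F) :
    (Y - RatFunc.C ν) * ((∑ l ∈ Finset.range (Fintype.card F),
        RatFunc.C ν ^ (Fintype.card F - 1 - l) * Y ^ l) - 1)
      = Y ^ (Fintype.card F) - Y := by
  set q := Fintype.card F with hq
  have hq1 : 1 ≤ q := Fintype.card_pos
  have h1 : (Y - RatFunc.C ν) * (∑ l ∈ Finset.range q, RatFunc.C ν ^ (q - 1 - l) * Y ^ l)
      = ∑ l ∈ Finset.range q,
        (RatFunc.C ν ^ (q - (l+1)) * Y ^ (l+1) - RatFunc.C ν ^ (q - l) * Y ^ l) := by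
    rw [Finset.mul_sum]
    refine Finset.sum_congr rfl fun l hl => ?_
    have hl' : l < q := Finset.mem_range.mp hl
    have e1 : q - 1 - l = q - (l+1) := by omega
    have e2 : RatFunc.C ν ^ (q - l) = RatFunc.C ν ^ (q - (l+1)) * RatFunc.C ν := by
      rw [← pow_succ]; congr 1; omega
    rw [e1, e2]; ring
  have h2 := Finset.sum_range_sub (fun l => RatFunc.C ν ^ (q - l) * Y ^ l) q
  rw [mul_sub, mul_one, h1, h2]
  have hνq : RatFunc.C ν ^ q = RatFunc.C ν := by
    rw [← map_pow]; congr 1; exact FiniteField.pow_card ν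
  simp only [Nat.sub_self, pow_zero, one_mul, Nat.sub_zero, hνq]
  ring

/-- The master partial-fraction identity (in numerator form). -/
lemma aux_master (k : ℕ) (hk : k ≤ Fintype.card F - 1) (Y : RatFunc F) :
    ∑ ν : F, RatFunc.C ν ^ k * ((∑ l ∈ Finset.range (Fintype.card F),
        RatFunc.C ν ^ (Fintype.card F - 1 - l) * Y ^ l) - 1) = -Y ^ k := by
  classical
  set q := Fintype.card F with hq
  have hq2 : 2 ≤ q := Fintype.one_lt_card
  have step1 : ∀ ν : F, RatFunc.C ν ^ k *
      ((∑ l ∈ Finset.range q, RatFunc.C ν ^ (q - 1 - l) * Y ^ l) - 1)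
      = (∑ l ∈ Finset.range q, RatFunc.C ν ^ (k + (q - 1 - l)) * Y ^ l) - RatFunc.C ν ^ k := by
    intro ν
    rw [mul_sub, mul_one, Finset.mul_sum]
    congr 1
    refine Finset.sum_congr rfl fun l _ => ?_
    rw [← mul_assoc, ← pow_add]
  rw [Finset.sum_congr rfl fun ν _ => step1 ν, Finset.sum_sub_distrib, Finset.sum_comm]
  have hSν : ∀ e : ℕ, ∑ ν : F, RatFunc.C ν ^ e
      = if e ≠ 0 ∧ (q - 1) ∣ e then -1 else 0 := by
    intro e
    have h : ∑ ν : F, RatFunc.C ν ^ e = RatFunc.C (∑ ν : F, ν ^ e) := by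
      rw [map_sum]
      exact Finset.sum_congr rfl fun ν _ => (map_pow _ _ _).symm
    rw [h, aux_sum_pow, ← hq]
    split_ifs <;> simp
  have inner : ∀ l ∈ Finset.range q, ∑ ν : F, RatFunc.C ν ^ (k + (q - 1 - l)) * Y ^ l
      = (if l = k then -Y ^ l else 0) + (if k = q - 1 ∧ l = 0 then -Y ^ l else 0) := by
    intro l hl
    have hl' : l < q := Finset.mem_range.mp hl
    rw [← Finset.sum_mul, hSν]
    by_cases h1 : l = k
    · subst h1
      have hcond : l + (q - 1 - l) ≠ 0 ∧ (q - 1) ∣ (l + (q - 1 - l)) := by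
        constructor
        · omega
        · have h : l + (q - 1 - l) = q - 1 := by omega
          rw [h]
      rw [if_pos hcond, if_pos rfl, if_neg (by omega : ¬(l = q - 1 ∧ l = 0))]
      ring
    · by_cases h2 : k = q - 1 ∧ l = 0
      · have : k + (q - 1 - l) ≠ 0 ∧ (q - 1) ∣ (k + (q - 1 - l)) := by
          constructor
          · omega
          · have : k + (q - 1 - l) = (q - 1) * 2 := by omega
            rw [this]; exact Dvd.intro 2 rfl
        rw [if_pos this, if_neg h1, if_pos h2]
        ring
      · have : ¬(k + (q - 1 - l) ≠ 0 ∧ (q - 1) ∣ (k + (q - 1 - l))) := by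
          rintro ⟨hne, c, hc⟩
          have hle : k + (q - 1 - l) ≤ 2 * (q - 1) := by omega
          match c, hc with
          | 0, hc => omega
          | 1, hc => omega
          | 2, hc => omega
          | (c+3), hc =>
            have : (q - 1) * 3 ≤ (q - 1) * (c + 3) := Nat.mul_le_mul_left _ (by omega)
            omega
        rw [if_neg this, if_neg h1, if_neg h2]
        ring
  rw [Finset.sum_congr rfl inner, Finset.sum_add_distrib, Finset.sum_ite_eq' (Finset.range q),
    if_pos (Finset.mem_range.mpr (by omega : k < q)), hSν k]
  by_cases hk1 : k = q - 1
  · have hc1 : k ≠ 0 ∧ (q - 1) ∣ k := ⟨by omega, by rw [hk1]⟩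
    rw [if_pos hc1]
    have : ∀ l ∈ Finset.range q, (if k = q - 1 ∧ l = 0 then -Y ^ l else 0)
        = (if l = 0 then -Y ^ l else 0) := by
      intro l _; simp [hk1]
    rw [Finset.sum_congr rfl this, Finset.sum_ite_eq' (Finset.range q),
      if_pos (Finset.mem_range.mpr (by omega : 0 < q))]
    ring
  · have hc1 : ¬(k ≠ 0 ∧ (q - 1) ∣ k) := by
      rintro ⟨hne, hd⟩
      have := Nat.le_of_dvd (by omega) hd
      omega
    rw [if_neg hc1]
    have : ∀ l ∈ Finset.range q, (if k = q - 1 ∧ l = 0 then -Y ^ l else 0) = 0 := by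
      intro l _; simp [hk1]
    rw [Finset.sum_congr rfl this, Finset.sum_const_zero]
    ring

end Aux

theorem stmt7 (p s q : ℕ) (hp : p.Prime) (hs : 1 ≤ s) (hq : q = p ^ s)
    (F : Type*) [Field F] [Fintype F] (hF : Fintype.card F = q)
    (a : ℕ) (ha : 0 < a)
    (m : ℕ) (hm : a ≤ p ^ m) (hmmin : ∀ k, a ≤ p ^ k → m ≤ k)
    (i : ℕ → ℕ) (hi : ∀ j ≤ p ^ m - a, i j < q - 1 ∧ (q - 1) ∣ (j + i j * p ^ m))
    (θ : F) :
    -(((RatFunc.X ^ q - RatFunc.X : RatFunc F) ^ (p ^ m - a)) /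
        (RatFunc.X - RatFunc.C θ) ^ (p ^ m - a)) *
      (RatFunc.X ^ q - RatFunc.X : RatFunc F) ^ a * S1 F a =
    1 + ∑ j ∈ Finset.Icc 1 (p ^ m - a),
      (((-1) ^ j * ((p ^ m - a).choose j : ℤ) : ℤ) : RatFunc F) *
        (RatFunc.X - RatFunc.C θ) ^ ((q - 1) * p ^ m - (j + i j * p ^ m)) := by
  classical
  -- characteristic facts
  have hq2 : 2 ≤ q := by
    rw [hq]
    calc 2 ≤ p := hp.two_le
    _ ≤ p ^ s := Nat.le_self_pow (by omega) p
  haveI hpF : Fact p.Prime := ⟨hp⟩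
  have hcF : CharP F p := by
    obtain ⟨r, hr⟩ := CharP.exists F
    haveI := hr
    obtain ⟨n, hrp, hcard⟩ := FiniteField.card F r
    have hdvd : p ∣ r ^ (n : ℕ) := by
      rw [← hcard, hF, hq]; exact dvd_pow_self p (by omega)
    have : p = r := (Nat.prime_dvd_prime_iff_eq hp hrp).mp (hp.dvd_of_dvd_pow hdvd)
    subst this
    exact hr
  haveI := hcF
  haveI hcR : CharP (RatFunc F) p :=
    charP_of_injective_algebraMap (algebraMap F (RatFunc F)).injective p
  -- notation
  set N := p ^ m - a with hN
  set x : RatFunc F := RatFunc.X - RatFunc.C θ with hxdef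
  have hNa : N + a = p ^ m := by omega
  -- nonvanishing
  have hXC : ∀ u : F, (RatFunc.X - RatFunc.C u : RatFunc F) ≠ 0 := by
    intro u h
    rw [sub_eq_zero, ← RatFunc.algebraMap_X, ← RatFunc.algebraMap_C] at h
    exact Polynomial.X_ne_C u (RatFunc.algebraMap_injective F h)
  have hx : x ≠ 0 := hXC θ
  have hxμ : ∀ μ : F, x - RatFunc.C μ ≠ 0 := by
    intro μ
    have : x - RatFunc.C μ = RatFunc.X - RatFunc.C (θ + μ) := by
      rw [hxdef, map_add]; ring
    rw [this]; exact hXC (θ + μ)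
  -- Frobenius facts
  have hFq : ∀ u : F, u ^ q = u := by
    intro u; rw [← hF]; exact FiniteField.pow_card u
  have hD : (RatFunc.X ^ q - RatFunc.X : RatFunc F) = x ^ q - x := by
    rw [hxdef, hq, sub_pow_char_pow]
    have : (RatFunc.C θ : RatFunc F) ^ p ^ s = RatFunc.C θ := by
      rw [← map_pow]; congr 1; rw [← hq]; exact hFq θ
    rw [this]; ring
  have hD0 : (x ^ q - x : RatFunc F) ≠ 0 := by
    rw [← hD]
    intro h
    have h2 : (Polynomial.X ^ q - Polynomial.X : Polynomial F) ≠ 0 := by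
      intro hP
      have h3 := congrArg (fun P => Polynomial.coeff P q) hP
      simp only [Polynomial.coeff_sub, Polynomial.coeff_X_pow, if_pos rfl,
        Polynomial.coeff_X, Polynomial.coeff_zero] at h3
      rw [if_neg (by omega : ¬ 1 = q)] at h3
      norm_num at h3
    apply h2
    apply RatFunc.algebraMap_injective F
    rw [map_sub, map_pow, RatFunc.algebraMap_X, map_zero, h]
  set Y : RatFunc F := x ^ p ^ m with hYdef
  have hDm : (x ^ q - x : RatFunc F) ^ p ^ m = Y ^ q - Y := by
    rw [sub_pow_char_pow, hYdef, ← pow_mul, ← pow_mul, mul_comm q (p ^ m)]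
  have hDm0 : (x ^ q - x : RatFunc F) ^ p ^ m ≠ 0 := pow_ne_zero _ hD0
  have hsub : ∀ μ : F, (x - RatFunc.C μ) ^ p ^ m = Y - RatFunc.C (μ ^ p ^ m) := by
    intro μ
    rw [sub_pow_char_pow, hYdef, map_pow]
  have hbij : Function.Bijective (fun μ : F => μ ^ p ^ m) := by
    have h2 : (fun μ : F => μ ^ p ^ m) = (frobenius F p)^[m] := by
      funext μ; rw [iterate_frobenius]
    rw [h2]
    exact Finite.injective_iff_bijective.mp ((frobenius_inj F p).iterate m)
  -- the exponent function
  set K : ℕ → ℕ := fun j => if j = 0 then 0 else q - 1 - i j with hKdef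
  have hK0 : K 0 = 0 := rfl
  have hKle : ∀ j, K j ≤ q - 1 := by
    intro j; by_cases hj0 : j = 0 <;> simp only [hKdef, hj0, if_true, if_false] <;> omega
  have hKpos : ∀ j, 1 ≤ j → j ≤ N → 1 ≤ K j := by
    intro j hj1 hjN
    have := (hi j hjN).1
    rw [hKdef]; simp only [if_neg (by omega : ¬ j = 0)]; omega
  have hpow : ∀ j ≤ N, ∀ μ : F, μ ^ j = (μ ^ p ^ m) ^ K j := by
    intro j hj μ
    by_cases hj0 : j = 0
    · subst hj0; rw [hK0]; simp
    · rw [hKdef]; simp only [if_neg hj0]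
      by_cases hμ : μ = 0
      · subst hμ
        rw [zero_pow hj0, zero_pow (by have := hp.two_le; positivity : p ^ m ≠ 0),
          zero_pow (by have := (hi j hj).1; omega : ¬ (q - 1 - i j) = 0)]
      · have h1 : μ ^ (q - 1) = 1 := by
          rw [← hF] at hq2 ⊢; exact FiniteField.pow_card_sub_one_eq_one μ hμ
        have hu : ∀ e : ℕ, (q - 1) ∣ e → μ ^ e = 1 := by
          rintro e ⟨c, rfl⟩; rw [pow_mul, h1, one_pow]
        have hA : μ ^ j * μ ^ (i j * p ^ m) = 1 := by
          rw [← pow_add]; exact hu _ (hi j hj).2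
        have hB : (μ ^ p ^ m) ^ (q - 1 - i j) * μ ^ (i j * p ^ m) = 1 := by
          rw [← pow_mul, ← pow_add]
          apply hu
          have he : p ^ m * (q - 1 - i j) + i j * p ^ m = p ^ m * (q - 1) := by
            have := (hi j hj).1
            rw [Nat.mul_sub]
            have h2 : i j * p ^ m = p ^ m * i j := mul_comm _ _
            rw [h2]
            have h3 : p ^ m * i j ≤ p ^ m * (q - 1) := Nat.mul_le_mul_left _ (by omega)
            omega
          rw [he]
          exact Dvd.intro_left _ rfl
        exact mul_right_cancel₀ (pow_ne_zero _ hμ) (hA.trans hB.symm)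
  -- inner partial-fraction sums
  have hinner : ∀ j ≤ N, ∑ μ : F, RatFunc.C μ ^ j / (x - RatFunc.C μ) ^ p ^ m
      = -(x ^ (p ^ m * K j)) / (x ^ q - x) ^ p ^ m := by
    intro j hj
    have hkk : K j ≤ q - 1 := hKle j
    have hsummand : ∀ μ : F, RatFunc.C μ ^ j / (x - RatFunc.C μ) ^ p ^ m
        = (RatFunc.C (μ ^ p ^ m) ^ K j * ((∑ l ∈ Finset.range q,
            RatFunc.C (μ ^ p ^ m) ^ (q - 1 - l) * Y ^ l) - 1))
          / (x ^ q - x) ^ p ^ m := by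
      intro μ
      have hgeom := aux_geom (μ ^ p ^ m) Y
      rw [hF] at hgeom
      have hden : Y - RatFunc.C (μ ^ p ^ m) = (x - RatFunc.C μ) ^ p ^ m := (hsub μ).symm
      have hden0 : Y - RatFunc.C (μ ^ p ^ m) ≠ 0 := by
        rw [hden]; exact pow_ne_zero _ (hxμ μ)
      rw [← hden, div_eq_div_iff hden0 hDm0, hDm, ← hgeom]
      have hnum : RatFunc.C μ ^ j = RatFunc.C (μ ^ p ^ m) ^ K j := by
        rw [← map_pow, ← map_pow]; congr 1; exact hpow j hj μ
      rw [hnum]; ring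
    rw [Finset.sum_congr rfl fun μ _ => hsummand μ, ← Finset.sum_div]
    congr 1
    have hmaster := aux_master (K j) (by rw [hF]; exact hkk) Y
    rw [hF] at hmaster
    have hre := Fintype.sum_bijective _ hbij
      (fun μ : F => RatFunc.C (μ ^ p ^ m) ^ K j * ((∑ l ∈ Finset.range q,
            RatFunc.C (μ ^ p ^ m) ^ (q - 1 - l) * Y ^ l) - 1))
      (fun ν : F => RatFunc.C ν ^ K j * ((∑ l ∈ Finset.range q,
            RatFunc.C ν ^ (q - 1 - l) * Y ^ l) - 1))
      (fun μ => rfl)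
    rw [hre, hmaster, hYdef, ← pow_mul]
  -- binomial expansion of the sum over μ
  have hT : ∑ μ : F, 1 / (x - RatFunc.C μ) ^ a
      = ∑ j ∈ Finset.range (N + 1), ((-1 : RatFunc F) ^ j * (N.choose j : RatFunc F))
          * (x ^ (N - j) * (-(x ^ (p ^ m * K j)) / (x ^ q - x) ^ p ^ m)) := by
    calc ∑ μ : F, 1 / (x - RatFunc.C μ) ^ a
        = ∑ μ : F, ∑ j ∈ Finset.range (N + 1),
            ((-RatFunc.C μ) ^ j * x ^ (N - j) * (N.choose j : RatFunc F))
              / (x - RatFunc.C μ) ^ p ^ m := by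
          refine Finset.sum_congr rfl fun μ _ => ?_
          rw [← Finset.sum_div, ← add_pow]
          have h1 : -RatFunc.C μ + x = x - RatFunc.C μ := by ring
          rw [h1, show p ^ m = N + a from hNa.symm, pow_add, ← div_div,
            div_self (pow_ne_zero N (hxμ μ))]
      _ = ∑ j ∈ Finset.range (N + 1), ∑ μ : F,
            ((-RatFunc.C μ) ^ j * x ^ (N - j) * (N.choose j : RatFunc F))
              / (x - RatFunc.C μ) ^ p ^ m := Finset.sum_comm
      _ = ∑ j ∈ Finset.range (N + 1), ((-1 : RatFunc F) ^ j * (N.choose j : RatFunc F))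
          * (x ^ (N - j) * (-(x ^ (p ^ m * K j)) / (x ^ q - x) ^ p ^ m)) := by
          refine Finset.sum_congr rfl fun j hj => ?_
          have hj' : j ≤ N := Finset.mem_range_succ_iff.mp hj
          rw [← hinner j hj', Finset.mul_sum, Finset.mul_sum]
          refine Finset.sum_congr rfl fun μ _ => ?_
          rw [neg_pow]
          ring
  -- rewrite the goal
  have hS1 : S1 F a = ∑ μ : F, 1 / (x - RatFunc.C μ) ^ a := by
    unfold S1
    refine Fintype.sum_equiv (Equiv.subRight θ) _ _ fun η => ?_
    have h2 : x - RatFunc.C (Equiv.subRight θ η) = RatFunc.X - RatFunc.C η := by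
      rw [hxdef, Equiv.subRight_apply, map_sub]; ring
    rw [h2]
  rw [hD, hS1, hT, Finset.mul_sum]
  have hterm : ∀ j ∈ Finset.range (N + 1),
      -((x ^ q - x) ^ N / x ^ N) * (x ^ q - x) ^ a *
        (((-1 : RatFunc F) ^ j * (N.choose j : RatFunc F))
          * (x ^ (N - j) * (-(x ^ (p ^ m * K j)) / (x ^ q - x) ^ p ^ m)))
      = ((-1 : RatFunc F) ^ j * (N.choose j : RatFunc F)) * x ^ (p ^ m * K j - j) := by
    intro j hj
    have hj' : j ≤ N := Finset.mem_range_succ_iff.mp hj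
    have hjK : j ≤ p ^ m * K j := by
      by_cases hj0 : j = 0
      · simp [hj0]
      · have h1 := hKpos j (by omega) hj'
        have h2 : p ^ m * 1 ≤ p ^ m * K j := Nat.mul_le_mul_left _ h1
        omega
    have e1 : (x ^ q - x) ^ N * (x ^ q - x) ^ a = (x ^ q - x) ^ p ^ m := by
      rw [← pow_add, hNa]
    have e2 : x ^ (N - j) * x ^ (p ^ m * K j) = x ^ (p ^ m * K j - j) * x ^ N := by
      rw [← pow_add, ← pow_add]; congr 1; omega
    calc -((x ^ q - x) ^ N / x ^ N) * (x ^ q - x) ^ a *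
        (((-1 : RatFunc F) ^ j * (N.choose j : RatFunc F))
          * (x ^ (N - j) * (-(x ^ (p ^ m * K j)) / (x ^ q - x) ^ p ^ m)))
        = ((-1 : RatFunc F) ^ j * (N.choose j : RatFunc F)) *
            ((x ^ (N - j) * x ^ (p ^ m * K j)) *
              (((x ^ q - x) ^ N * (x ^ q - x) ^ a) / (x ^ q - x) ^ p ^ m) / x ^ N) := by
          ring
      _ = ((-1 : RatFunc F) ^ j * (N.choose j : RatFunc F)) *
            ((x ^ (p ^ m * K j - j) * x ^ N) *
              ((x ^ q - x) ^ p ^ m / (x ^ q - x) ^ p ^ m) / x ^ N) := by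
          rw [e1, e2]
      _ = ((-1 : RatFunc F) ^ j * (N.choose j : RatFunc F)) * x ^ (p ^ m * K j - j) := by
          rw [div_self hDm0, mul_one, mul_div_cancel_right₀ _ (pow_ne_zero N hx)]
  rw [Finset.sum_congr rfl hterm]
  have hsplit : Finset.range (N + 1) = insert 0 (Finset.Icc 1 N) := by
    ext n; simp only [Finset.mem_range, Finset.mem_insert, Finset.mem_Icc]; omega
  rw [hsplit, Finset.sum_insert (by simp)]
  congr 1
  · simp [hK0]
  · refine Finset.sum_congr rfl fun j hj => ?_
    obtain ⟨hj1, hjN⟩ := Finset.mem_Icc.mp hj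
    have hij := hi j hjN
    have hKj : K j = q - 1 - i j := by
      rw [hKdef]; simp only [if_neg (by omega : ¬ j = 0)]
    have hexp : p ^ m * K j - j = (q - 1) * p ^ m - (j + i j * p ^ m) := by
      rw [hKj, Nat.mul_sub, mul_comm (p ^ m) (q - 1), mul_comm (p ^ m) (i j),
        Nat.sub_sub, Nat.add_comm (i j * p ^ m) j]
    rw [hexp]
    push_cast
    ring
end

section
/- Let a be a positive integer and let m be the smallest nonnegative integer with a ≤ p^m. Then for every integer j with 0 ≤ j ≤ p^m − a, one has j + i_j·p^m ≤ r_a − a and (q−1) | (j + i_j·p^m) (so j + i_j·p^m = l·(q−1) for some l with 0 ≤ l ≤ j_{a,max}); and the map j ↦ j + i_j·p^m is injective on {0, 1, …, p^m − a}, i.e. if j_1 + i_{j_1}·p^m = j_2 + i_{j_2}·p^m with 0 ≤ j_1, j_2 ≤ p^m − a, then j_1 = j_2. -/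
theorem stmt10 (p s q : ℕ) (hp : p.Prime) (hs : 1 ≤ s) (hq : q = p ^ s)
    (a : ℕ) (ha : 0 < a)
    (m : ℕ) (hm : a ≤ p ^ m) (hmmin : ∀ k, a ≤ p ^ k → m ≤ k)
    (i : ℕ → ℕ) (hi : ∀ j ≤ p ^ m - a, i j < q - 1 ∧ (q - 1) ∣ (j + i j * p ^ m)) :
    (∀ j ≤ p ^ m - a, j + i j * p ^ m ≤ (q - 1) * p ^ m - a) ∧
    (∀ j ≤ p ^ m - a, (q - 1) ∣ (j + i j * p ^ m)) ∧
    (∀ j₁ ≤ p ^ m - a, ∀ j₂ ≤ p ^ m - a,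
      j₁ + i j₁ * p ^ m = j₂ + i j₂ * p ^ m → j₁ = j₂) := by
  have hp2 : 2 ≤ p := hp.two_le
  have hq2 : 2 ≤ q := by
    rw [hq]; exact Nat.one_lt_pow (by omega) (by omega)
  have hN : 0 < p ^ m := Nat.pow_pos (by omega)
  refine ⟨?_, fun j hj => (hi j hj).2, ?_⟩
  · intro j hj
    have h1 : i j < q - 1 := (hi j hj).1
    have h2 : i j * p ^ m ≤ (q - 2) * p ^ m := Nat.mul_le_mul_right _ (by omega)
    have h3 : (q - 1) * p ^ m = (q - 2) * p ^ m + p ^ m := by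
      have : q - 1 = (q - 2) + 1 := by omega
      rw [this, Nat.add_mul, one_mul]
    omega
  · intro j₁ hj₁ j₂ hj₂ heq
    have e1 : (j₁ + i j₁ * p ^ m) % p ^ m = j₁ := by
      rw [Nat.add_mul_mod_self_right]; exact Nat.mod_eq_of_lt (by omega)
    have e2 : (j₂ + i j₂ * p ^ m) % p ^ m = j₂ := by
      rw [Nat.add_mul_mod_self_right]; exact Nat.mod_eq_of_lt (by omega)
    rw [← e1, ← e2, heq]
end

section
/- Let q = p be prime and let a be a positive integer, m the smallest nonnegative integer with a ≤ p^m. Then for every integer j with 1 ≤ j ≤ p^m − a, the integer ⌈(j + i_j·p^m)/j_{a,max}⌉ is not divisible by p, and in ℤ/pℤ one has f_{a,j} = ⌈(j + i_j·p^m)/j_{a,max}⌉^{−1} · C(r_a − a, j + i_j·p^m), where the inverse is taken in ℤ/pℤ. -/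
set_option maxHeartbeats 800000

/-- Generalized Lucas: digits in base `p^m`. -/
lemma lucas_pow (p : ℕ) [Fact p.Prime] :
    ∀ (m c d N J : ℕ), N < p ^ m → J < p ^ m →
    (((c * p ^ m + N).choose (d * p ^ m + J) : ℕ) : ZMod p)
      = (c.choose d : ZMod p) * (N.choose J : ZMod p) := by
  intro m
  induction m with
  | zero =>
    intro c d N J hN hJ
    have hN0 : N = 0 := by simpa using hN
    have hJ0 : J = 0 := by simpa using hJ
    subst hN0; subst hJ0
    simp
  | succ m ih =>
    intro c d N J hN hJ
    have hp : 0 < p := (Fact.out : p.Prime).pos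
    have h1 : (((c * p ^ (m+1) + N).choose (d * p ^ (m+1) + J) : ℕ) : ZMod p)
        = ((((c * p ^ (m+1) + N) % p).choose ((d * p ^ (m+1) + J) % p)
            * ((c * p ^ (m+1) + N) / p).choose ((d * p ^ (m+1) + J) / p) : ℕ) : ZMod p) :=
      (ZMod.natCast_eq_natCast_iff _ _ _).mpr
        Choose.choose_modEq_choose_mod_mul_choose_div_nat
    have hmod1 : (c * p ^ (m+1) + N) % p = N % p := by
      rw [pow_succ, ← mul_assoc, mul_comm (c * p ^ m) p, Nat.mul_add_mod]
    have hmod2 : (d * p ^ (m+1) + J) % p = J % p := by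
      rw [pow_succ, ← mul_assoc, mul_comm (d * p ^ m) p, Nat.mul_add_mod]
    have hdiv1 : (c * p ^ (m+1) + N) / p = c * p ^ m + N / p := by
      rw [pow_succ, ← mul_assoc, Nat.add_comm, Nat.add_mul_div_right _ _ hp, Nat.add_comm]
    have hdiv2 : (d * p ^ (m+1) + J) / p = d * p ^ m + J / p := by
      rw [pow_succ, ← mul_assoc, Nat.add_comm, Nat.add_mul_div_right _ _ hp, Nat.add_comm]
    rw [hmod1, hmod2, hdiv1, hdiv2] at h1
    have hN' : N / p < p ^ m := Nat.div_lt_of_lt_mul (by rw [← pow_succ']; exact hN)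
    have hJ' : J / p < p ^ m := Nat.div_lt_of_lt_mul (by rw [← pow_succ']; exact hJ)
    have h2 : ((N.choose J : ℕ) : ZMod p)
        = (((N % p).choose (J % p) * (N / p).choose (J / p) : ℕ) : ZMod p) :=
      (ZMod.natCast_eq_natCast_iff _ _ _).mpr
        Choose.choose_modEq_choose_mod_mul_choose_div_nat
    push_cast at h1 h2 ⊢
    rw [h1, ih c d (N / p) (J / p) hN' hJ', h2]
    ring

lemma choose_pred (p : ℕ) [Fact p.Prime] :
    ∀ k, k < p → (((p - 1).choose k : ℕ) : ZMod p) = (-1) ^ k := by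
  intro k
  induction k with
  | zero => simp
  | succ k ih =>
    intro hk
    have hp := (Fact.out : p.Prime)
    have hp2 := hp.two_le
    have hpas : (p - 1).choose k + (p - 1).choose (k + 1) = p.choose (k + 1) := by
      conv_rhs => rw [show p = p - 1 + 1 from by omega]
      rw [Nat.choose_succ_succ]
    have hdvd : p ∣ p.choose (k + 1) :=
      hp.dvd_choose_self (Nat.succ_ne_zero k) hk
    have h0 : ((p.choose (k+1) : ℕ) : ZMod p) = 0 :=
      (ZMod.natCast_eq_zero_iff _ _).mpr hdvd
    have hc := congrArg (fun n : ℕ => (n : ZMod p)) hpas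
    simp only [Nat.cast_add] at hc
    rw [h0, ih (by omega)] at hc
    have h3 : (((p - 1).choose (k + 1) : ℕ) : ZMod p) = -(-1)^k := by linear_combination hc
    rw [h3, pow_succ]
    ring

lemma choose_pred2 (p : ℕ) [Fact p.Prime] :
    ∀ k, k < p - 1 → (((p - 2).choose k : ℕ) : ZMod p) = (-1) ^ k * (k + 1) := by
  intro k
  induction k with
  | zero => simp
  | succ k ih =>
    intro hk
    have hp := (Fact.out : p.Prime)
    have hp2 := hp.two_le
    have hpas : (p - 2).choose k + (p - 2).choose (k + 1) = (p - 1).choose (k + 1) := by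
      conv_rhs => rw [show p - 1 = p - 2 + 1 from by omega]
      rw [Nat.choose_succ_succ]
    have h0 : (((p - 1).choose (k+1) : ℕ) : ZMod p) = (-1)^(k+1) :=
      choose_pred p (k + 1) (by omega)
    have hc := congrArg (fun n : ℕ => (n : ZMod p)) hpas
    simp only [Nat.cast_add] at hc
    rw [h0, ih (by omega)] at hc
    have h2 : (((p - 2).choose (k + 1) : ℕ) : ZMod p) = (-1)^(k+1) - (-1)^k * (k+1) := by
      linear_combination hc
    rw [h2]
    push_cast
    rw [pow_succ]
    ring

theorem stmt12 (p : ℕ) (hp : p.Prime)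
    (a : ℕ) (ha : 0 < a)
    (m : ℕ) (hm : a ≤ p ^ m) (hmmin : ∀ k, a ≤ p ^ k → m ≤ k)
    (i : ℕ → ℕ) (hi : ∀ j ≤ p ^ m - a, i j < p - 1 ∧ (p - 1) ∣ (j + i j * p ^ m))
    (j : ℕ) (hj1 : 1 ≤ j) (hj2 : j ≤ p ^ m - a) :
    ¬ p ∣ (j + i j * p ^ m) ⌈/⌉ (((p - 1) * p ^ m - a) / (p - 1)) ∧
    (((-1) ^ j * ((p ^ m - a).choose j : ℤ) : ℤ) : ZMod p) =
      (((j + i j * p ^ m) ⌈/⌉ (((p - 1) * p ^ m - a) / (p - 1)) : ℕ) : ZMod p)⁻¹ *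
        (((p - 1) * p ^ m - a).choose (j + i j * p ^ m) : ZMod p) := by
  haveI : Fact p.Prime := ⟨hp⟩
  have hp2 : 2 ≤ p := hp.two_le
  set P := p ^ m with hP
  obtain ⟨hilt, hdvd⟩ := hi j hj2
  set ii := i j with hii
  have hPpos : 0 < P := pow_pos (by omega) m
  have haj : a + j ≤ P := by omega
  set jmax := ((p - 1) * P - a) / (p - 1) with hjmax
  set ρ := ((p - 1) * P - a) % (p - 1) with hρ
  have hρlt : ρ < p - 1 := Nat.mod_lt _ (by omega)
  have hdm : (p - 1) * jmax + ρ = (p - 1) * P - a := Nat.div_add_mod _ _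
  have haP : a ≤ (p - 1) * P := le_trans hm (Nat.le_mul_of_pos_left P (by omega))
  have hjmaxle : jmax ≤ P := by
    have h1 := Nat.div_le_div_right (c := p - 1) (Nat.sub_le ((p - 1) * P) a)
    rwa [Nat.mul_div_cancel_left _ (by omega : 0 < p - 1)] at h1
  set s := P - jmax with hs
  have hsum : a + ρ = (p - 1) * s := by
    have h2 : (p - 1) * jmax ≤ (p - 1) * P := Nat.mul_le_mul_left _ hjmaxle
    have h1 : (p - 1) * s + (p - 1) * jmax = (p - 1) * P := by
      rw [← Nat.mul_add]
      congr 1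
      omega
    omega
  have hs1 : 1 ≤ s := by
    rcases Nat.eq_zero_or_pos s with h | h
    · rw [h, Nat.mul_zero] at hsum; omega
    · exact h
  -- divisibility facts
  have hdvdP1 : (p - 1) ∣ P - 1 := by
    have h := Nat.sub_dvd_pow_sub_pow p 1 m
    simpa using h
  have hdvdji : (p - 1) ∣ j + ii := by
    have h1 : (p - 1) ∣ ii * (P - 1) := Dvd.dvd.mul_left hdvdP1 ii
    have h2 : j + ii * P = (j + ii) + ii * (P - 1) := by
      have h3 : ii * P = ii * (P - 1) + ii := by
        have h4 : ii * P = ii * ((P - 1) + 1) := by rw [Nat.sub_add_cancel hPpos]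
        rw [h4]; ring
      omega
    rw [h2] at hdvd
    exact (Nat.dvd_add_right h1).mp (by rwa [Nat.add_comm] at hdvd)
  -- key inequality
  have hkey : j + (ii + 1) * s ≤ P := by
    obtain ⟨u, hu⟩ := hdvdP1
    obtain ⟨v, hv⟩ := hdvdji
    have h1 : (a : ℤ) + ρ = ((p : ℤ) - 1) * s := by
      have h := hsum
      zify [show 1 ≤ p by omega] at h
      linarith
    have hT : ((ii : ℤ) + 1) * s ≤ (a : ℤ) + ρ + ii + 2 - p := by
      nlinarith [mul_nonneg (by omega : (0:ℤ) ≤ (p:ℤ) - 2 - ii)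
        (by omega : (0:ℤ) ≤ (s:ℤ) - 1)]
    by_cases hcase : ((ρ : ℤ) + ii + 2 - p) ≤ 0
    · have h2 : ((ii : ℤ) + 1) * s ≤ (a : ℤ) := by linarith
      zify
      have h3 : (a : ℤ) + j ≤ P := by omega
      linarith
    · push_neg at hcase
      set D : ℤ := (P : ℤ) - a - j with hD
      have hD0 : 0 ≤ D := by omega
      set T : ℤ := (ρ : ℤ) + ii + 2 - p with hTdef
      have hT1 : 1 ≤ T := hcase
      have hT2 : T ≤ (p : ℤ) - 2 := by omega
      have hDT : ((p : ℤ) - 1) ∣ (D - T) := by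
        have e1 : (P : ℤ) - 1 = ((p : ℤ) - 1) * u := by
          zify [show 1 ≤ p from by omega, hPpos] at hu
          linarith
        have e3 : (j : ℤ) + ii = ((p : ℤ) - 1) * v := by
          zify [show 1 ≤ p from by omega] at hv
          linarith
        refine ⟨u - s - v + 1, ?_⟩
        rw [hD, hTdef]
        linear_combination e1 - h1 - e3
      have hDgeT : T ≤ D := by
        by_contra hlt
        push_neg at hlt
        obtain ⟨w, hw⟩ := hDT
        have hpz : (1:ℤ) ≤ (p:ℤ) - 1 := by omega
        have hw1 : w ≤ -1 := by
          by_contra hw0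
          push_neg at hw0
          have hw0' : 0 ≤ w := by linarith
          have : (0:ℤ) ≤ ((p:ℤ) - 1) * w := mul_nonneg (by linarith) hw0'
          linarith
        have h5 := mul_le_mul_of_nonneg_left hw1 (by linarith : (0:ℤ) ≤ (p:ℤ) - 1)
        have h6 : ((p:ℤ) - 1) * (-1) = -((p:ℤ) - 1) := by ring
        linarith
      zify
      have h4 : ((ii : ℤ) + 1) * s ≤ (a : ℤ) + T := by rw [hTdef]; linarith
      rw [hD] at hDgeT
      linarith
  -- bounds for ceiling division
  have hub : j + ii * P ≤ (ii + 1) * jmax := by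
    have e : (ii + 1) * jmax + (ii + 1) * s = (ii + 1) * P := by
      rw [← Nat.mul_add]
      congr 1
      omega
    have e2 : (ii + 1) * P = ii * P + P := by ring
    omega
  have hjmax1 : 1 ≤ jmax := by
    rcases Nat.eq_zero_or_pos jmax with h | h
    · rw [h, Nat.mul_zero] at hub; omega
    · exact h
  have hlb : ii * jmax < j + ii * P := by
    have h : ii * jmax ≤ ii * P := Nat.mul_le_mul_left ii hjmaxle
    omega
  have hceil : (j + ii * P) ⌈/⌉ jmax = ii + 1 := by
    rw [Nat.ceilDiv_eq_add_pred_div]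
    apply Nat.div_eq_of_lt_le
    · have e1 : (ii + 1) * jmax = ii * jmax + jmax := by ring
      omega
    · have e1 : (ii + 1 + 1) * jmax = (ii + 1) * jmax + jmax := by ring
      omega
  rw [hceil]
  constructor
  · exact Nat.not_dvd_of_pos_of_lt (by omega) (by omega)
  · have hdecomp : (p - 1) * P - a = (p - 2) * P + (P - a) := by
      have e : (p - 1) * P = (p - 2) * P + P := by
        have h : p - 1 = (p - 2) + 1 := by omega
        rw [h]; ring
      omega
    have hNlt : P - a < P := by omega
    have hJlt : j < P := by omega
    have hlucas : ((((p - 1) * P - a).choose (j + ii * P) : ℕ) : ZMod p)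
        = (((p - 2).choose ii : ℕ) : ZMod p) * (((P - a).choose j : ℕ) : ZMod p) := by
      rw [hdecomp, Nat.add_comm j (ii * P)]
      exact lucas_pow p m (p - 2) ii (P - a) j hNlt hJlt
    have hc2 : (((p - 2).choose ii : ℕ) : ZMod p) = (-1) ^ ii * (ii + 1) :=
      choose_pred2 p ii hilt
    have hparity : ((-1 : ZMod p)) ^ ii = (-1 : ZMod p) ^ j := by
      rcases eq_or_ne p 2 with h2 | h2
      · subst h2
        have hneg : (-1 : ZMod 2) = 1 := by rfl
        rw [hneg, one_pow, one_pow]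
      · have hodd : Odd p := hp.odd_of_ne_two h2
        have heven : 2 ∣ (p - 1) := by
          obtain ⟨t, ht⟩ := hodd; omega
        have h2dvd : 2 ∣ j + ii := dvd_trans heven hdvdji
        have hev : Even (ii + j) := by
          rw [Nat.even_add, Nat.even_iff, Nat.even_iff]
          omega
        have h1 : ((-1 : ZMod p)) ^ (ii + j) = 1 := hev.neg_one_pow
        have h2' : ((-1 : ZMod p)) ^ (j + j) = 1 := Even.neg_one_pow ⟨j, rfl⟩
        rw [pow_add] at h1 h2'
        calc ((-1 : ZMod p)) ^ ii = (-1) ^ ii * ((-1) ^ j * (-1) ^ j) := by rw [h2', mul_one]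
          _ = ((-1) ^ ii * (-1) ^ j) * (-1) ^ j := by ring
          _ = (-1 : ZMod p) ^ j := by rw [h1, one_mul]
    have hne : ((ii : ZMod p) + 1) ≠ 0 := by
      have h := (ZMod.natCast_eq_zero_iff (ii + 1) p).not.mpr
        (Nat.not_dvd_of_pos_of_lt (by omega) (by omega))
      push_cast at h
      exact h
    rw [hlucas, hc2]
    push_cast
    rw [hparity]
    field_simp
end

section
/- Let a be a positive integer and m the smallest nonnegative integer with a ≤ p^m. If C(r_a − a, l·(q−1)) is not divisible by p for some integer l with 0 ≤ l ≤ j_{a,max}, then there exists an integer j with 0 ≤ j ≤ p^m − a such that l·(q−1) = j + i_j·p^m and C(p^m − a, j) is not divisible by p. -/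
open Nat

/-- Grouped Lucas theorem: split at `p ^ M`. -/
lemma lucas_pow_s13 (p : ℕ) [Fact p.Prime] (M : ℕ) (n k : ℕ) :
    Nat.choose n k ≡
      Nat.choose (n % p ^ M) (k % p ^ M) * Nat.choose (n / p ^ M) (k / p ^ M) [MOD p] := by
  induction M generalizing n k with
  | zero => simp [Nat.ModEq, Nat.mod_one]
  | succ M ih =>
    have hp : 0 < p := (Fact.out : p.Prime).pos
    have h1 : Nat.choose n k ≡
        Nat.choose (n % p) (k % p) * Nat.choose (n / p) (k / p) [MOD p] :=
      Choose.choose_modEq_choose_mod_mul_choose_div_nat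
    have h2 := (ih (n / p) (k / p)).mul_left (Nat.choose (n % p) (k % p))
    have h3 : Nat.choose (n % p ^ (M + 1)) (k % p ^ (M + 1)) ≡
        Nat.choose (n % p ^ (M + 1) % p) (k % p ^ (M + 1) % p) *
          Nat.choose (n % p ^ (M + 1) / p) (k % p ^ (M + 1) / p) [MOD p] :=
      Choose.choose_modEq_choose_mod_mul_choose_div_nat
    have e1 : ∀ x : ℕ, x % p ^ (M + 1) % p = x % p := by
      intro x; exact Nat.mod_mod_of_dvd x (dvd_pow_self p (Nat.succ_ne_zero M))
    have e2 : ∀ x : ℕ, x % p ^ (M + 1) / p = x / p % p ^ M := by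
      intro x
      rw [_root_.pow_succ', Nat.mod_mul_right_div_self]
    have e3 : ∀ x : ℕ, x / p / p ^ M = x / p ^ (M + 1) := by
      intro x; rw [Nat.div_div_eq_div_mul, ← _root_.pow_succ']
    rw [e1, e1, e2, e2] at h3
    rw [e3, e3] at h2
    refine h1.trans (h2.trans ?_)
    rw [← mul_assoc]
    exact Nat.ModEq.mul_right _ h3.symm

theorem stmt13 (p s q : ℕ) (hp : p.Prime) (hs : 1 ≤ s) (hq : q = p ^ s)
    (a : ℕ) (ha : 0 < a)
    (m : ℕ) (hm : a ≤ p ^ m) (hmmin : ∀ k, a ≤ p ^ k → m ≤ k)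
    (i : ℕ → ℕ) (hi : ∀ j ≤ p ^ m - a, i j < q - 1 ∧ (q - 1) ∣ (j + i j * p ^ m))
    (l : ℕ) (hl : l ≤ ((q - 1) * p ^ m - a) / (q - 1))
    (hch : ¬ p ∣ ((q - 1) * p ^ m - a).choose (l * (q - 1))) :
    ∃ j ≤ p ^ m - a, l * (q - 1) = j + i j * p ^ m ∧ ¬ p ∣ (p ^ m - a).choose j := by
  haveI : Fact p.Prime := ⟨hp⟩
  have hp2 : 2 ≤ p := hp.two_le
  have hq2 : 2 ≤ q := by
    calc 2 ≤ p := hp2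
    _ = p ^ 1 := (pow_one p).symm
    _ ≤ p ^ s := Nat.pow_le_pow_right hp.pos hs
    _ = q := hq.symm
  set P := p ^ m with hPdef
  have hP : 0 < P := Nat.pow_pos hp.pos
  set r := (q - 1) * P - a with hrdef
  set k := l * (q - 1) with hkdef
  -- decompose r
  have hr : r = (q - 2) * P + (P - a) := by
    have hq1 : q - 1 = (q - 2) + 1 := by omega
    rw [hrdef, hq1, add_mul, one_mul, Nat.add_sub_assoc hm]
  -- k ≤ r
  have hkr : k ≤ r := by
    by_contra h
    exact hch (by simp [Nat.choose_eq_zero_of_lt (lt_of_not_ge h)])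
  have hBP : P - a < P := Nat.sub_lt hP ha
  have hrmod : r % P = P - a := by
    rw [hr, mul_comm (q - 2) P, Nat.mul_add_mod, Nat.mod_eq_of_lt hBP]
  have hrdiv : r / P = q - 2 := by
    rw [hr, mul_comm, Nat.mul_add_div hP, Nat.div_eq_of_lt hBP, add_zero]
  -- Lucas
  have hlucas := lucas_pow_s13 p m r k
  rw [hrmod, hrdiv] at hlucas
  have hdvd : ¬ p ∣ Nat.choose (P - a) (k % P) * Nat.choose (q - 2) (k / P) := by
    intro hd
    exact hch ((Nat.modEq_zero_iff_dvd.mp (hlucas.trans (Nat.modEq_zero_iff_dvd.mpr hd))))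
  have hjch : ¬ p ∣ Nat.choose (P - a) (k % P) := fun h => hdvd (h.mul_right _)
  have hjB : k % P ≤ P - a := by
    by_contra h
    exact hjch (by simp [Nat.choose_eq_zero_of_lt (lt_of_not_ge h)])
  obtain ⟨hij_lt, hij_dvd⟩ := hi (k % P) hjB
  -- show k / P = i (k % P)
  have ht_lt : k / P < q - 1 := by
    have : k / P ≤ r / P := Nat.div_le_div_right hkr
    rw [hrdiv] at this
    omega
  have hkq : (q - 1) ∣ k := dvd_mul_left (q - 1) l
  have hk_eq : k = k % P + k / P * P := (Nat.mod_add_div' k P).symm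
  have hmodeq : k / P ≡ i (k % P) [MOD q - 1] := by
    have h1 : k % P + k / P * P ≡ 0 [MOD q - 1] :=
      Nat.modEq_zero_iff_dvd.mpr (hk_eq ▸ hkq)
    have h2 : k % P + i (k % P) * P ≡ 0 [MOD q - 1] :=
      Nat.modEq_zero_iff_dvd.mpr hij_dvd
    have h3 : k % P + k / P * P ≡ k % P + i (k % P) * P [MOD q - 1] := h1.trans h2.symm
    have h4 : k / P * P ≡ i (k % P) * P [MOD q - 1] :=
      Nat.ModEq.add_left_cancel' _ h3
    have hcop : Nat.gcd (q - 1) P = 1 := by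
      have hpq : ¬ p ∣ (q - 1) := by
        intro hd
        have h1 : p ∣ q := hq ▸ dvd_pow_self p (by omega)
        have h2 : p ∣ q - (q - 1) := Nat.dvd_sub h1 hd
        have h3 : q - (q - 1) = 1 := by omega
        rw [h3] at h2
        exact absurd (Nat.le_of_dvd one_pos h2) (by omega)
      exact Nat.Coprime.pow_right m ((hp.coprime_iff_not_dvd.mpr hpq).symm)
    exact h4.cancel_right_of_coprime hcop
  have ht_eq : k / P = i (k % P) := hmodeq.eq_of_lt_of_lt ht_lt hij_lt
  exact ⟨k % P, hjB, by rw [← ht_eq]; exact (Nat.mod_add_div' k P).symm, hjch⟩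
end

section
/- For every integer n ≥ 1, the identity Δ(q^n, q^n − 1) = −S_1(q^n) holds in F_q(t). -/
open Finset

theorem stmt16 (p s q : ℕ) (hp : p.Prime) (hs : 1 ≤ s) (hq : q = p ^ s)
    (F : Type*) [Field F] [Fintype F] (hF : Fintype.card F = q)
    (n : ℕ) (hn : 1 ≤ n) :
    Delta F (q ^ n) (q ^ n - 1) = -S1 F (q ^ n) := by
  classical
  haveI : Fact p.Prime := ⟨hp⟩
  have hpF : (p : F) = 0 := by
    have h0 : ((Fintype.card F : ℕ) : F) = 0 := FiniteField.cast_card_eq_zero F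
    rw [hF, hq] at h0
    push_cast at h0
    exact pow_eq_zero_iff (by omega : s ≠ 0) |>.mp h0
  haveI hcF : CharP F p := (CharP.charP_iff_prime_eq_zero hp).mpr hpF
  haveI hcK : CharP (RatFunc F) p :=
    charP_of_injective_algebraMap (algebraMap F (RatFunc F)).injective p
  set m : ℕ := q ^ n with hm
  have hm' : m = p ^ (s * n) := by rw [hm, hq, pow_mul]
  have hm1 : 1 ≤ m := Nat.one_le_pow _ _ (by rw [hq]; exact pow_pos hp.pos s)
  set X : RatFunc F := RatFunc.X with hX
  -- X - C θ ≠ 0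
  have hXC : ∀ θ : F, X - RatFunc.C θ ≠ 0 := by
    intro θ
    rw [hX, ← RatFunc.algebraMap_X, ← RatFunc.algebraMap_C, ← map_sub]
    exact RatFunc.algebraMap_ne_zero (Polynomial.X_sub_C_ne_zero θ)
  -- Frobenius
  have hfrob : ∀ θ : F, (X - RatFunc.C θ) ^ m = X ^ m - RatFunc.C θ := by
    intro θ
    have h1 : (X - RatFunc.C θ) ^ (p ^ (s * n)) = X ^ (p ^ (s*n)) - (RatFunc.C θ) ^ (p ^ (s*n)) :=
      sub_pow_char_pow (p := p) X (RatFunc.C θ) (s * n)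
    rw [← hm'] at h1
    rw [h1, ← map_pow]
    congr 2
    calc θ ^ m = θ ^ (Fintype.card F) ^ n := by rw [hF, hm]
    _ = θ := FiniteField.pow_card_pow n θ
  have hv : ∀ θ : F, X ^ m - RatFunc.C θ ≠ 0 := by
    intro θ
    rw [← hfrob θ]
    exact pow_ne_zero _ (hXC θ)
  set v : F → RatFunc F := fun θ => (X ^ m - RatFunc.C θ)⁻¹ with hvdef
  -- S1 m = ∑ v
  have hS1m : S1 F m = ∑ θ : F, v θ := by
    unfold S1
    refine Finset.sum_congr rfl fun θ _ => ?_
    rw [one_div, ← hX, hfrob θ]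
  -- 1/(X - Cθ)^(m-1) = (X - Cθ) * v θ
  have hBm : ∀ θ : F, (X - RatFunc.C θ) * (X - RatFunc.C θ) ^ (m - 1) = X ^ m - RatFunc.C θ := by
    intro θ
    rw [← pow_succ', ← hfrob θ]
    congr 1
    omega
  have hB : ∀ θ : F, (1 : RatFunc F) / (X - RatFunc.C θ) ^ (m - 1) = (X - RatFunc.C θ) * v θ := by
    intro θ
    rw [hvdef]
    rw [eq_comm, mul_inv_eq_iff_eq_mul₀ (hv θ), one_div, inv_mul_eq_div,
      eq_div_iff (pow_ne_zero _ (hXC θ))]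
    exact hBm θ
  -- partial fractions
  have hpf : ∀ θ η : F, θ ≠ η → v θ * v η = RatFunc.C (θ - η)⁻¹ * (v θ - v η) := by
    intro θ η hne
    have hd : (θ - η) ≠ 0 := sub_ne_zero.mpr hne
    have hdC : RatFunc.C (θ - η) ≠ 0 := by
      rw [← RatFunc.algebraMap_C]
      exact RatFunc.algebraMap_ne_zero (Polynomial.C_ne_zero.mpr hd)
    have hCd2 : RatFunc.C (θ - η)⁻¹ = (RatFunc.C (θ - η))⁻¹ := map_inv₀ _ _
    have hAB : (X ^ m - RatFunc.C η) - (X ^ m - RatFunc.C θ) = RatFunc.C (θ - η) := by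
      rw [map_sub]; ring
    show (X ^ m - RatFunc.C θ)⁻¹ * (X ^ m - RatFunc.C η)⁻¹ =
      RatFunc.C (θ - η)⁻¹ * ((X ^ m - RatFunc.C θ)⁻¹ - (X ^ m - RatFunc.C η)⁻¹)
    rw [inv_sub_inv (hv θ) (hv η), hAB, hCd2, div_eq_mul_inv, ← mul_assoc,
      inv_mul_cancel₀ hdC, one_mul, mul_inv]
  
  -- sigma and reindexing
  set σ : RatFunc F := ∑ c ∈ (univ : Finset F).erase 0, RatFunc.C c⁻¹ with hσ
  have h1 : ∀ θ : F, ∑ η ∈ (univ : Finset F).erase θ, RatFunc.C (θ - η)⁻¹ = σ := by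
    intro θ
    refine Finset.sum_nbij' (i := fun η => θ - η) (j := fun c => θ - c) ?_ ?_ ?_ ?_ ?_
    · intro a ha
      simp only [mem_erase, mem_univ, and_true] at ha ⊢
      exact sub_ne_zero.mpr fun h => ha h.symm
    · intro b hb
      simp only [mem_erase, mem_univ, and_true] at hb ⊢
      intro h
      exact hb (by linear_combination θ - h)
    · intro a _; exact sub_sub_cancel θ a
    · intro b _; exact sub_sub_cancel θ b
    · intro a _; rfl
  have h2 : ∀ η : F, ∑ θ' ∈ (univ : Finset F).erase η, RatFunc.C (θ' - η)⁻¹ = σ := by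
    intro η
    refine Finset.sum_nbij' (i := fun θ' => θ' - η) (j := fun c => c + η) ?_ ?_ ?_ ?_ ?_
    · intro a ha
      simp only [mem_erase, mem_univ, and_true] at ha ⊢
      exact sub_ne_zero.mpr ha
    · intro b hb
      simp only [mem_erase, mem_univ, and_true] at hb ⊢
      intro h
      exact hb (by linear_combination h - η)
    · intro a _; exact sub_add_cancel a η
    · intro b _; exact add_sub_cancel_right b η
    · intro a _; rfl
  -- cardinality facts
  have hq1 : 1 ≤ q := by rw [hq]; exact Nat.one_le_pow _ _ hp.pos
  have hq0 : ((q : ℕ) : RatFunc F) = 0 := by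
    rw [hq]
    push_cast
    rw [CharP.cast_eq_zero (RatFunc F) p]
    exact zero_pow (by omega)
  have hqm1 : (((q - 1 : ℕ)) : RatFunc F) = -1 := by
    rw [Nat.cast_sub hq1, hq0, Nat.cast_one, zero_sub]
  have hconst : ∀ θ : F, ∑ _η ∈ (univ : Finset F).erase θ, v θ = -v θ := by
    intro θ
    rw [Finset.sum_const, Finset.card_erase_of_mem (mem_univ θ), Finset.card_univ, hF,
      nsmul_eq_mul, hqm1]
    ring
  -- the off-diagonal term
  have hterm : ∀ θ η : F, θ ≠ η →
      (1 / (X - RatFunc.C θ) ^ m) * (1 / (X - RatFunc.C η) ^ (m - 1)) =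
        (X - RatFunc.C θ) * RatFunc.C (θ - η)⁻¹ * v θ + v θ
          - (X - RatFunc.C η) * RatFunc.C (θ - η)⁻¹ * v η := by
    intro θ η hne
    have hd : (θ - η) ≠ 0 := sub_ne_zero.mpr hne
    have e1 : (1 : RatFunc F) / (X - RatFunc.C θ) ^ m = v θ := by
      rw [one_div, hfrob]
    have hCC : (RatFunc.C θ - RatFunc.C η) * RatFunc.C (θ - η)⁻¹ = 1 := by
      rw [← map_sub, ← map_mul, mul_inv_cancel₀ hd, map_one]
    rw [e1, hB η]
    have e2 : v θ * ((X - RatFunc.C η) * v η) = (X - RatFunc.C η) * (v θ * v η) := by ring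
    rw [e2, hpf θ η hne]
    linear_combination (v θ) * hCC
  -- expand the product of sums
  have hprod : S1 F m * S1 F (m - 1) = S1 F (m + (m - 1)) +
      ∑ θ : F, ∑ η ∈ (univ : Finset F).erase θ,
        (1 / (X - RatFunc.C θ) ^ m) * (1 / (X - RatFunc.C η) ^ (m - 1)) := by
    unfold S1
    rw [Finset.sum_mul_sum, ← Finset.sum_add_distrib]
    refine Finset.sum_congr rfl fun θ _ => ?_
    rw [← Finset.add_sum_erase _ _ (mem_univ θ)]
    congr 1
    rw [div_mul_div_comm, one_mul, ← pow_add]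
  -- rewrite off-diagonal sum
  have hD : ∑ θ : F, ∑ η ∈ (univ : Finset F).erase θ,
      (1 / (X - RatFunc.C θ) ^ m) * (1 / (X - RatFunc.C η) ^ (m - 1)) = -S1 F m := by
    have step1 : ∀ θ : F, ∑ η ∈ (univ : Finset F).erase θ,
        (1 / (X - RatFunc.C θ) ^ m) * (1 / (X - RatFunc.C η) ^ (m - 1)) =
        ((X - RatFunc.C θ) * v θ * σ + -v θ)
          - ∑ η ∈ (univ : Finset F).erase θ, (X - RatFunc.C η) * RatFunc.C (θ - η)⁻¹ * v η := by
      intro θ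
      rw [Finset.sum_congr rfl fun η hη => hterm θ η
        (fun h => (Finset.mem_erase.mp hη).1 h.symm)]
      rw [Finset.sum_sub_distrib, Finset.sum_add_distrib, hconst θ]
      congr 2
      calc ∑ η ∈ (univ : Finset F).erase θ, (X - RatFunc.C θ) * RatFunc.C (θ - η)⁻¹ * v θ
          = ∑ η ∈ (univ : Finset F).erase θ, (X - RatFunc.C θ) * v θ * RatFunc.C (θ - η)⁻¹ := by
            refine Finset.sum_congr rfl fun η _ => by ring
        _ = (X - RatFunc.C θ) * v θ * σ := by rw [← Finset.mul_sum, h1 θ]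
    rw [Finset.sum_congr rfl fun θ _ => step1 θ, Finset.sum_sub_distrib]
    have hswap : ∑ θ : F, ∑ η ∈ (univ : Finset F).erase θ,
        (X - RatFunc.C η) * RatFunc.C (θ - η)⁻¹ * v η =
        ∑ η : F, (X - RatFunc.C η) * v η * σ := by
      have e1 : ∀ θ : F, ∑ η ∈ (univ : Finset F).erase θ,
          (X - RatFunc.C η) * RatFunc.C (θ - η)⁻¹ * v η =
          ∑ η : F, (if η = θ then 0 else (X - RatFunc.C η) * RatFunc.C (θ - η)⁻¹ * v η) := by
        intro θ
        have e1' : ∑ η ∈ (univ : Finset F).erase θ,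
            (X - RatFunc.C η) * RatFunc.C (θ - η)⁻¹ * v η =
            ∑ η ∈ (univ : Finset F).erase θ,
              (if η = θ then 0 else (X - RatFunc.C η) * RatFunc.C (θ - η)⁻¹ * v η) :=
          Finset.sum_congr rfl fun η hη => (if_neg (Finset.mem_erase.mp hη).1).symm
        rw [e1', Finset.sum_erase _ (by simp)]
      rw [Finset.sum_congr rfl fun θ _ => e1 θ, Finset.sum_comm]
      refine Finset.sum_congr rfl fun η _ => ?_
      have e2 : ∑ θ : F, (if η = θ then 0 else (X - RatFunc.C η) * RatFunc.C (θ - η)⁻¹ * v η) =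
          ∑ θ ∈ (univ : Finset F).erase η, (X - RatFunc.C η) * RatFunc.C (θ - η)⁻¹ * v η := by
        calc ∑ θ : F, (if η = θ then 0 else (X - RatFunc.C η) * RatFunc.C (θ - η)⁻¹ * v η)
            = ∑ θ ∈ (univ : Finset F).erase η,
              (if η = θ then 0 else (X - RatFunc.C η) * RatFunc.C (θ - η)⁻¹ * v η) :=
              (Finset.sum_erase _ (by simp)).symm
          _ = ∑ θ ∈ (univ : Finset F).erase η, (X - RatFunc.C η) * RatFunc.C (θ - η)⁻¹ * v η :=
              Finset.sum_congr rfl fun θ hθ =>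
                if_neg fun h => (Finset.mem_erase.mp hθ).1 h.symm
      rw [e2]
      calc ∑ θ' ∈ (univ : Finset F).erase η, (X - RatFunc.C η) * RatFunc.C (θ' - η)⁻¹ * v η
          = ∑ θ' ∈ (univ : Finset F).erase η, (X - RatFunc.C η) * v η * RatFunc.C (θ' - η)⁻¹ := by
            refine Finset.sum_congr rfl fun θ' _ => by ring
        _ = (X - RatFunc.C η) * v η * σ := by rw [← Finset.mul_sum, h2 η]
    rw [hswap, Finset.sum_add_distrib, hS1m, Finset.sum_neg_distrib]
    ring
  -- conclude
  show Delta F m (m - 1) = -S1 F m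
  unfold Delta
  rw [hprod, hD]
  ring
end

section
/- Let q = 2 and let m ≥ 1 and b be integers with 1 ≤ b < 2^m. Then Δ(2^m, b) = Σ_{k=0}^{2^m − b − 1} C(2^m − b, k) · S_1(2^m − k) holds in F_2(t), where the binomial coefficients are understood via the canonical map ℤ → F_2(t). -/
open Finset

lemma aux17 {K : Type*} [Field K] (h2 : (2:K) = 0) (p q r s : K)
    (hp : p ≠ 0) (hq : q ≠ 0) (hr : r ≠ 0) (hs : s ≠ 0) (hfr : r * s = p * q + 1) :
    (1/(p*q) + 1/(r*s)) * (1/p + 1/r) - (1/(p*(p*q)) + 1/(r*(r*s))) =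
      (s - q)/(p*q) + (q - s)/(r*s) := by
  have e1 : (1/(p*q) + 1/(r*s)) * (1/p + 1/r) - (1/(p*(p*q)) + 1/(r*(r*s)))
      = (s + q) / (p*q*r*s) := by
    field_simp
    ring
  have e2 : (s - q)/(p*q) + (q - s)/(r*s) = (s - q) / (p*q*r*s) := by
    rw [div_add_div _ _ (mul_ne_zero hp hq) (mul_ne_zero hr hs),
      div_eq_div_iff (by simp [hp, hq, hr, hs]) (by simp [hp, hq, hr, hs])]
    linear_combination (s - q) * (p*q*r*s) * hfr
  rw [e1, e2]
  congr 1
  linear_combination q * h2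

theorem stmt17 (F : Type*) [Field F] [Fintype F] (hF : Fintype.card F = 2)
    (m b : ℕ) (hm : 1 ≤ m) (hb : 1 ≤ b) (hb2 : b < 2 ^ m) :
    Delta F (2 ^ m) b =
      ∑ k ∈ Finset.range (2 ^ m - b),
        ((2 ^ m - b).choose k : RatFunc F) * S1 F (2 ^ m - k) := by
  classical
  -- The universe of F is {0, 1}
  have h01 : (0 : F) ≠ 1 := zero_ne_one
  have huniv : (Finset.univ : Finset F) = {0, 1} := by
    symm
    apply Finset.eq_of_subset_of_card_le (Finset.subset_univ _)
    rw [Finset.card_univ, hF, Finset.card_insert_of_notMem (by simp [h01]),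
      Finset.card_singleton]
  set x : RatFunc F := RatFunc.X with hxdef
  set y : RatFunc F := RatFunc.X - 1 with hydef
  have hS1 : ∀ k, S1 F k = 1 / x ^ k + 1 / y ^ k := by
    intro k
    rw [S1, huniv, Finset.sum_pair h01]
    simp [hxdef, hydef]
  -- characteristic two
  have h2F : ((2 : ℕ) : F) = 0 := by
    have hc := FiniteField.cast_card_eq_zero F
    rwa [hF] at hc
  have h2 : (2 : RatFunc F) = 0 := by
    have hC : RatFunc.C (2 : F) = 0 := by
      rw [show (2 : F) = ((2 : ℕ) : F) by norm_cast, h2F, map_zero]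
    rwa [map_ofNat] at hC
  -- nonvanishing
  have hx : x ≠ 0 := RatFunc.X_ne_zero
  have hXne1 : (RatFunc.X : RatFunc F) ≠ 1 := by
    intro h
    rw [show (RatFunc.X : RatFunc F) = algebraMap (Polynomial F) _ Polynomial.X from
        (RatFunc.algebraMap_X).symm,
      show (1 : RatFunc F) = algebraMap (Polynomial F) _ 1 from (map_one _).symm] at h
    have hinj := RatFunc.algebraMap_injective F h
    have := congrArg Polynomial.natDegree hinj
    simp at this
  have hy : y ≠ 0 := sub_ne_zero.mpr hXne1
  -- Frobenius: y ^ (2^n) = x ^ (2^n) + 1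
  have hsq : ∀ z : RatFunc F, (z + 1) ^ 2 = z ^ 2 + 1 := by
    intro z; linear_combination z * h2
  have hxy : x + 1 = y := by rw [hydef]; linear_combination h2
  have hfrob : ∀ n : ℕ, y ^ (2 ^ n) = x ^ (2 ^ n) + 1 := by
    intro n
    induction n with
    | zero => simp [← hxy]
    | succ k ih =>
      rw [pow_succ, pow_mul, ih, pow_mul, hsq]
  set a : ℕ := 2 ^ m with hadef
  set c : ℕ := a - b with hcdef
  have hab : a = b + c := by omega
  have hca : c ≤ a := by omega
  -- binomial sum
  have hbin : ∀ z : RatFunc F,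
      ∑ k ∈ Finset.range c, ((c.choose k : ℕ) : RatFunc F) * z ^ k = (z + 1) ^ c - z ^ c := by
    intro z
    have hap := add_pow z 1 c
    simp only [one_pow, mul_one] at hap
    rw [Finset.sum_range_succ, Nat.choose_self, Nat.cast_one, mul_one] at hap
    rw [eq_sub_iff_add_eq, hap]
    congr 1
    exact Finset.sum_congr rfl fun k _ => mul_comm _ _
  -- rewrite RHS
  have hRHS : (∑ k ∈ Finset.range c, ((c.choose k : ℕ) : RatFunc F) * S1 F (a - k))
      = (y ^ c - x ^ c) / x ^ a + (x ^ c - y ^ c) / y ^ a := by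
    have step : ∀ k ∈ Finset.range c,
        ((c.choose k : ℕ) : RatFunc F) * S1 F (a - k)
          = ((c.choose k : ℕ) : RatFunc F) * x ^ k / x ^ a
            + ((c.choose k : ℕ) : RatFunc F) * y ^ k / y ^ a := by
      intro k hk
      have hk' : k ≤ a := le_trans (le_of_lt (Finset.mem_range.mp hk)) hca
      rw [hS1 (a - k), pow_sub₀ x hx hk', pow_sub₀ y hy hk']
      field_simp
    rw [Finset.sum_congr rfl step, Finset.sum_add_distrib, ← Finset.sum_div, ← Finset.sum_div,
      hbin x, hbin y, hxy, show y + 1 = x by rw [hydef]; ring]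
  -- rewrite LHS using aux17
  have hfr : y ^ b * y ^ c = x ^ b * x ^ c + 1 := by
    rw [← pow_add, ← pow_add, ← hab, hadef]
    exact hfrob m
  have hLHS : Delta F a b
      = (y ^ c - x ^ c) / (x ^ b * x ^ c) + (x ^ c - y ^ c) / (y ^ b * y ^ c) := by
    rw [Delta, hS1 a, hS1 b, hS1 (a + b),
      show a + b = b + (b + c) by omega, hab, pow_add, pow_add, pow_add x b (b + c),
      pow_add y b (b + c), pow_add x b c, pow_add y b c]
    exact aux17 h2 (x ^ b) (x ^ c) (y ^ b) (y ^ c) (pow_ne_zero _ hx) (pow_ne_zero _ hx)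
      (pow_ne_zero _ hy) (pow_ne_zero _ hy) hfr
  rw [hLHS, hRHS, hab, pow_add, pow_add]
end

section
/- Let q = 2, let a ≥ 2 be an integer, and let m be the smallest nonnegative integer with a ≤ 2^m. Then Δ(a, a−1) = Σ_{k=0}^{2^m − a} C(2^m − a, k) · S_1(a − k) holds in F_2(t), where the binomial coefficients are understood via the canonical map ℤ → F_2(t). Moreover, the number of integers k with 0 ≤ k ≤ 2^m − a and C(2^m − a, k) odd equals 2^z, where z is the number of indices l ∈ {0, …, m−1} such that the l-th digit of the base-2 expansion of a−1 (padded with zeros to m digits) equals 0. -/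
open Finset

private lemma odd_choose_rec (n k : ℕ) :
    Odd (n.choose k) ↔ (Odd ((n % 2).choose (k % 2)) ∧ Odd ((n / 2).choose (k / 2))) := by
  have h : n.choose k % 2 = ((n % 2).choose (k % 2) * ((n / 2).choose (k / 2))) % 2 :=
    Choose.choose_modEq_choose_mod_mul_choose_div_nat (p := 2)
  rw [Nat.odd_iff, h, ← Nat.odd_iff, Nat.odd_mul]

private lemma count_even (P : ℕ → Prop) [DecidablePred P] (n : ℕ) :
    ((range (2*n+1)).filter fun k => k % 2 = 0 ∧ P (k/2)).card =
      ((range (n+1)).filter P).card := by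
  rw [card_filter, card_filter]
  induction n with
  | zero =>
    norm_num [sum_range_one]
    by_cases h : P 0 <;> simp [filter_singleton, h]
  | succ n ih =>
    have h1 : 2*(n+1)+1 = (2*n+1)+1+1 := by ring
    rw [h1, sum_range_succ, sum_range_succ, sum_range_succ (n := n+1), ih]
    have e1 : ¬((2*n+1) % 2 = 0) := by omega
    have e2 : (2*n+1+1) % 2 = 0 := by omega
    have e3 : (2*n+1+1)/2 = n+1 := by omega
    simp [e1, e2, e3]

private lemma count_double (P : ℕ → Prop) [DecidablePred P] (n : ℕ) :
    ((range (2*(n+1))).filter fun k => P (k/2)).card =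
      2 * ((range (n+1)).filter P).card := by
  rw [card_filter, card_filter]
  induction n with
  | zero =>
    rw [show (2*1) = 1+1 from rfl, sum_range_succ, sum_range_succ, sum_range_succ]
    by_cases h : P 0 <;> simp [h]
  | succ n ih =>
    have h1 : 2*(n+1+1) = (2*(n+1))+1+1 := by ring
    rw [h1, sum_range_succ, sum_range_succ, sum_range_succ (n := n+1), ih]
    have e2 : (2*(n+1))/2 = n+1 := by omega
    have e3 : (2*(n+1)+1)/2 = n+1 := by omega
    rw [e2, e3]
    ring

private def cnt (N : ℕ) : ℕ := ((range (N+1)).filter fun k => Odd (N.choose k)).card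

private lemma cnt_two_mul (n : ℕ) : cnt (2*n) = cnt n := by
  unfold cnt
  rw [show ((range (2*n+1)).filter fun k => Odd ((2*n).choose k)) =
      ((range (2*n+1)).filter fun k => k % 2 = 0 ∧ Odd (n.choose (k/2))) from
    filter_congr fun k _ => by
      rw [odd_choose_rec]
      have h1 : 2*n % 2 = 0 := by omega
      have h2 : 2*n/2 = n := by omega
      rw [h1, h2]
      rcases Nat.mod_two_eq_zero_or_one k with h | h <;>
        simp [h, Nat.odd_iff]]
  exact count_even (fun k => Odd (n.choose k)) n

private lemma cnt_two_mul_add_one (n : ℕ) : cnt (2*n+1) = 2 * cnt n := by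
  unfold cnt
  rw [show (2*n+1+1) = 2*(n+1) from by ring,
    show ((range (2*(n+1))).filter fun k => Odd ((2*n+1).choose k)) =
      ((range (2*(n+1))).filter fun k => Odd (n.choose (k/2))) from
    filter_congr fun k _ => by
      rw [odd_choose_rec]
      have h1 : (2*n+1) % 2 = 1 := by omega
      have h2 : (2*n+1)/2 = n := by omega
      rw [h1, h2]
      rcases Nat.mod_two_eq_zero_or_one k with h | h <;>
        simp [h, Nat.odd_iff]]
  exact count_double (fun k => Odd (n.choose k)) n

private lemma filter_card_succ (b m : ℕ) :
    ((range (m+1)).filter fun l => b / 2^l % 2 = 0).card =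
    ((range m).filter fun l => (b/2) / 2^l % 2 = 0).card + (if b % 2 = 0 then 1 else 0) := by
  rw [card_filter, card_filter, sum_range_succ']
  congr 1
  · apply sum_congr rfl; intro l _
    have h : b / 2 ^ (l+1) = (b/2)/2^l := by
      rw [pow_succ', Nat.div_div_eq_div_mul]
    rw [h]
  · simp

private lemma cnt_pow_sub (m : ℕ) : ∀ b < 2^m, cnt (2^m - 1 - b) =
    2 ^ ((range m).filter fun l => b / 2^l % 2 = 0).card := by
  induction m with
  | zero =>
    intro b hb
    interval_cases b
    simp [cnt]
    decide
  | succ m ih =>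
    intro b hb
    have h2 : (2:ℕ)^(m+1) = 2*2^m := by rw [pow_succ]; ring
    have hb2 : b / 2 < 2^m := by omega
    rw [filter_card_succ]
    rcases Nat.mod_two_eq_zero_or_one b with hr | hr
    · have hN : 2^(m+1) - 1 - b = 2*(2^m - 1 - b/2) + 1 := by omega
      rw [hN, cnt_two_mul_add_one, ih _ hb2, hr]
      simp [pow_succ, mul_comm]
    · have hN : 2^(m+1) - 1 - b = 2*(2^m - 1 - b/2) := by omega
      rw [hN, cnt_two_mul, ih _ hb2, hr]
      simp

theorem stmt18 (F : Type*) [Field F] [Fintype F] (hF : Fintype.card F = 2)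
    (a : ℕ) (ha : 2 ≤ a)
    (m : ℕ) (hm : a ≤ 2 ^ m) (hmmin : ∀ k, a ≤ 2 ^ k → m ≤ k) :
    (Delta F a (a - 1) =
      ∑ k ∈ Finset.range (2 ^ m - a + 1),
        ((2 ^ m - a).choose k : RatFunc F) * S1 F (a - k)) ∧
    (((Finset.range (2 ^ m - a + 1)).filter fun k => Odd ((2 ^ m - a).choose k)).card =
      2 ^ ((Finset.range m).filter fun l => (a - 1) / 2 ^ l % 2 = 0).card) := by
  constructor
  · classical
      haveI : CharP F 2 := charP_of_card_eq_prime hF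
      haveI : CharP (RatFunc F) 2 := charP_of_injective_algebraMap' F (A := RatFunc F) 2
      set u : RatFunc F := RatFunc.X with hu_def
      set v : RatFunc F := RatFunc.X + 1 with hv_def
      have hu : u ≠ 0 := RatFunc.X_ne_zero
      have hv : v ≠ 0 := by
        rw [hv_def, ← RatFunc.algebraMap_X, ← map_one (algebraMap (Polynomial F) (RatFunc F)),
          ← map_add]
        exact RatFunc.algebraMap_ne_zero (by exact_mod_cast Polynomial.X_add_C_ne_zero 1)
      set x : RatFunc F := u⁻¹ with hx_def
      set y : RatFunc F := v⁻¹ with hy_def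
      have hx : x ≠ 0 := inv_ne_zero hu
      have hy : y ≠ 0 := inv_ne_zero hv
      have h11 : (1 : RatFunc F) + 1 = 0 := CharTwo.add_self_eq_zero 1
      have huv : u + v = 1 := by rw [hv_def, ← add_assoc, ← hu_def, CharTwo.add_self_eq_zero]; ring
      have hS1 : ∀ k, S1 F k = x ^ k + y ^ k := by
        intro k
        have huniv : (Finset.univ : Finset F) = ({0, 1} : Finset F) := by
          symm
          apply Finset.eq_univ_of_card
          rw [hF, Finset.card_insert_of_notMem (by simp), Finset.card_singleton]
        simp only [S1]
        rw [huniv, Finset.sum_pair (zero_ne_one)]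
        rw [map_zero, map_one, sub_zero, CharTwo.sub_eq_add]
        rw [one_div, one_div, ← inv_pow, ← inv_pow, ← hu_def, ← hv_def, ← hx_def, ← hy_def]
      have hxy : x + y = x * y := by
        rw [hx_def, hy_def, inv_add_inv hu hv, huv, ← mul_inv]
        simp [div_eq_mul_inv]
      have hL : Delta F a (a-1) = (x*y)^a := by
        obtain ⟨c, hc⟩ : ∃ c, a = c + 1 := ⟨a-1, by omega⟩
        rw [Delta, hS1, hS1, hS1, hc]
        have h1 : c + 1 - 1 = c := by omega
        rw [h1]
        have h2 : (x^(c+1)+y^(c+1)) * (x^c+y^c) - (x^(c+1+c)+y^(c+1+c)) = (x*y)^c * (x+y) := by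
          ring
        rw [h2, hxy, ← pow_succ]
      have hm1 : 1 ≤ m := by
        by_contra h
        push_neg at h
        interval_cases m
        simp at hm; omega
      have hpow : (2:ℕ)^m = 2*2^(m-1) := by
        rw [← pow_succ']
        congr 1
        omega
      have hlt : 2^m < 2*a := by
        by_contra h
        push_neg at h
        have := hmmin (m-1) (by omega)
        omega
      set N := 2^m - a with hNdef
      have hNa : N + a = 2^m := by omega
      have hNlt : N < a := by omega
      have hRHS : ∑ k ∈ range (N+1), ((N.choose k : RatFunc F)) * S1 F (a-k) = (x*y)^a := by
        have step1 : ∀ k ∈ range (N+1),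
            ((N.choose k : RatFunc F)) * S1 F (a-k)
              = x^(a-N) * ((N.choose k : RatFunc F) * x^(N-k))
                + y^(a-N) * ((N.choose k : RatFunc F) * y^(N-k)) := by
          intro k hk
          rw [mem_range] at hk
          have h1 : a - k = (a-N) + (N-k) := by omega
          rw [hS1, h1, pow_add, pow_add]
          ring
        rw [Finset.sum_congr rfl step1, Finset.sum_add_distrib, ← Finset.mul_sum, ← Finset.mul_sum]
        have hxsum : ∑ k ∈ range (N+1), (N.choose k : RatFunc F) * x^(N-k) = (1+x)^N := by
          rw [add_pow]
          exact Finset.sum_congr rfl fun k _ => by rw [one_pow]; ring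
        have hysum : ∑ k ∈ range (N+1), (N.choose k : RatFunc F) * y^(N-k) = (1+y)^N := by
          rw [add_pow]
          exact Finset.sum_congr rfl fun k _ => by rw [one_pow]; ring
        rw [hxsum, hysum]
        have h1x : (1:RatFunc F) + x = v * x := by
          rw [hx_def]
          field_simp
          rw [hv_def, hu_def]
        have h1y : (1:RatFunc F) + y = u * y := by
          rw [hy_def]
          field_simp
          rw [hv_def, hu_def, add_assoc, h11, add_zero]
        rw [h1x, h1y, mul_pow, mul_pow]
        have hxa : x^(a-N) * x^N = x^a := by rw [← pow_add]; congr 1; omega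
        have hya : y^(a-N) * y^N = y^a := by rw [← pow_add]; congr 1; omega
        have hfr : u^(2^m) + v^(2^m) = 1 := by
          rw [← add_pow_char_pow (R := RatFunc F) (p := 2), huv, one_pow]
        have hkey : (u^a * v^a) * (x^a * v^N + y^a * u^N) = 1 := by
          have e1 : u^a * x^a = 1 := by rw [hx_def, ← mul_pow, mul_inv_cancel₀ hu, one_pow]
          have e2 : v^a * y^a = 1 := by rw [hy_def, ← mul_pow, mul_inv_cancel₀ hv, one_pow]
          calc (u^a * v^a) * (x^a * v^N + y^a * u^N)
              = (u^a * x^a) * (v^a * v^N) + (v^a * y^a) * (u^a * u^N) := by ring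
            _ = v^(a+N) + u^(a+N) := by rw [e1, e2, one_mul, one_mul, ← pow_add, ← pow_add]
            _ = 1 := by rw [show a + N = 2^m by omega, add_comm, hfr]
        have hmain := eq_inv_of_mul_eq_one_right hkey
        have hxyuv : (x*y)^a = (u^a*v^a)⁻¹ := by
          rw [hx_def, hy_def, ← mul_inv, inv_pow, mul_pow]
        calc x^(a-N) * (v^N * x^N) + y^(a-N) * (u^N * y^N)
            = (x^(a-N) * x^N) * v^N + (y^(a-N) * y^N) * u^N := by ring
          _ = x^a * v^N + y^a * u^N := by rw [hxa, hya]
          _ = (u^a*v^a)⁻¹ := hmain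
          _ = (x*y)^a := hxyuv.symm
      rw [hL]
      exact hRHS.symm
  · have hb : a - 1 < 2^m := by omega
    have hN : 2^m - a = 2^m - 1 - (a-1) := by omega
    rw [hN]
    exact cnt_pow_sub m (a-1) hb
end
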